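/- arXiv:1708.08034 — 3 statements merged into one kernel-verified Lean document; each statement's English description precedes it below -/
import Mathlib

section
/- Let M be an associative ℂ-algebra, E : M → ℂ a linear functional, and let W_n : M^n → Γ(M) be the multilinear maps determined by W() = 1 and the recursion W(a₁,…,a_{n+1}) = W(a₁,…,a_n)·X(a_{n+1}) − E(a_{n+1})·W(a₁,…,a_n) − W(a₁,…,a_{n−1}, a_n a_{n+1}) − E(a_n a_{n+1})·W(a₁,…,a_{n−1}), where the last two terms are omitted when n = 0. Then for all a₁,…,a_n ∈ M: W(a₁,…,a_n) = Σ_{(π,S)} (−1)^{n−|S|} (Π_{{i} ∈ π∖S} E(a_i)) · X(a_{V₁})X(a_{V₂})⋯X(a_{V_m}), where the sum is over all (π,S) ∈ IP(n) such that π is an interval partition and every closed block of π is a singleton, |S| is the number of open blocks, and V₁,…,V_m are the open blocks of π listed in left-to-right order. -/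
/-!
Both sides satisfy the recursion defining `W`. Sort the admissible incomplete partitions of
`{1, …, n+1}` (interval partitions whose closed blocks are singletons) by the block of `n+1`:
* `{n+1}` closed: deleting it gives each admissible partition of `{1, …, n}` once, with the extra
  factor `-E(a_{n+1})`;
* `{n+1}` open: deleting it gives each admissible partition of `{1, …, n}` once, with the extra
  letter `X(a_{n+1})` at the end;
* `n+1` in an open block with at least two points, which then also contains `n`: pulling back
  along the map `{1, …, n+1} → {1, …, n}` merging `n` and `n+1` identifies these with the
  admissible partitions for `(a_1, …, a_{n-1}, a_n a_{n+1})` in which `n` is not a closed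
  singleton, up to sign; by the first case the excluded ones sum to
  `-E(a_n a_{n+1}) W(a_1, …, a_{n-1})`.
-/

open Finset
open scoped Classical

noncomputable section

/-- A partition of `Fin n`, given by its (finite) set of blocks. -/
def IsPartition {n : ℕ} (P : Finset (Finset (Fin n))) : Prop :=
  (∀ B ∈ P, B.Nonempty) ∧ ∀ i : Fin n, ∃! B : Finset (Fin n), B ∈ P ∧ i ∈ B

/-- An interval partition: each block is a set of consecutive integers. -/
def IsIntervalPartition {n : ℕ} (P : Finset (Finset (Fin n))) : Prop :=
  ∀ B ∈ P, ∀ i ∈ B, ∀ j ∈ B, ∀ k : Fin n, i ≤ k → k ≤ j → k ∈ B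

/-- For `U = {i₁ < … < iₘ}`, the ordered product `a_{i₁} ⋯ a_{iₘ}`. -/
def aProd {M : Type*} [Ring M] {n : ℕ} (a : Fin n → M) (B : Finset (Fin n)) : M :=
  ((B.sort (· ≤ ·)).map a).prod

/-- The block of `P` containing `i`. -/
def blockOf {n : ℕ} (P : Finset (Finset (Fin n))) (i : Fin n) : Finset (Fin n) :=
  Finset.univ.filter fun x => ∃ B ∈ P, i ∈ B ∧ x ∈ B

/-- The largest elements of the blocks of `T`, in increasing order; for an interval
partition this lists the blocks of `T` in left-to-right order. -/
def maxElts {n : ℕ} (T : Finset (Finset (Fin n))) : List (Fin n) :=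
  (Finset.univ.filter fun i : Fin n => ∃ B ∈ T, i ∈ B ∧ ∀ x ∈ B, x ≤ i).sort (· ≤ ·)

theorem Finset.sort_eq_sort_erase_append {α : Type*} [LinearOrder α] {s : Finset α} {m : α}
    (hm : m ∈ s) (hmax : ∀ x ∈ s, x ≤ m) :
    s.sort (· ≤ ·) = (s.erase m).sort (· ≤ ·) ++ [m] := by
  refine List.Perm.eq_of_pairwise (le := (· ≤ ·)) (fun _ _ _ _ h h' => le_antisymm h h')
    (Finset.pairwise_sort _ _) ?_ ?_
  · refine List.pairwise_append.mpr ⟨Finset.pairwise_sort _ _, List.pairwise_singleton _ _, ?_⟩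
    intro x hx y hy
    rw [List.mem_singleton.mp hy]
    exact hmax x (Finset.mem_erase.mp ((Finset.mem_sort _).mp hx)).2
  · rw [← Multiset.coe_eq_coe, Finset.sort_eq, ← Multiset.coe_add, Finset.sort_eq,
      Finset.erase_val, add_comm]
    show s.val = {m} + s.val.erase m
    rw [Multiset.singleton_add, Multiset.cons_erase hm]

/-- Here `g b` is the largest point of the fibre of `f` over `b`. -/
theorem Monotone.isGreatest_preimage_iff {α β : Type*} [LinearOrder α] [PartialOrder β]
    {f : α → β} (hf : Monotone f) {g : β → α} (hfg : ∀ b, f (g b) = b) (hgf : ∀ a, a ≤ g (f a))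
    {s : Set β} {a : α} : IsGreatest (f ⁻¹' s) a ↔ ∃ b, IsGreatest s b ∧ g b = a := by
  constructor
  · rintro ⟨ha, hub⟩
    have hga : g (f a) ∈ f ⁻¹' s := by simpa [Set.mem_preimage, hfg] using ha
    refine ⟨f a, ⟨ha, fun b hb => ?_⟩, le_antisymm (hub hga) (hgf a)⟩
    rw [← hfg b]
    exact hf (hub (by simpa [Set.mem_preimage, hfg] using hb))
  · rintro ⟨b, ⟨hb, hub⟩, rfl⟩
    refine ⟨by simpa [Set.mem_preimage, hfg] using hb, fun x hx => ?_⟩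
    by_contra! hlt
    have hfx : f x = b := le_antisymm (hub hx) (hfg b ▸ hf hlt.le)
    exact (hgf x).not_gt (hfx ▸ hlt)

lemma existsUnique_mem_image_iff {α β : Type*} [DecidableEq β] {F : α → β}
    (hF : Function.Injective F) {s : Finset α} {p : β → Prop} :
    (∃! C, C ∈ s.image F ∧ p C) ↔ ∃! B, B ∈ s ∧ p (F B) := by
  constructor
  · rintro ⟨C, ⟨hC, hpC⟩, hu⟩
    obtain ⟨B, hB, rfl⟩ := Finset.mem_image.mp hC
    exact ⟨B, ⟨hB, hpC⟩, fun B' hB' => hF (hu _ ⟨Finset.mem_image_of_mem F hB'.1, hB'.2⟩)⟩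
  · rintro ⟨B, ⟨hB, hpB⟩, hu⟩
    refine ⟨F B, ⟨Finset.mem_image_of_mem F hB, hpB⟩, fun C ⟨hC, hpC⟩ => ?_⟩
    obtain ⟨B', hB', rfl⟩ := Finset.mem_image.mp hC
    rw [hu B' ⟨hB', hpC⟩]

section Partitions

variable {n : ℕ}

lemma IsPartition.eq_of_mem {P : Finset (Finset (Fin n))} (h : IsPartition P)
    {B C : Finset (Fin n)} (hB : B ∈ P) (hC : C ∈ P) {i : Fin n} (hiB : i ∈ B) (hiC : i ∈ C) :
    B = C :=
  (h.2 i).unique ⟨hB, hiB⟩ ⟨hC, hiC⟩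

lemma IsPartition.notMem_of_ne_singleton {P : Finset (Finset (Fin n))} (h : IsPartition P)
    {i : Fin n} (hi : {i} ∈ P) {B : Finset (Fin n)} (hB : B ∈ P) (hne : B ≠ {i}) : i ∉ B :=
  fun hiB => hne (h.eq_of_mem hB hi hiB (Finset.mem_singleton_self i))

lemma IsPartition.card_le {P S : Finset (Finset (Fin n))} (h : IsPartition P) (hS : S ⊆ P) :
    S.card ≤ n := by
  have hdisj : (S : Set (Finset (Fin n))).PairwiseDisjoint id := fun B hB C hC hne =>
    Finset.disjoint_left.mpr fun _ hiB hiC => hne (h.eq_of_mem (hS hB) (hS hC) hiB hiC)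
  calc S.card ≤ ∑ B ∈ S, B.card := by
        simpa using Finset.card_nsmul_le_sum S Finset.card 1 fun B hB =>
          Finset.card_pos.mpr (h.1 B (hS hB))
    _ = (S.biUnion id).card := (Finset.card_biUnion hdisj).symm
    _ ≤ n := (Finset.card_le_univ _).trans_eq (Fintype.card_fin n)

lemma mem_blockOf {S : Finset (Finset (Fin n))} {i x : Fin n} :
    x ∈ blockOf S i ↔ ∃ B ∈ S, i ∈ B ∧ x ∈ B := by
  simp [blockOf]

lemma IsIntervalPartition.castSucc_last_mem {n : ℕ} {π : Finset (Finset (Fin (n + 2)))}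
    (hI : IsIntervalPartition π) {B : Finset (Fin (n + 2))} (hB : B ∈ π)
    (hl : Fin.last (n + 1) ∈ B) (hne : B ≠ {Fin.last (n + 1)}) : (Fin.last n).castSucc ∈ B := by
  obtain ⟨x, hx, hxl⟩ : ∃ x ∈ B, x ≠ Fin.last (n + 1) := by
    by_contra! h
    exact hne (Finset.eq_singleton_iff_unique_mem.mpr ⟨hl, h⟩)
  refine hI B hB x hx _ hl _ (Fin.le_castSucc_iff.mpr ?_) (Fin.le_last _)
  rw [Fin.succ_last]
  exact Fin.lt_last_iff_ne_last.mpr hxl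

end Partitions

section Pullback

variable {m n : ℕ}

def pullbackBlock (g : Fin m → Fin n) (B : Finset (Fin n)) : Finset (Fin m) :=
  univ.filter fun j => g j ∈ B

@[simp] lemma mem_pullbackBlock {g : Fin m → Fin n} {B : Finset (Fin n)} {j : Fin m} :
    j ∈ pullbackBlock g B ↔ g j ∈ B := by
  simp [pullbackBlock]

variable {g : Fin m → Fin n}

lemma pullbackBlock_injective (hg : Function.Surjective g) :
    Function.Injective (pullbackBlock g) := fun B C h => by
  ext i
  obtain ⟨j, rfl⟩ := hg i
  simpa using congrArg (j ∈ ·) h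

lemma pullbackBlock_nonempty (hg : Function.Surjective g) {B : Finset (Fin n)} :
    (pullbackBlock g B).Nonempty ↔ B.Nonempty :=
  ⟨fun ⟨j, hj⟩ => ⟨g j, mem_pullbackBlock.mp hj⟩,
    fun ⟨i, hi⟩ => (hg i).elim fun j hj => ⟨j, mem_pullbackBlock.mpr (hj ▸ hi)⟩⟩

lemma isPartition_image_pullbackBlock_iff (hg : Function.Surjective g)
    {π : Finset (Finset (Fin n))} :
    IsPartition (π.image (pullbackBlock g)) ↔ IsPartition π := by
  simp only [IsPartition, Finset.forall_mem_image, pullbackBlock_nonempty hg,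
    existsUnique_mem_image_iff (pullbackBlock_injective hg), mem_pullbackBlock]
  exact and_congr Iff.rfl ((hg.forall (p := fun i => ∃! B, B ∈ π ∧ i ∈ B)).symm)

lemma isIntervalPartition_image_pullbackBlock_iff (hg : Function.Surjective g)
    (hmono : Monotone g) {π : Finset (Finset (Fin n))} :
    IsIntervalPartition (π.image (pullbackBlock g)) ↔ IsIntervalPartition π := by
  simp only [IsIntervalPartition, Finset.forall_mem_image, mem_pullbackBlock]
  refine forall₂_congr fun B _ => ⟨fun h i hi j hj k hik hkj => ?_,
    fun h i hi j hj k hik hkj => h _ hi _ hj _ (hmono hik) (hmono hkj)⟩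
  rcases hik.eq_or_lt with rfl | hik
  · exact hi
  rcases hkj.eq_or_lt with rfl | hkj
  · exact hj
  obtain ⟨i', rfl⟩ := hg i
  obtain ⟨j', rfl⟩ := hg j
  obtain ⟨k', rfl⟩ := hg k
  exact h i' hi j' hj k' (hmono.reflect_lt hik).le (hmono.reflect_lt hkj).le

end Pullback

namespace WickExpansion

section Blocks

variable {n : ℕ}

def liftBlock (B : Finset (Fin n)) : Finset (Fin (n + 1)) := B.map Fin.castSuccEmb

def restrictBlock (B : Finset (Fin (n + 1))) : Finset (Fin n) := pullbackBlock Fin.castSucc B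

/-- Pullback along the surjection `Fin (n + 2) → Fin (n + 1)` merging the last two points:
the block containing `n` receives `n + 1`. -/
def stretchBlock (B : Finset (Fin (n + 1))) : Finset (Fin (n + 2)) :=
  pullbackBlock (Fin.last n).predAbove B

@[simp] lemma mem_restrictBlock {B : Finset (Fin (n + 1))} {i : Fin n} :
    i ∈ restrictBlock B ↔ i.castSucc ∈ B :=
  mem_pullbackBlock

lemma mem_liftBlock {B : Finset (Fin n)} {j : Fin (n + 1)} :
    j ∈ liftBlock B ↔ ∃ i ∈ B, i.castSucc = j := by
  simp [liftBlock]

@[simp] lemma castSucc_mem_liftBlock {B : Finset (Fin n)} {i : Fin n} :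
    i.castSucc ∈ liftBlock B ↔ i ∈ B := by
  simp [mem_liftBlock, Fin.castSucc_inj]

@[simp] lemma last_notMem_liftBlock (B : Finset (Fin n)) : Fin.last n ∉ liftBlock B := by
  simp [mem_liftBlock, (Fin.castSucc_lt_last _).ne]

@[simp] lemma card_liftBlock (B : Finset (Fin n)) : (liftBlock B).card = B.card :=
  Finset.card_map _

lemma liftBlock_injective : Function.Injective (liftBlock (n := n)) :=
  Finset.map_injective _

@[simp] lemma liftBlock_nonempty {B : Finset (Fin n)} : (liftBlock B).Nonempty ↔ B.Nonempty :=
  Finset.map_nonempty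

lemma liftBlock_ne_singleton_last (B : Finset (Fin n)) : liftBlock B ≠ {Fin.last n} :=
  fun h => last_notMem_liftBlock B (h ▸ Finset.mem_singleton_self _)

@[simp] lemma restrictBlock_liftBlock (B : Finset (Fin n)) :
    restrictBlock (liftBlock B) = B := by
  ext i; simp

lemma liftBlock_restrictBlock (B : Finset (Fin (n + 1))) :
    liftBlock (restrictBlock B) = B.erase (Fin.last n) := by
  ext j
  rcases Fin.eq_castSucc_or_eq_last j with ⟨i, rfl⟩ | rfl
  · simp [(Fin.castSucc_lt_last i).ne]
  · simp

lemma liftBlock_restrictBlock_of_notMem {B : Finset (Fin (n + 1))} (h : Fin.last n ∉ B) :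
    liftBlock (restrictBlock B) = B := by
  rw [liftBlock_restrictBlock, Finset.erase_eq_of_notMem h]

@[simp] lemma last_mem_stretchBlock {B : Finset (Fin (n + 1))} :
    Fin.last (n + 1) ∈ stretchBlock B ↔ Fin.last n ∈ B := by
  simp [stretchBlock]

@[simp] lemma castSucc_mem_stretchBlock {B : Finset (Fin (n + 1))} {i : Fin (n + 1)} :
    i.castSucc ∈ stretchBlock B ↔ i ∈ B := by
  simp [stretchBlock]

lemma stretchBlock_of_mem {B : Finset (Fin (n + 1))} (h : Fin.last n ∈ B) :
    stretchBlock B = insert (Fin.last (n + 1)) (liftBlock B) := by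
  ext j
  rcases Fin.eq_castSucc_or_eq_last j with ⟨i, rfl⟩ | rfl
  · simp [(Fin.castSucc_lt_last i).ne]
  · simp [h]

lemma stretchBlock_of_notMem {B : Finset (Fin (n + 1))} (h : Fin.last n ∉ B) :
    stretchBlock B = liftBlock B := by
  ext j
  rcases Fin.eq_castSucc_or_eq_last j with ⟨i, rfl⟩ | rfl
  · simp
  · simp [h]

lemma stretchBlock_injective : Function.Injective (stretchBlock (n := n)) :=
  pullbackBlock_injective (Fin.predAbove_surjective _)

lemma stretchBlock_restrictBlock {B : Finset (Fin (n + 2))}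
    (h : Fin.last (n + 1) ∈ B ↔ (Fin.last n).castSucc ∈ B) :
    stretchBlock (restrictBlock B) = B := by
  by_cases hl : Fin.last (n + 1) ∈ B
  · rw [stretchBlock_of_mem (mem_restrictBlock.mpr (h.mp hl)), liftBlock_restrictBlock,
      Finset.insert_erase hl]
  · rw [stretchBlock_of_notMem (fun h' => hl (h.mpr (mem_restrictBlock.mp h'))),
      liftBlock_restrictBlock_of_notMem hl]

lemma card_stretchBlock_of_notMem {B : Finset (Fin (n + 1))} (h : Fin.last n ∉ B) :
    (stretchBlock B).card = B.card := by
  rw [stretchBlock_of_notMem h, card_liftBlock]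

lemma one_lt_card_stretchBlock {B : Finset (Fin (n + 1))} (h : Fin.last n ∈ B) :
    1 < (stretchBlock B).card := by
  rw [stretchBlock_of_mem h, Finset.card_insert_of_notMem (last_notMem_liftBlock B),
    card_liftBlock]
  exact Nat.lt_add_of_pos_left (Finset.card_pos.mpr ⟨_, h⟩)

end Blocks

section InsertLast

variable {n : ℕ}

def insertLast (π : Finset (Finset (Fin n))) : Finset (Finset (Fin (n + 1))) :=
  insert {Fin.last n} (π.image liftBlock)

lemma singleton_last_notMem_image_liftBlock (π : Finset (Finset (Fin n))) :
    {Fin.last n} ∉ π.image liftBlock := fun h => by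
  obtain ⟨B, -, hB⟩ := Finset.mem_image.mp h
  exact liftBlock_ne_singleton_last B hB

lemma erase_insertLast (π : Finset (Finset (Fin n))) :
    (insertLast π).erase {Fin.last n} = π.image liftBlock :=
  Finset.erase_insert (singleton_last_notMem_image_liftBlock π)

lemma insertLast_injective : Function.Injective (insertLast (n := n)) := fun π σ h =>
  Finset.image_injective liftBlock_injective <| by
    rw [← erase_insertLast, h, erase_insertLast]

lemma isPartition_insertLast_iff {π : Finset (Finset (Fin n))} :
    IsPartition (insertLast π) ↔ IsPartition π := by
  have hcast (i : Fin n) (C : Finset (Fin (n + 1))) :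
      C ∈ insertLast π ∧ i.castSucc ∈ C ↔ C ∈ π.image liftBlock ∧ i.castSucc ∈ C := by
    rw [insertLast, Finset.mem_insert]
    constructor
    · rintro ⟨rfl | hC, hi⟩
      · exact absurd (Finset.mem_singleton.mp hi) (Fin.castSucc_lt_last i).ne
      · exact ⟨hC, hi⟩
    · exact fun ⟨hC, hi⟩ => ⟨Or.inr hC, hi⟩
  have hlast : ∃! C, C ∈ insertLast π ∧ Fin.last n ∈ C := by
    refine ⟨{Fin.last n}, ⟨Finset.mem_insert_self _ _, Finset.mem_singleton_self _⟩, ?_⟩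
    rintro C ⟨hC, hl⟩
    rcases Finset.mem_insert.mp hC with rfl | hC
    · rfl
    · obtain ⟨B, -, rfl⟩ := Finset.mem_image.mp hC
      exact absurd hl (last_notMem_liftBlock B)
  unfold IsPartition
  rw [Fin.forall_fin_succ', and_iff_left hlast]
  simp only [existsUnique_congr (hcast _), existsUnique_mem_image_iff liftBlock_injective,
    castSucc_mem_liftBlock]
  refine and_congr ?_ Iff.rfl
  simp [insertLast]

lemma isIntervalPartition_insertLast_iff {π : Finset (Finset (Fin n))} :
    IsIntervalPartition (insertLast π) ↔ IsIntervalPartition π := by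
  have hsingleton : ∀ i ∈ ({Fin.last n} : Finset (Fin (n + 1))),
      ∀ j ∈ ({Fin.last n} : Finset (Fin (n + 1))), ∀ k, i ≤ k → k ≤ j →
        k ∈ ({Fin.last n} : Finset (Fin (n + 1))) := by
    simp only [Finset.mem_singleton]
    rintro i rfl j rfl k hik -
    exact le_antisymm (Fin.le_last k) hik
  simp only [IsIntervalPartition, insertLast, Finset.forall_mem_insert, Finset.forall_mem_image,
    and_iff_right hsingleton]
  refine forall₂_congr fun B _ => ⟨fun h i hi j hj k hik hkj => ?_, fun h i hi j hj k hik hkj => ?_⟩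
  · exact castSucc_mem_liftBlock.mp (h _ (castSucc_mem_liftBlock.mpr hi) _
      (castSucc_mem_liftBlock.mpr hj) _ (Fin.castSucc_le_castSucc_iff.mpr hik)
      (Fin.castSucc_le_castSucc_iff.mpr hkj))
  · obtain ⟨i, hiB, rfl⟩ := mem_liftBlock.mp hi
    obtain ⟨j, hjB, rfl⟩ := mem_liftBlock.mp hj
    obtain ⟨k, rfl⟩ := Fin.exists_castSucc_eq.mpr (hkj.trans_lt (Fin.castSucc_lt_last j)).ne
    exact castSucc_mem_liftBlock.mpr (h i hiB j hjB k (Fin.castSucc_le_castSucc_iff.mp hik)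
      (Fin.castSucc_le_castSucc_iff.mp hkj))

end InsertLast

section Configurations

variable {n : ℕ}

/-- An incomplete partition `(π, S)`: `S` is the set of open blocks. -/
abbrev Config (n : ℕ) := Finset (Finset (Fin n)) × Finset (Finset (Fin n))

structure IsAdmissible (p : Config n) : Prop where
  isPartition : IsPartition p.1
  isIntervalPartition : IsIntervalPartition p.1
  subset : p.2 ⊆ p.1
  card_eq_one : ∀ U ∈ p.1, U ∉ p.2 → U.card = 1

lemma isAdmissible_iff {p : Config n} :
    IsAdmissible p ↔ IsPartition p.1 ∧ IsIntervalPartition p.1 ∧ p.2 ⊆ p.1 ∧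
      ∀ U ∈ p.1, U ∉ p.2 → U.card = 1 :=
  ⟨fun h => ⟨h.1, h.2, h.3, h.4⟩, fun ⟨h1, h2, h3, h4⟩ => ⟨h1, h2, h3, h4⟩⟩

lemma IsAdmissible.card_le {p : Config n} (hp : IsAdmissible p) : p.2.card ≤ n :=
  hp.isPartition.card_le hp.subset

def closeLast (p : Config n) : Config (n + 1) := (insertLast p.1, p.2.image liftBlock)

def openLast (p : Config n) : Config (n + 1) := (insertLast p.1, insertLast p.2)

def stretchLast (p : Config (n + 1)) : Config (n + 2) :=
  (p.1.image stretchBlock, p.2.image stretchBlock)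

lemma closeLast_injective : Function.Injective (closeLast (n := n)) := fun _ _ h =>
  Prod.ext (insertLast_injective (congrArg Prod.fst h))
    (Finset.image_injective liftBlock_injective (congrArg Prod.snd h))

lemma openLast_injective : Function.Injective (openLast (n := n)) := fun _ _ h =>
  Prod.ext (insertLast_injective (congrArg Prod.fst h))
    (insertLast_injective (congrArg Prod.snd h))

lemma stretchLast_injective : Function.Injective (stretchLast (n := n)) := fun _ _ h =>
  Prod.ext (Finset.image_injective stretchBlock_injective (congrArg Prod.fst h))
    (Finset.image_injective stretchBlock_injective (congrArg Prod.snd h))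

lemma isAdmissible_closeLast_iff {p : Config n} :
    IsAdmissible (closeLast p) ↔ IsAdmissible p := by
  simp only [isAdmissible_iff, closeLast, isPartition_insertLast_iff,
    isIntervalPartition_insertLast_iff]
  refine and_congr Iff.rfl (and_congr Iff.rfl (and_congr ?_ ?_))
  · rw [insertLast, Finset.subset_insert_iff_of_notMem (singleton_last_notMem_image_liftBlock _),
      Finset.image_subset_image_iff liftBlock_injective]
  · simp [insertLast, liftBlock_injective.eq_iff]

lemma isAdmissible_openLast_iff {p : Config n} :
    IsAdmissible (openLast p) ↔ IsAdmissible p := by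
  simp only [isAdmissible_iff, openLast, isPartition_insertLast_iff,
    isIntervalPartition_insertLast_iff]
  refine and_congr Iff.rfl (and_congr Iff.rfl (and_congr ?_ ?_))
  · rw [insertLast, insertLast,
      Finset.insert_subset_insert_iff (singleton_last_notMem_image_liftBlock _),
      Finset.image_subset_image_iff liftBlock_injective]
  · simp [insertLast, liftBlock_injective.eq_iff, liftBlock_ne_singleton_last]

lemma isAdmissible_stretchLast_iff {p : Config (n + 1)} :
    IsAdmissible (stretchLast p) ↔ IsAdmissible p ∧ ∃ B ∈ p.2, Fin.last n ∈ B := by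
  have hsurj := Fin.predAbove_surjective (Fin.last n)
  have hpart : IsPartition (p.1.image stretchBlock) ↔ IsPartition p.1 :=
    isPartition_image_pullbackBlock_iff hsurj
  have hint : IsIntervalPartition (p.1.image stretchBlock) ↔ IsIntervalPartition p.1 :=
    isIntervalPartition_image_pullbackBlock_iff hsurj (Fin.predAbove_right_monotone _)
  have hsub : p.2.image stretchBlock ⊆ p.1.image stretchBlock ↔ p.2 ⊆ p.1 :=
    Finset.image_subset_image_iff stretchBlock_injective
  constructor
  · intro h
    have hπ := hpart.mp h.isPartition
    have hcard (U) (hU : U ∈ p.1) (hUS : U ∉ p.2) : (stretchBlock U).card = 1 :=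
      h.card_eq_one _ (Finset.mem_image_of_mem _ hU)
        (stretchBlock_injective.mem_finset_image.not.mpr hUS)
    have hlast (U) (hU : U ∈ p.1) (hUS : U ∉ p.2) : Fin.last n ∉ U := fun hl =>
      (one_lt_card_stretchBlock hl).ne' (hcard U hU hUS)
    obtain ⟨B, ⟨hB, hlB⟩, -⟩ := hπ.2 (Fin.last n)
    refine ⟨⟨hπ, hint.mp h.isIntervalPartition, hsub.mp h.subset, fun U hU hUS => ?_⟩,
      B, not_not.mp fun hBS => hlast B hB hBS hlB, hlB⟩
    rw [← card_stretchBlock_of_notMem (hlast U hU hUS)]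
    exact hcard U hU hUS
  · rintro ⟨h, B₀, hB₀, hlB₀⟩
    refine ⟨hpart.mpr h.isPartition, hint.mpr h.isIntervalPartition, hsub.mpr h.subset, ?_⟩
    simp only [stretchLast, Finset.forall_mem_image, stretchBlock_injective.mem_finset_image]
    intro U hU hUS
    have hlU : Fin.last n ∉ U := fun hl =>
      hUS (h.isPartition.eq_of_mem hU (h.subset hB₀) hl hlB₀ ▸ hB₀)
    rw [card_stretchBlock_of_notMem hlU]
    exact h.card_eq_one U hU hUS

end Configurations

section Classes

variable {n : ℕ}

def IsLastClosed (p : Config (n + 1)) : Prop := {Fin.last n} ∈ p.1 ∧ {Fin.last n} ∉ p.2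

lemma IsAdmissible.exists_open_last_mem_iff {p : Config (n + 1)} (hp : IsAdmissible p) :
    (∃ B ∈ p.2, Fin.last n ∈ B) ↔ ¬IsLastClosed p := by
  constructor
  · rintro ⟨B, hB, hlB⟩ ⟨hl₁, hl₂⟩
    exact hl₂ (hp.isPartition.eq_of_mem (hp.subset hB) hl₁ hlB (Finset.mem_singleton_self _) ▸ hB)
  · intro h
    obtain ⟨B, ⟨hB, hlB⟩, -⟩ := hp.isPartition.2 (Fin.last n)
    refine ⟨B, not_not.mp fun hBS => h ?_, hlB⟩
    obtain ⟨x, rfl⟩ := Finset.card_eq_one.mp (hp.card_eq_one B hB hBS)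
    obtain rfl := Finset.mem_singleton.mp hlB
    exact ⟨hB, hBS⟩

def restrictBlocks (T : Finset (Finset (Fin (n + 1)))) : Finset (Finset (Fin n)) :=
  (T.erase {Fin.last n}).image restrictBlock

lemma image_liftBlock_restrictBlocks {T : Finset (Finset (Fin (n + 1)))}
    (hT : ∀ B ∈ T, B ≠ {Fin.last n} → Fin.last n ∉ B) :
    (restrictBlocks T).image liftBlock = T.erase {Fin.last n} := by
  rw [restrictBlocks, Finset.image_image]
  refine (Finset.image_congr fun B hB => ?_).trans Finset.image_id
  obtain ⟨hne, hB⟩ := Finset.mem_erase.mp hB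
  exact liftBlock_restrictBlock_of_notMem (hT B hB hne)

lemma insertLast_restrictBlocks {T : Finset (Finset (Fin (n + 1)))}
    (hT : ∀ B ∈ T, B ≠ {Fin.last n} → Fin.last n ∉ B) (hl : {Fin.last n} ∈ T) :
    insertLast (restrictBlocks T) = T := by
  rw [insertLast, image_liftBlock_restrictBlocks hT, Finset.insert_erase hl]

lemma image_closeLast :
    (univ.filter (IsAdmissible (n := n))).image closeLast =
      univ.filter fun p : Config (n + 1) => IsAdmissible p ∧ IsLastClosed p := by
  ext p
  simp only [Finset.mem_image, Finset.mem_filter, Finset.mem_univ, true_and]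
  constructor
  · rintro ⟨q, hq, rfl⟩
    exact ⟨isAdmissible_closeLast_iff.mpr hq, Finset.mem_insert_self _ _,
      singleton_last_notMem_image_liftBlock _⟩
  · rintro ⟨hp, hl₁, hl₂⟩
    have hT (B) (hB : B ∈ p.1) : B ≠ {Fin.last n} → Fin.last n ∉ B :=
      hp.isPartition.notMem_of_ne_singleton hl₁ hB
    have hq : closeLast (restrictBlocks p.1, restrictBlocks p.2) = p := by
      refine Prod.ext (insertLast_restrictBlocks hT hl₁) ?_
      rw [closeLast, image_liftBlock_restrictBlocks fun B hB => hT B (hp.subset hB),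
        Finset.erase_eq_of_notMem hl₂]
    exact ⟨_, isAdmissible_closeLast_iff.mp (by rwa [hq]), hq⟩

lemma image_openLast :
    (univ.filter (IsAdmissible (n := n))).image openLast =
      univ.filter fun p : Config (n + 1) => IsAdmissible p ∧ {Fin.last n} ∈ p.2 := by
  ext p
  simp only [Finset.mem_image, Finset.mem_filter, Finset.mem_univ, true_and]
  constructor
  · rintro ⟨q, hq, rfl⟩
    exact ⟨isAdmissible_openLast_iff.mpr hq, Finset.mem_insert_self _ _⟩
  · rintro ⟨hp, hl⟩
    have hT (B) (hB : B ∈ p.1) : B ≠ {Fin.last n} → Fin.last n ∉ B :=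
      hp.isPartition.notMem_of_ne_singleton (hp.subset hl) hB
    have hq : openLast (restrictBlocks p.1, restrictBlocks p.2) = p :=
      Prod.ext (insertLast_restrictBlocks hT (hp.subset hl))
        (insertLast_restrictBlocks (fun B hB => hT B (hp.subset hB)) hl)
    exact ⟨_, isAdmissible_openLast_iff.mp (by rwa [hq]), hq⟩

lemma image_stretchBlock_image_restrictBlock {T : Finset (Finset (Fin (n + 2)))}
    (hT : ∀ B ∈ T, Fin.last (n + 1) ∈ B ↔ (Fin.last n).castSucc ∈ B) :
    (T.image restrictBlock).image stretchBlock = T := by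
  rw [Finset.image_image]
  exact (Finset.image_congr fun B hB => stretchBlock_restrictBlock (hT B hB)).trans
    Finset.image_id

lemma image_stretchLast :
    (univ.filter fun q : Config (n + 1) => IsAdmissible q ∧ ¬IsLastClosed q).image stretchLast =
      univ.filter fun p : Config (n + 2) => IsAdmissible p ∧ {Fin.last (n + 1)} ∉ p.1 := by
  ext p
  simp only [Finset.mem_image, Finset.mem_filter, Finset.mem_univ, true_and]
  constructor
  · rintro ⟨q, ⟨hq, hopen⟩, rfl⟩
    refine ⟨isAdmissible_stretchLast_iff.mpr ⟨hq, hq.exists_open_last_mem_iff.mpr hopen⟩,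
      fun h => ?_⟩
    obtain ⟨B, -, hB⟩ := Finset.mem_image.mp h
    have hlB : Fin.last n ∈ B := last_mem_stretchBlock.mp (hB ▸ Finset.mem_singleton_self _)
    exact (one_lt_card_stretchBlock hlB).ne' (hB ▸ Finset.card_singleton _)
  · rintro ⟨hp, hl⟩
    obtain ⟨B₀, ⟨hB₀, hlB₀⟩, -⟩ := hp.isPartition.2 (Fin.last (n + 1))
    have hcB₀ := IsIntervalPartition.castSucc_last_mem hp.isIntervalPartition hB₀ hlB₀
      fun h => hl (h ▸ hB₀)
    have hT (B) (hB : B ∈ p.1) : Fin.last (n + 1) ∈ B ↔ (Fin.last n).castSucc ∈ B :=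
      ⟨fun h => hp.isPartition.eq_of_mem hB₀ hB hlB₀ h ▸ hcB₀,
        fun h => hp.isPartition.eq_of_mem hB₀ hB hcB₀ h ▸ hlB₀⟩
    have hq : stretchLast (p.1.image restrictBlock, p.2.image restrictBlock) = p :=
      Prod.ext (image_stretchBlock_image_restrictBlock hT)
        (image_stretchBlock_image_restrictBlock fun B hB => hT B (hp.subset hB))
    obtain ⟨hq', hopen⟩ := isAdmissible_stretchLast_iff.mp (by rwa [hq])
    exact ⟨_, ⟨hq', hq'.exists_open_last_mem_iff.mp hopen⟩, hq⟩

end Classes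

section BlockMaxes

variable {m n : ℕ}

def blockMaxes (T : Finset (Finset (Fin n))) : Finset (Fin n) :=
  univ.filter fun i => ∃ B ∈ T, i ∈ B ∧ ∀ x ∈ B, x ≤ i

lemma maxElts_eq_sort_blockMaxes (T : Finset (Finset (Fin n))) :
    maxElts T = (blockMaxes T).sort (· ≤ ·) := rfl

lemma mem_blockMaxes {T : Finset (Finset (Fin n))} {i : Fin n} :
    i ∈ blockMaxes T ↔ ∃ B ∈ T, IsGreatest (B : Set (Fin n)) i := by
  simp [blockMaxes, IsGreatest, upperBounds]

lemma blockMaxes_insert_singleton (T : Finset (Finset (Fin n))) (x : Fin n) :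
    blockMaxes (insert {x} T) = insert x (blockMaxes T) := by
  ext i
  rw [mem_blockMaxes, Finset.exists_mem_insert, Finset.coe_singleton, Finset.mem_insert,
    mem_blockMaxes]
  exact or_congr ⟨fun h : IsGreatest {x} i => h.unique isGreatest_singleton,
    fun h => h ▸ isGreatest_singleton⟩ Iff.rfl

lemma blockMaxes_image_map {e : Fin n ↪ Fin m} (he : StrictMono e)
    (S : Finset (Finset (Fin n))) :
    blockMaxes (S.image (Finset.map e)) = (blockMaxes S).map e := by
  ext j
  simp only [mem_blockMaxes, Finset.exists_mem_image, Finset.coe_map, Finset.mem_map]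
  constructor
  · rintro ⟨B, hB, hj⟩
    obtain ⟨i, -, rfl⟩ := hj.1
    exact ⟨i, ⟨B, hB, he.map_isGreatest.mp hj⟩, rfl⟩
  · rintro ⟨i, ⟨B, hB, hi⟩, rfl⟩
    exact ⟨B, hB, he.map_isGreatest.mpr hi⟩

lemma blockMaxes_image_pullbackBlock {f : Fin m → Fin n} (hf : Monotone f) {g : Fin n ↪ Fin m}
    (hfg : ∀ i, f (g i) = i) (hgf : ∀ j, j ≤ g (f j)) (S : Finset (Finset (Fin n))) :
    blockMaxes (S.image (pullbackBlock f)) = (blockMaxes S).map g := by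
  have hcoe (B : Finset (Fin n)) : (pullbackBlock f B : Set (Fin m)) = f ⁻¹' B := by
    ext; simp
  ext j
  simp only [mem_blockMaxes, Finset.exists_mem_image, hcoe, hf.isGreatest_preimage_iff hfg hgf,
    Finset.mem_map]
  aesop

lemma maxElts_image_map {e : Fin n ↪ Fin m} (he : StrictMono e) (S : Finset (Finset (Fin n))) :
    maxElts (S.image (Finset.map e)) = (maxElts S).map e := by
  rw [maxElts_eq_sort_blockMaxes, maxElts_eq_sort_blockMaxes, blockMaxes_image_map he,
    Finset.map_sort _ _ _ _ fun _ _ _ _ => he.le_iff_le.symm]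

lemma maxElts_image_pullbackBlock {f : Fin m → Fin n} (hf : Monotone f) {g : Fin n ↪ Fin m}
    (hg : StrictMono g) (hfg : ∀ i, f (g i) = i) (hgf : ∀ j, j ≤ g (f j))
    (S : Finset (Finset (Fin n))) :
    maxElts (S.image (pullbackBlock f)) = (maxElts S).map g := by
  rw [maxElts_eq_sort_blockMaxes, maxElts_eq_sort_blockMaxes,
    blockMaxes_image_pullbackBlock hf hfg hgf,
    Finset.map_sort _ _ _ _ fun _ _ _ _ => hg.le_iff_le.symm]

lemma blockOf_image_map {e : Fin n ↪ Fin m} (S : Finset (Finset (Fin n))) (v : Fin n) :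
    blockOf (S.image (Finset.map e)) (e v) = (blockOf S v).map e := by
  ext x
  simp only [mem_blockOf, Finset.exists_mem_image, Finset.mem_map, e.injective.eq_iff,
    exists_eq_right]
  constructor
  · rintro ⟨B, hB, hv, y, hy, rfl⟩
    exact ⟨y, ⟨B, hB, hv, hy⟩, rfl⟩
  · rintro ⟨y, ⟨B, hB, hv, hy⟩, rfl⟩
    exact ⟨B, hB, hv, y, hy, rfl⟩

lemma blockOf_image_pullbackBlock (f : Fin m → Fin n) (S : Finset (Finset (Fin n)))
    (j : Fin m) : blockOf (S.image (pullbackBlock f)) j = pullbackBlock f (blockOf S (f j)) := by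
  ext x
  simp [mem_blockOf]

lemma blockOf_insert_of_notMem {T : Finset (Finset (Fin n))} {B : Finset (Fin n)} {v : Fin n}
    (hv : v ∉ B) : blockOf (insert B T) v = blockOf T v := by
  ext x
  simp only [mem_blockOf, Finset.exists_mem_insert]
  exact or_iff_right fun h => hv h.1

lemma blockOf_insert_singleton_self {T : Finset (Finset (Fin n))} {x : Fin n}
    (hT : ∀ C ∈ T, x ∉ C) : blockOf (insert {x} T) x = {x} := by
  ext y
  simp only [mem_blockOf, Finset.exists_mem_insert, Finset.mem_singleton_self, true_and]
  exact or_iff_left fun ⟨C, hC, hxC, _⟩ => hT C hC hxC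

end BlockMaxes

section Products

variable {n : ℕ} {M : Type*} [Ring M]

lemma aProd_congr {a b : Fin n → M} {B : Finset (Fin n)} (h : ∀ i ∈ B, a i = b i) :
    aProd a B = aProd b B :=
  congrArg List.prod (List.map_congr_left fun i hi => h i ((Finset.mem_sort _).mp hi))

@[simp] lemma aProd_singleton (a : Fin n → M) (i : Fin n) : aProd a {i} = a i := by
  simp [aProd]

lemma aProd_eq_aProd_erase_mul (a : Fin n → M) {B : Finset (Fin n)} {m : Fin n} (hm : m ∈ B)
    (hmax : ∀ x ∈ B, x ≤ m) : aProd a B = aProd a (B.erase m) * a m := by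
  rw [aProd, aProd, Finset.sort_eq_sort_erase_append hm hmax, List.map_append,
    List.prod_append]
  simp

lemma aProd_liftBlock (a : Fin (n + 1) → M) (B : Finset (Fin n)) :
    aProd a (liftBlock B) = aProd (Fin.init a) B := by
  rw [aProd, liftBlock,
    ← Finset.map_sort _ _ _ _ fun _ _ _ _ => Fin.castSucc_le_castSucc_iff.symm, List.map_map]
  rfl

def mergeLast (a : Fin (n + 2) → M) : Fin (n + 1) → M :=
  Fin.snoc (Fin.init (Fin.init a)) (a (Fin.last n).castSucc * a (Fin.last (n + 1)))

@[simp] lemma init_mergeLast (a : Fin (n + 2) → M) :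
    Fin.init (mergeLast a) = Fin.init (Fin.init a) :=
  Fin.init_snoc _ _

@[simp] lemma mergeLast_last (a : Fin (n + 2) → M) :
    mergeLast a (Fin.last n) = a (Fin.last n).castSucc * a (Fin.last (n + 1)) :=
  Fin.snoc_last _ _

lemma mergeLast_of_ne_last (a : Fin (n + 2) → M) {i : Fin (n + 1)} (hi : i ≠ Fin.last n) :
    mergeLast a i = Fin.init a i := by
  obtain ⟨j, rfl⟩ := Fin.exists_castSucc_eq.mpr hi
  exact Fin.snoc_castSucc _ _ _

lemma aProd_stretchBlock (a : Fin (n + 2) → M) (B : Finset (Fin (n + 1))) :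
    aProd a (stretchBlock B) = aProd (mergeLast a) B := by
  by_cases hl : Fin.last n ∈ B
  · have hmax : ∀ x ∈ B, x ≤ Fin.last n := fun x _ => Fin.le_last x
    rw [stretchBlock_of_mem hl,
      aProd_eq_aProd_erase_mul a (Finset.mem_insert_self _ _) fun x _ => Fin.le_last x,
      Finset.erase_insert (last_notMem_liftBlock B), aProd_liftBlock,
      aProd_eq_aProd_erase_mul _ hl hmax, aProd_eq_aProd_erase_mul (mergeLast a) hl hmax,
      mergeLast_last, mul_assoc]
    exact congrArg (· * _) (aProd_congr fun i hi =>
      (mergeLast_of_ne_last a (Finset.mem_erase.mp hi).1).symm)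
  · rw [stretchBlock_of_notMem hl, aProd_liftBlock]
    exact aProd_congr fun i hi => (mergeLast_of_ne_last a fun h => hl (h ▸ hi)).symm

end Products

section Words

variable {n : ℕ} {M : Type*} [Ring M] [Algebra ℂ M]

def openWord (a : Fin n → M) (S : Finset (Finset (Fin n))) : TensorAlgebra ℂ M :=
  ((maxElts S).map fun v => TensorAlgebra.ι ℂ (aProd a (blockOf S v))).prod

lemma openWord_image_liftBlock (a : Fin (n + 1) → M) (S : Finset (Finset (Fin n))) :
    openWord a (S.image liftBlock) = openWord (Fin.init a) S := by
  have hmax : maxElts (S.image liftBlock) = (maxElts S).map Fin.castSucc :=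
    maxElts_image_map Fin.strictMono_castSucc S
  rw [openWord, openWord, hmax, List.map_map]
  refine congrArg List.prod (List.map_congr_left fun v _ => ?_)
  rw [Function.comp_apply, ← aProd_liftBlock]
  exact congrArg (TensorAlgebra.ι ℂ ∘ aProd a) (blockOf_image_map (e := Fin.castSuccEmb) S v)

lemma last_notMem_blockMaxes_image_liftBlock (S : Finset (Finset (Fin n))) :
    Fin.last n ∉ blockMaxes (S.image liftBlock) := by
  rw [show S.image liftBlock = S.image (Finset.map Fin.castSuccEmb) from rfl,
    blockMaxes_image_map Fin.strictMono_castSucc]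
  exact last_notMem_liftBlock _

lemma openWord_insertLast (a : Fin (n + 1) → M) (S : Finset (Finset (Fin n))) :
    openWord a (insertLast S) = openWord (Fin.init a) S * TensorAlgebra.ι ℂ (a (Fin.last n)) := by
  have hmax : maxElts (insertLast S) = maxElts (S.image liftBlock) ++ [Fin.last n] := by
    rw [maxElts_eq_sort_blockMaxes, insertLast, blockMaxes_insert_singleton,
      Finset.sort_eq_sort_erase_append (Finset.mem_insert_self _ _) fun x _ => Fin.le_last x,
      Finset.erase_insert (last_notMem_blockMaxes_image_liftBlock S), maxElts_eq_sort_blockMaxes]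
  rw [← openWord_image_liftBlock, openWord, openWord, hmax, List.map_append, List.prod_append,
    List.map_singleton, List.prod_singleton, insertLast,
    blockOf_insert_singleton_self fun C hC => ?_, aProd_singleton]
  · refine congrArg (· * _) (congrArg List.prod (List.map_congr_left fun v hv => ?_))
    have hv : v ≠ Fin.last n := fun h =>
      last_notMem_blockMaxes_image_liftBlock S (h ▸ (Finset.mem_sort _).mp hv)
    rw [blockOf_insert_of_notMem (Finset.notMem_singleton.mpr hv)]
  · obtain ⟨B, -, rfl⟩ := Finset.mem_image.mp hC
    exact last_notMem_liftBlock B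

lemma le_succAbove_predAbove_last (j : Fin (n + 2)) :
    j ≤ (Fin.last n).castSucc.succAbove ((Fin.last n).predAbove j) := by
  rcases Fin.eq_castSucc_or_eq_last j with ⟨i, rfl⟩ | rfl
  · rw [Fin.predAbove_last_castSucc, Fin.succAbove]
    split_ifs
    exacts [le_rfl, Fin.castSucc_lt_succ.le]
  · simp

lemma openWord_image_stretchBlock (a : Fin (n + 2) → M) (S : Finset (Finset (Fin (n + 1)))) :
    openWord a (S.image stretchBlock) = openWord (mergeLast a) S := by
  have hmax : maxElts (S.image stretchBlock) =
      (maxElts S).map (Fin.last n).castSucc.succAbove :=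
    maxElts_image_pullbackBlock (g := (Fin.last n).castSucc.succAboveEmb)
      (Fin.predAbove_right_monotone _) (Fin.strictMono_succAbove _)
      (Fin.predAbove_succAbove _) le_succAbove_predAbove_last S
  rw [openWord, openWord, hmax, List.map_map]
  refine congrArg List.prod (List.map_congr_left fun v _ => ?_)
  rw [Function.comp_apply, ← aProd_stretchBlock]
  refine congrArg (TensorAlgebra.ι ℂ ∘ aProd a) ?_
  have h := blockOf_image_pullbackBlock (Fin.last n).predAbove S
    ((Fin.last n).castSucc.succAbove v)
  rwa [Fin.predAbove_succAbove] at h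

end Words

section Expansion

variable {n : ℕ} {M : Type*} [Ring M] [Algebra ℂ M] (E : M →ₗ[ℂ] ℂ)

def term (a : Fin n → M) (p : Config n) : TensorAlgebra ℂ M :=
  ((-1 : ℂ) ^ (n - p.2.card) * ∏ U ∈ p.1 \ p.2, E (aProd a U)) • openWord a p.2

def expansion (a : Fin n → M) : TensorAlgebra ℂ M :=
  ∑ p ∈ univ.filter IsAdmissible, term E a p

lemma prod_image_liftBlock (a : Fin (n + 1) → M) (T : Finset (Finset (Fin n))) :
    ∏ U ∈ T.image liftBlock, E (aProd a U) = ∏ U ∈ T, E (aProd (Fin.init a) U) := by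
  rw [Finset.prod_image liftBlock_injective.injOn]
  simp only [aProd_liftBlock]

lemma term_closeLast (a : Fin (n + 1) → M) {p : Config n} (hp : p.2.card ≤ n) :
    term E a (closeLast p) = -E (a (Fin.last n)) • term E (Fin.init a) p := by
  have hsdiff : insertLast p.1 \ p.2.image liftBlock =
      insert {Fin.last n} ((p.1 \ p.2).image liftBlock) := by
    rw [insertLast, Finset.insert_sdiff_of_notMem _ (singleton_last_notMem_image_liftBlock _),
      Finset.image_sdiff _ _ liftBlock_injective]
  rw [term, term, closeLast, hsdiff,
    Finset.prod_insert (singleton_last_notMem_image_liftBlock _), prod_image_liftBlock,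
    aProd_singleton, Finset.card_image_of_injective _ liftBlock_injective,
    openWord_image_liftBlock, smul_smul, Nat.succ_sub hp, pow_succ]
  ring_nf

lemma term_openLast (a : Fin (n + 1) → M) (p : Config n) :
    term E a (openLast p) =
      term E (Fin.init a) p * TensorAlgebra.ι ℂ (a (Fin.last n)) := by
  have hsdiff : insertLast p.1 \ insertLast p.2 = (p.1 \ p.2).image liftBlock := by
    rw [insertLast, insertLast, Finset.insert_sdiff_insert,
      Finset.sdiff_insert_of_notMem (singleton_last_notMem_image_liftBlock _),
      Finset.image_sdiff _ _ liftBlock_injective]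
  have hcard : (insertLast p.2).card = p.2.card + 1 := by
    rw [insertLast, Finset.card_insert_of_notMem (singleton_last_notMem_image_liftBlock _),
      Finset.card_image_of_injective _ liftBlock_injective]
  rw [term, term, openLast, hsdiff, prod_image_liftBlock, hcard, openWord_insertLast,
    Nat.add_sub_add_right, smul_mul_assoc]

lemma term_stretchLast (a : Fin (n + 2) → M) {p : Config (n + 1)} (hp : p.2.card ≤ n + 1) :
    term E a (stretchLast p) = -term E (mergeLast a) p := by
  rw [term, term, stretchLast, ← Finset.image_sdiff _ _ stretchBlock_injective,
    Finset.prod_image stretchBlock_injective.injOn,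
    Finset.card_image_of_injective _ stretchBlock_injective, openWord_image_stretchBlock,
    ← neg_smul, Nat.succ_sub hp, pow_succ]
  simp only [aProd_stretchBlock]
  ring_nf

lemma sum_closed (a : Fin (n + 1) → M) :
    ∑ p ∈ univ.filter (fun p : Config (n + 1) => IsAdmissible p ∧ IsLastClosed p), term E a p =
      -E (a (Fin.last n)) • expansion E (Fin.init a) := by
  rw [← image_closeLast, Finset.sum_image closeLast_injective.injOn, expansion,
    Finset.smul_sum]
  exact Finset.sum_congr rfl fun p hp => term_closeLast E a (Finset.mem_filter.mp hp).2.card_le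

lemma sum_openSingleton (a : Fin (n + 1) → M) :
    ∑ p ∈ univ.filter (fun p : Config (n + 1) => IsAdmissible p ∧ {Fin.last n} ∈ p.2),
        term E a p =
      expansion E (Fin.init a) * TensorAlgebra.ι ℂ (a (Fin.last n)) := by
  rw [← image_openLast, Finset.sum_image openLast_injective.injOn, expansion, Finset.sum_mul]
  exact Finset.sum_congr rfl fun p _ => term_openLast E a p

lemma sum_stretched (a : Fin (n + 2) → M) :
    ∑ p ∈ univ.filter (fun p : Config (n + 2) => IsAdmissible p ∧ {Fin.last (n + 1)} ∉ p.1),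
        term E a p =
      -∑ q ∈ univ.filter (fun q : Config (n + 1) => IsAdmissible q ∧ ¬IsLastClosed q),
          term E (mergeLast a) q := by
  rw [← image_stretchLast, Finset.sum_image stretchLast_injective.injOn, ← Finset.sum_neg_distrib]
  exact Finset.sum_congr rfl fun q hq =>
    term_stretchLast E a (Finset.mem_filter.mp hq).2.1.card_le

lemma expansion_eq_sum_closed_add (a : Fin (n + 1) → M) :
    expansion E a =
      ∑ p ∈ univ.filter (fun p : Config (n + 1) => IsAdmissible p ∧ IsLastClosed p), term E a p +
        ∑ p ∈ univ.filter (fun p : Config (n + 1) => IsAdmissible p ∧ ¬IsLastClosed p),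
          term E a p := by
  rw [expansion, ← Finset.sum_filter_add_sum_filter_not _ IsLastClosed, Finset.filter_filter,
    Finset.filter_filter]

lemma sum_notClosed (a : Fin (n + 1) → M) :
    ∑ p ∈ univ.filter (fun p : Config (n + 1) => IsAdmissible p ∧ ¬IsLastClosed p), term E a p =
      ∑ p ∈ univ.filter (fun p : Config (n + 1) => IsAdmissible p ∧ {Fin.last n} ∈ p.2),
          term E a p +
        ∑ p ∈ univ.filter (fun p : Config (n + 1) => IsAdmissible p ∧ {Fin.last n} ∉ p.1),
          term E a p := by
  rw [← Finset.sum_filter_add_sum_filter_not _ fun p => {Fin.last n} ∈ p.2,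
    Finset.filter_filter, Finset.filter_filter]
  congr 2 <;> ext p <;> simp only [Finset.mem_filter, Finset.mem_univ, true_and]
  · exact ⟨fun h => ⟨h.1.1, h.2⟩, fun h => ⟨⟨h.1, fun h' => h'.2 h.2⟩, h.2⟩⟩
  · refine ⟨fun h => ⟨h.1.1, fun h' => h.1.2 ⟨h', h.2⟩⟩,
      fun h => ⟨⟨h.1, fun h' => h.2 h'.1⟩, fun h' => h.2 (h.1.subset h')⟩⟩

lemma expansion_zero (a : Fin 0 → M) : expansion E a = 1 := by
  have hadm : univ.filter (IsAdmissible (n := 0)) = {(∅, ∅)} := by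
    ext p
    simp only [Finset.mem_filter, Finset.mem_univ, true_and, Finset.mem_singleton]
    constructor
    · intro hp
      have h₁ : p.1 = ∅ := Finset.eq_empty_of_forall_notMem fun B hB =>
        (hp.isPartition.1 B hB).elim fun i _ => i.elim0
      exact Prod.ext h₁ (Finset.subset_empty.mp (h₁ ▸ hp.subset))
    · rintro rfl
      exact ⟨⟨by simp, fun i => i.elim0⟩, by simp [IsIntervalPartition], le_rfl, by simp⟩
  simp [expansion, hadm, term, openWord, maxElts_eq_sort_blockMaxes, blockMaxes]

lemma expansion_one (a : Fin 1 → M) :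
    expansion E a =
      expansion E (Fin.init a) * TensorAlgebra.ι ℂ (a 0) - E (a 0) • expansion E (Fin.init a) := by
  have hstretched : univ.filter (fun p : Config 1 =>
      IsAdmissible p ∧ {Fin.last 0} ∉ p.1) = ∅ := by
    refine Finset.filter_false_of_mem fun p _ ⟨hp, hl⟩ => hl ?_
    obtain ⟨B, ⟨hB, hlB⟩, -⟩ := hp.isPartition.2 (Fin.last 0)
    rwa [Finset.eq_singleton_iff_unique_mem.mpr ⟨hlB, fun x _ => Subsingleton.elim x _⟩] at hB
  have hlast : (Fin.last 0 : Fin 1) = 0 := rfl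
  rw [expansion_eq_sum_closed_add, sum_notClosed, sum_closed, sum_openSingleton, hstretched,
    Finset.sum_empty, hlast, neg_smul]
  abel

lemma expansion_add_two (a : Fin (n + 2) → M) :
    expansion E a =
      expansion E (Fin.init a) * TensorAlgebra.ι ℂ (a (Fin.last (n + 1)))
        - E (a (Fin.last (n + 1))) • expansion E (Fin.init a)
        - expansion E (mergeLast a)
        - E (a (Fin.last n).castSucc * a (Fin.last (n + 1))) •
            expansion E (Fin.init (Fin.init a)) := by
  have hmerge := expansion_eq_sum_closed_add E (mergeLast a)
  rw [sum_closed, mergeLast_last, init_mergeLast] at hmerge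
  rw [expansion_eq_sum_closed_add, sum_notClosed, sum_closed, sum_openSingleton, sum_stretched,
    hmerge]
  generalize ∑ q ∈ univ.filter (fun q : Config (n + 1) => IsAdmissible q ∧ ¬IsLastClosed q),
    term E (mergeLast a) q = X
  rw [neg_smul, neg_smul]
  abel

end Expansion

lemma sum_eq_expansion {n : ℕ} {M : Type*} [Ring M] [Algebra ℂ M] (E : M →ₗ[ℂ] ℂ)
    (a : Fin n → M) :
    ∑ π ∈ Finset.univ.filter (fun π : Finset (Finset (Fin n)) =>
          IsPartition π ∧ IsIntervalPartition π),
        ∑ S ∈ π.powerset.filter (fun S => ∀ U ∈ π, U ∉ S → U.card = 1),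
          ((-1 : ℂ) ^ (n - S.card) * ∏ U ∈ π \ S, E (aProd a U)) •
            ((maxElts S).map fun v => TensorAlgebra.ι ℂ (aProd a (blockOf S v))).prod =
      expansion E a := by
  refine (Finset.sum_finset_product' _ _ _ fun p => ?_).symm
  simp only [Finset.mem_filter, Finset.mem_univ, true_and, Finset.mem_powerset, isAdmissible_iff]
  tauto

end WickExpansion

theorem stmt14 {M : Type*} [Ring M] [Algebra ℂ M] (E : M →ₗ[ℂ] ℂ)
    (W : (m : ℕ) → (Fin m → M) → TensorAlgebra ℂ M)
    (hW0 : ∀ a : Fin 0 → M, W 0 a = 1)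
    (hW1 : ∀ a : Fin 1 → M,
      W 1 a = W 0 (Fin.init a) * TensorAlgebra.ι ℂ (a 0)
        - E (a 0) • W 0 (Fin.init a))
    (hWrec : ∀ (m : ℕ) (a : Fin (m + 2) → M),
      W (m + 2) a =
        W (m + 1) (Fin.init a) * TensorAlgebra.ι ℂ (a (Fin.last (m + 1)))
          - E (a (Fin.last (m + 1))) • W (m + 1) (Fin.init a)
          - W (m + 1) (Fin.snoc (Fin.init (Fin.init a))
              (a (Fin.last m).castSucc * a (Fin.last (m + 1))))
          - E (a (Fin.last m).castSucc * a (Fin.last (m + 1))) •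
              W m (Fin.init (Fin.init a)))
    (n : ℕ) (a : Fin n → M) :
    W n a
      = ∑ π ∈ Finset.univ.filter (fun π : Finset (Finset (Fin n)) =>
            IsPartition π ∧ IsIntervalPartition π),
          ∑ S ∈ π.powerset.filter (fun S => ∀ U ∈ π, U ∉ S → U.card = 1),
            ((-1 : ℂ) ^ (n - S.card) * ∏ U ∈ π \ S, E (aProd a U)) •
              ((maxElts S).map fun v =>
                TensorAlgebra.ι ℂ (aProd a (blockOf S v))).prod := by
  rw [WickExpansion.sum_eq_expansion]
  induction n using Nat.twoStepInduction with
  | zero => rw [hW0, WickExpansion.expansion_zero]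
  | one => rw [hW1, hW0, WickExpansion.expansion_one, WickExpansion.expansion_zero]
  | more m ih₀ ih₁ =>
    rw [hWrec, ih₁, ih₁, ih₀]
    exact (WickExpansion.expansion_add_two E a).symm
end
end

section
/- For every n ≥ 1 and every (π,S) ∈ INC(n), the following polynomial identity in the variables α, β, t, γ holds: C^{(π,S)}_{α,β,t,γ} = Π_{U ∈ π∖S} κ_{|U|} · Π_{V ∈ S} ω_{|V|}, where κ_1 = α, κ_m = t·M_{m−2}(β,γ) for m ≥ 2, and ω_m = M_{m−1}(β,γ). -/
/-!
An admissible refinement `σ` of `π` is the union of its restrictions to the blocks of `π`: the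
conditions defining `C^{(π,S)}` are blockwise, the restrictions are noncrossing on their own, and
conversely restrictions to different blocks of a noncrossing `π` cannot cross. The exponents of
the weight are additive over the blocks, so `C^{(π,S)}` is the product of one-block coefficients.

On one block the sums are those of the first-return decomposition of Motzkin paths. Noncrossing
partitions without singletons, weighted by `β^(#middle elements) γ^(#blocks)`, sum to the Riordan
polynomials `R_m` (Motzkin paths without flat steps at height `0`): cutting at the end of the block
of the minimum gives `R_m = γ ∑ M_k R_{m-2-k}`. A closed block becomes an open block after
detaching its maximum, and an open block either has its minimum as a singleton or no singleton at
all, which gives `R_{m-1} + β ∑ M_k R_{m-2-k} = M_{m-1}`.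
-/

open Finset
open scoped Classical

noncomputable section

/-- Refinement order on partitions. -/
def Refines {n : ℕ} (P Q : Finset (Finset (Fin n))) : Prop :=
  ∀ B ∈ P, ∃ C ∈ Q, B ⊆ C

/-- Non-crossing partitions. -/
def IsNoncrossing {n : ℕ} (P : Finset (Finset (Fin n))) : Prop :=
  ¬ ∃ U ∈ P, ∃ V ∈ P, U ≠ V ∧ ∃ i ∈ U, ∃ k ∈ U, ∃ j ∈ V, ∃ l ∈ V,
      i < j ∧ j < k ∧ k < l

/-- Outer blocks. -/
def IsOuter {n : ℕ} (P : Finset (Finset (Fin n))) (V : Finset (Fin n)) : Prop :=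
  ¬ ∃ U ∈ P, U ≠ V ∧ ∃ i ∈ U, ∃ j ∈ U, ∀ x ∈ V, i < x ∧ x < j

/-- The Motzkin polynomials: `M 0 = 1` and
`M (j+1) = β * M j + γ * ∑_{k=0}^{j-1} M k * M (j-1-k)`. -/
def motzkin (β γ : ℂ) : ℕ → ℂ
  | 0 => 1
  | j + 1 =>
      β * motzkin β γ j
        + γ * ∑ k ∈ (Finset.range j).attach,
            motzkin β γ k.1 * motzkin β γ (j - 1 - k.1)
  decreasing_by
  · omega
  · have := Finset.mem_range.mp k.2; omega
  · omega

/-- The coefficient `C^{(π,S)}_{α,β,t,γ}`. -/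
def Ccoef {n : ℕ} (α β t γ : ℂ) (π S : Finset (Finset (Fin n))) : ℂ :=
  ∑ σ ∈ Finset.univ.filter (fun σ : Finset (Finset (Fin n)) =>
      IsPartition σ ∧ IsNoncrossing σ ∧ Refines σ π
        ∧ (∀ U ∈ π, U ∉ S → ∃ C ∈ σ, ∃ m ∈ U, ∃ M ∈ U, m ∈ C ∧ M ∈ C
              ∧ (∀ x ∈ U, m ≤ x) ∧ (∀ x ∈ U, x ≤ M))
        ∧ (∀ B ∈ σ, B.card = 1 →
            (B ∈ π ∨ ∃ V ∈ S, ∃ x ∈ B, x ∈ V ∧ ∀ y ∈ V, x ≤ y))),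
    α ^ ((π \ S).filter fun U => U.card = 1).card
      * β ^ (n + S.card + ((π \ S).filter fun U => U.card = 1).card - 2 * σ.card)
      * t ^ ((π \ S).filter fun U => 2 ≤ U.card).card
      * γ ^ (σ.card - π.card)

/-- The free cumulant coefficients: `κ 1 = α` and `κ m = t * M_{m-2}(β,γ)` for `m ≥ 2`. -/
def kappa (α β t γ : ℂ) (m : ℕ) : ℂ :=
  if m = 1 then α else t * motzkin β γ (m - 2)

section Motzkin

variable (β γ : ℂ)

theorem motzkin_succ (j : ℕ) :
    motzkin β γ (j + 1)
      = β * motzkin β γ j + γ * ∑ k ∈ range j, motzkin β γ k * motzkin β γ (j - 1 - k) := by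
  rw [motzkin, sum_attach (range j) fun k => motzkin β γ k * motzkin β γ (j - 1 - k)]

/-- Riordan polynomials: weighted Motzkin paths with no flat step at height `0`. -/
def riordan : ℕ → ℂ
  | 0 => 1
  | 1 => 0
  | m + 2 => γ * ∑ k ∈ range (m + 1), motzkin β γ k * riordan (m - k)

theorem riordan_succ (j : ℕ) :
    riordan β γ (j + 1) = γ * ∑ k ∈ range j, motzkin β γ k * riordan β γ (j - 1 - k) := by
  rcases j with _ | j
  · simp [riordan]
  · rw [riordan]
    rfl

/-- Splitting a Motzkin path at its last flat step at height `0`. -/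
theorem motzkin_eq_riordan_add (m : ℕ) :
    motzkin β γ m
      = riordan β γ m + β * ∑ k ∈ range m, motzkin β γ k * riordan β γ (m - 1 - k) := by
  induction m using Nat.strong_induction_on with
  | _ m ih =>
  rcases m with _ | m
  · simp [motzkin, riordan]
  have hterm : ∀ k ∈ range m, γ * (motzkin β γ k * riordan β γ (m - 1 - k))
      + β * (motzkin β γ k * riordan β γ (m - k))
        = γ * (motzkin β γ k * motzkin β γ (m - 1 - k)) := by
    intro k hk
    have hk := mem_range.mp hk
    have hsucc : m - k = m - 1 - k + 1 := by omega
    rw [ih (m - 1 - k) (by omega), hsucc, riordan_succ]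
    ring
  rw [motzkin_succ, riordan_succ, sum_range_succ, Nat.add_sub_cancel, Nat.sub_self, mul_sum,
    ← sum_congr rfl hterm, sum_add_distrib, ← mul_sum, ← mul_sum]
  simp only [riordan]
  ring

end Motzkin

theorem Finset.sum_card_eq_sum_sum_of_mem_iff {ι M : Type*} [DecidableEq ι] [AddCommMonoid M]
    {X X₁ X₂ : Finset (Finset ι)} (p : ι → Prop) [DecidablePred p]
    (h₁ : ∀ τ ∈ X₁, ∀ B ∈ τ, p B) (h₂ : ∀ τ ∈ X₂, ∀ B ∈ τ, ¬ p B)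
    (hX : ∀ σ, σ ∈ X ↔ σ.filter p ∈ X₁ ∧ σ.filter (¬ p ·) ∈ X₂) (f : ℕ → M) :
    ∑ σ ∈ X, f #σ = ∑ τ₁ ∈ X₁, ∑ τ₂ ∈ X₂, f (#τ₁ + #τ₂) := by
  have hfilter : ∀ τ ∈ X₁ ×ˢ X₂, (τ.1 ∪ τ.2).filter p = τ.1 ∧ (τ.1 ∪ τ.2).filter (¬ p ·) = τ.2 := by
    intro τ hτ
    obtain ⟨hτ₁, hτ₂⟩ := mem_product.mp hτ
    rw [filter_union, filter_union, filter_true_of_mem (h₁ _ hτ₁), filter_false_of_mem (h₂ _ hτ₂),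
      filter_false_of_mem fun B hB => not_not.mpr (h₁ _ hτ₁ B hB), filter_true_of_mem (h₂ _ hτ₂),
      union_empty, empty_union]
    exact ⟨rfl, rfl⟩
  rw [← sum_product']
  refine sum_nbij' (fun σ => (σ.filter p, σ.filter (¬ p ·))) (fun τ => τ.1 ∪ τ.2) ?_ ?_ ?_ ?_ ?_
  · exact fun σ hσ => mem_product.mpr ((hX σ).mp hσ)
  · intro τ hτ
    rw [hX, (hfilter τ hτ).1, (hfilter τ hτ).2]
    exact mem_product.mp hτ
  · exact fun σ _ => filter_union_filter_not_eq p σ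
  · exact fun τ hτ => Prod.ext (hfilter τ hτ).1 (hfilter τ hτ).2
  · exact fun σ _ => by rw [card_filter_add_card_filter_not]

theorem Finset.sdiff_filter_le {α : Type*} [LinearOrder α] (s : Finset α) (z : α) :
    s \ s.filter (· ≤ z) = s.filter (z < ·) := by
  ext x
  simp +contextual [not_le]

theorem Finset.sum_card_filter_le {α M : Type*} [LinearOrder α] [AddCommMonoid M] (s : Finset α)
    (φ : ℕ → M) : ∑ z ∈ s, φ #(s.filter (· ≤ z)) = ∑ k ∈ range #s, φ (k + 1) := by
  induction s using Finset.induction_on_max with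
  | empty => simp
  | insert b t hlt ih =>
    have hbt : b ∉ t := fun hb => (hlt b hb).false
    have hfilter : ∀ z ∈ t, (insert b t).filter (· ≤ z) = t.filter (· ≤ z) := fun z hz => by
      rw [filter_insert, if_neg (hlt z hz).not_ge]
    rw [sum_insert hbt, card_insert_of_notMem hbt, sum_range_succ, sum_congr rfl fun z hz =>
      congrArg φ (congrArg card (hfilter z hz)), ih, add_comm,
      filter_true_of_mem fun x hx => (mem_insert.mp hx).elim le_of_eq fun hx => (hlt x hx).le,
      card_insert_of_notMem hbt]

theorem Finset.sum_erase_card_filter_le {α M : Type*} [LinearOrder α] [AddCancelCommMonoid M]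
    {s : Finset α} {a : α} (ha : a ∈ s) (hamin : ∀ x ∈ s, a ≤ x) (φ : ℕ → M) :
    ∑ z ∈ s.erase a, φ #(s.filter (· ≤ z)) = ∑ k ∈ range (#s - 1), φ (k + 2) := by
  have hsa : s.filter (· ≤ a) = {a} :=
    eq_singleton_iff_unique_mem.mpr ⟨mem_filter.mpr ⟨ha, le_rfl⟩,
      fun x hx => le_antisymm (mem_filter.mp hx).2 (hamin x (mem_filter.mp hx).1)⟩
  have h := sum_card_filter_le s φ
  rw [← add_sum_erase s _ ha, hsa, card_singleton, ← Nat.sub_add_cancel (card_pos.mpr ⟨a, ha⟩),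
    sum_range_succ', add_comm] at h
  exact add_right_cancel h

section Partitions

variable {α : Type*} {s A : Finset α} {σ τ : Finset (Finset α)}

structure IsPartitionOf (s : Finset α) (σ : Finset (Finset α)) : Prop where
  nonempty : ∀ B ∈ σ, B.Nonempty
  subset : ∀ B ∈ σ, B ⊆ s
  exists_mem : ∀ x ∈ s, ∃ B ∈ σ, x ∈ B
  eq_of_mem : ∀ B ∈ σ, ∀ C ∈ σ, ∀ x, x ∈ B → x ∈ C → B = C

namespace IsPartitionOf

theorem self {U : Finset α} (hU : U.Nonempty) : IsPartitionOf U {U} where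
  nonempty _ hB := mem_singleton.mp hB ▸ hU
  subset _ hB := (mem_singleton.mp hB).le
  exists_mem _ hx := ⟨U, mem_singleton_self U, hx⟩
  eq_of_mem _ hB _ hC _ _ _ := (mem_singleton.mp hB).trans (mem_singleton.mp hC).symm

theorem eq_empty (h : IsPartitionOf s (∅ : Finset (Finset α))) : s = ∅ :=
  eq_empty_of_forall_notMem fun x hx => by simpa using h.exists_mem x hx

theorem not_subset_of_disjoint (h : IsPartitionOf s σ) (hd : Disjoint s A) :
    ∀ B ∈ σ, ¬ B ⊆ A := fun B hB hBA =>
  (h.nonempty B hB).ne_empty (disjoint_self.mp ((hd.mono (h.subset B hB) hBA)))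

theorem card_le_of_forall_subset (h : IsPartitionOf s σ) (hτ : IsPartitionOf s τ)
    (hστ : ∀ B ∈ σ, ∃ C ∈ τ, B ⊆ C) : #τ ≤ #σ := by
  refine card_le_card_of_forall_subsingleton (fun C B => B ⊆ C) (fun C hC => ?_) ?_
  · obtain ⟨x, hx⟩ := hτ.nonempty C hC
    obtain ⟨B, hB, hxB⟩ := h.exists_mem x (hτ.subset C hC hx)
    obtain ⟨C', hC', hBC'⟩ := hστ B hB
    exact ⟨B, hB, hτ.eq_of_mem C' hC' C hC x (hBC' hxB) hx ▸ hBC'⟩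
  · intro B hB C₁ hC₁ C₂ hC₂
    obtain ⟨x, hx⟩ := h.nonempty B hB
    exact hτ.eq_of_mem C₁ hC₁.1 C₂ hC₂.1 x (hC₁.2 hx) (hC₂.2 hx)

theorem disjoint_of_ne (h : IsPartitionOf s σ) {B C : Finset α} (hB : B ∈ σ) (hC : C ∈ σ)
    (hne : B ≠ C) : Disjoint B C :=
  disjoint_left.mpr fun x hxB hxC => hne (h.eq_of_mem B hB C hC x hxB hxC)

variable [DecidableEq α]

theorem sum_card (h : IsPartitionOf s σ) : ∑ B ∈ σ, #B = #s := by
  have hs : σ.biUnion id = s := by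
    ext x
    simp only [mem_biUnion, id]
    exact ⟨fun ⟨B, hB, hx⟩ => h.subset B hB hx, h.exists_mem x⟩
  rw [← hs, card_biUnion]
  · rfl
  · exact fun B hB C hC hne => h.disjoint_of_ne hB hC hne

theorem two_mul_card_le (h : IsPartitionOf s σ) : 2 * #σ ≤ #s + #(σ.filter (#· = 1)) := by
  rw [← h.sum_card, card_filter, ← sum_add_distrib, mul_comm, ← smul_eq_mul, ← sum_const]
  refine sum_le_sum fun B hB => ?_
  have := card_pos.mpr (h.nonempty B hB)
  split_ifs <;> omega

theorem two_mul_card_le_of_forall_card_ne_one (h : IsPartitionOf s σ) (hσ : ∀ B ∈ σ, #B ≠ 1) :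
    2 * #σ ≤ #s := by
  simpa [filter_false_of_mem hσ] using h.two_mul_card_le

theorem union (hσ : IsPartitionOf s σ) (hτ : IsPartitionOf A τ) (hd : Disjoint s A) :
    IsPartitionOf (s ∪ A) (σ ∪ τ) where
  nonempty B hB := (mem_union.mp hB).elim (hσ.nonempty B) (hτ.nonempty B)
  subset B hB := (mem_union.mp hB).elim (fun h => (hσ.subset B h).trans subset_union_left)
    fun h => (hτ.subset B h).trans subset_union_right
  exists_mem x hx := (mem_union.mp hx).elim
    (fun h => (hσ.exists_mem x h).imp fun _ ⟨hB, hxB⟩ => ⟨mem_union_left _ hB, hxB⟩)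
    fun h => (hτ.exists_mem x h).imp fun _ ⟨hB, hxB⟩ => ⟨mem_union_right _ hB, hxB⟩
  eq_of_mem B hB C hC x hxB hxC := by
    rcases mem_union.mp hB with hB | hB <;> rcases mem_union.mp hC with hC | hC
    · exact hσ.eq_of_mem B hB C hC x hxB hxC
    · exact absurd (hτ.subset C hC hxC) (disjoint_left.mp hd (hσ.subset B hB hxB))
    · exact absurd (hσ.subset C hC hxC) (disjoint_right.mp hd (hτ.subset B hB hxB))
    · exact hτ.eq_of_mem B hB C hC x hxB hxC

theorem filter_subset (h : IsPartitionOf s σ) (hA : A ⊆ s) (hσA : ∀ B ∈ σ, B ⊆ A ∨ Disjoint B A) :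
    IsPartitionOf A (σ.filter (· ⊆ A)) where
  nonempty B hB := h.nonempty B (mem_filter.mp hB).1
  subset B hB := (mem_filter.mp hB).2
  exists_mem x hx := by
    obtain ⟨B, hB, hxB⟩ := h.exists_mem x (hA hx)
    refine ⟨B, mem_filter.mpr ⟨hB, (hσA B hB).resolve_right fun hd => ?_⟩, hxB⟩
    exact disjoint_left.mp hd hxB hx
  eq_of_mem B hB C hC := h.eq_of_mem B (mem_filter.mp hB).1 C (mem_filter.mp hC).1

theorem filter_not_subset (h : IsPartitionOf s σ) (hσA : ∀ B ∈ σ, B ⊆ A ∨ Disjoint B A) :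
    IsPartitionOf (s \ A) (σ.filter (¬ · ⊆ A)) where
  nonempty B hB := h.nonempty B (mem_filter.mp hB).1
  subset B hB := by
    obtain ⟨hB, hBA⟩ := mem_filter.mp hB
    exact subset_sdiff.mpr ⟨h.subset B hB, (hσA B hB).resolve_left hBA⟩
  exists_mem x hx := by
    obtain ⟨hxs, hxA⟩ := mem_sdiff.mp hx
    obtain ⟨B, hB, hxB⟩ := h.exists_mem x hxs
    exact ⟨B, mem_filter.mpr ⟨hB, fun hBA => hxA (hBA hxB)⟩, hxB⟩
  eq_of_mem B hB C hC := h.eq_of_mem B (mem_filter.mp hB).1 C (mem_filter.mp hC).1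

theorem of_filter (hA : A ⊆ s) (h₁ : IsPartitionOf A (σ.filter (· ⊆ A)))
    (h₂ : IsPartitionOf (s \ A) (σ.filter (¬ · ⊆ A))) : IsPartitionOf s σ := by
  have h := h₁.union h₂ disjoint_sdiff
  rwa [filter_union_filter_not_eq, union_sdiff_of_subset hA] at h

theorem subset_or_disjoint_of_filter (h : IsPartitionOf s σ)
    (hA : IsPartitionOf A (σ.filter (· ⊆ A))) : ∀ B ∈ σ, B ⊆ A ∨ Disjoint B A := by
  refine fun B hB => or_iff_not_imp_right.mpr fun hBA => ?_
  obtain ⟨x, hxB, hxA⟩ := not_disjoint_iff.mp hBA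
  obtain ⟨C, hC, hxC⟩ := hA.exists_mem x hxA
  exact h.eq_of_mem B hB C (mem_filter.mp hC).1 x hxB hxC ▸ (mem_filter.mp hC).2

theorem erase (h : IsPartitionOf s σ) {U : Finset α} (hU : U ∈ σ) :
    IsPartitionOf (s \ U) (σ.erase U) := by
  have hσU : ∀ B ∈ σ, B ⊆ U ∨ Disjoint B U := fun B hB => by
    by_cases hBU : B = U
    · exact .inl hBU.le
    · exact .inr (h.disjoint_of_ne hB hU hBU)
  convert h.filter_not_subset hσU using 1
  ext B
  simp only [mem_erase, mem_filter]
  refine ⟨fun ⟨hne, hB⟩ => ⟨hB, fun hBU => hne ?_⟩, fun ⟨hB, hBU⟩ => ⟨fun h => hBU h.le, hB⟩⟩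
  obtain ⟨x, hx⟩ := h.nonempty B hB
  exact h.eq_of_mem B hB U hU x hx (hBU hx)

theorem image_erase (h : IsPartitionOf s σ) {b : α} (hb : ∀ B ∈ σ, (B.erase b).Nonempty) :
    IsPartitionOf (s.erase b) (σ.image (·.erase b)) where
  nonempty := by simpa using hb
  subset := by simpa using fun B hB => erase_subset_erase b (h.subset B hB)
  exists_mem x hx := by
    obtain ⟨B, hB, hxB⟩ := h.exists_mem x (mem_of_mem_erase hx)
    exact ⟨B.erase b, mem_image_of_mem _ hB, mem_erase.mpr ⟨ne_of_mem_erase hx, hxB⟩⟩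
  eq_of_mem := by
    simp only [mem_image, forall_exists_index, and_imp, forall_apply_eq_imp_iff₂]
    intro B hB C hC x hxB hxC
    rw [h.eq_of_mem B hB C hC x (mem_of_mem_erase hxB) (mem_of_mem_erase hxC)]

end IsPartitionOf

theorem isPartitionOf_empty_iff : IsPartitionOf (∅ : Finset α) σ ↔ σ = ∅ := by
  refine ⟨fun h => eq_empty_of_forall_notMem fun B hB => ?_, ?_⟩
  · obtain ⟨x, hx⟩ := h.nonempty B hB
    exact notMem_empty x (h.subset B hB hx)
  · rintro rfl
    exact ⟨by simp, by simp, by simp, by simp⟩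

theorem isPartitionOf_singleton_iff {x : α} : IsPartitionOf {x} σ ↔ σ = {{x}} := by
  refine ⟨fun h => ?_, fun h => h ▸ .self (singleton_nonempty x)⟩
  obtain ⟨B, hB, hxB⟩ := h.exists_mem x (mem_singleton_self x)
  have hBx : B = {x} :=
    eq_singleton_iff_unique_mem.mpr ⟨hxB, fun y hy => mem_singleton.mp (h.subset B hB hy)⟩
  refine eq_singleton_iff_unique_mem.mpr ⟨hBx ▸ hB, fun C hC => ?_⟩
  obtain ⟨y, hy⟩ := h.nonempty C hC
  rw [← hBx]
  exact h.eq_of_mem C hC B hB y hy (hBx ▸ h.subset C hC hy)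

variable [DecidableEq α]

def insertIfMem (a b : α) (B : Finset α) : Finset α := if a ∈ B then insert b B else B

theorem mem_insertIfMem {a b x : α} {B : Finset α} :
    x ∈ insertIfMem a b B ↔ x ∈ B ∨ (a ∈ B ∧ x = b) := by
  unfold insertIfMem
  split_ifs with haB <;> simp [haB, or_comm]

theorem IsPartitionOf.image_insertIfMem (h : IsPartitionOf s τ) {a b : α} (ha : a ∈ s)
    (hb : b ∉ s) : IsPartitionOf (insert b s) (τ.image (insertIfMem a b)) where
  nonempty := by
    simp only [mem_image, forall_exists_index, and_imp, forall_apply_eq_imp_iff₂]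
    intro B hB
    obtain ⟨x, hx⟩ := h.nonempty B hB
    exact ⟨x, mem_insertIfMem.mpr (.inl hx)⟩
  subset := by
    simp only [mem_image, forall_exists_index, and_imp, forall_apply_eq_imp_iff₂]
    intro B hB x hx
    rcases mem_insertIfMem.mp hx with hx | ⟨-, rfl⟩
    · exact mem_insert_of_mem (h.subset B hB hx)
    · exact mem_insert_self x s
  exists_mem x hx := by
    rcases mem_insert.mp hx with rfl | hx
    · obtain ⟨W, hW, haW⟩ := h.exists_mem a ha
      exact ⟨_, mem_image_of_mem _ hW, mem_insertIfMem.mpr (.inr ⟨haW, rfl⟩)⟩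
    · obtain ⟨B, hB, hxB⟩ := h.exists_mem x hx
      exact ⟨_, mem_image_of_mem _ hB, mem_insertIfMem.mpr (.inl hxB)⟩
  eq_of_mem := by
    simp only [mem_image, forall_exists_index, and_imp, forall_apply_eq_imp_iff₂]
    intro B hB C hC x hxB hxC
    have hbB : ∀ D ∈ τ, b ∉ D := fun D hD hbD => hb (h.subset D hD hbD)
    rcases mem_insertIfMem.mp hxB with hxB | ⟨haB, rfl⟩ <;>
      rcases mem_insertIfMem.mp hxC with hxC | ⟨haC, hxb⟩
    · rw [h.eq_of_mem B hB C hC x hxB hxC]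
    · exact absurd (hxb ▸ hxB) (hbB B hB)
    · exact absurd hxC (hbB C hC)
    · rw [h.eq_of_mem B hB C hC a haB haC]

theorem image_erase_image_insertIfMem {a b : α} (hb : ∀ B ∈ τ, b ∉ B) :
    (τ.image (insertIfMem a b)).image (·.erase b) = τ := by
  rw [image_image]
  refine (image_congr fun B hB => ?_).trans image_id
  by_cases haB : a ∈ B <;> simp [insertIfMem, haB, hb B hB]

theorem IsPartitionOf.image_insertIfMem_image_erase (h : IsPartitionOf s σ) {C : Finset α}
    (hC : C ∈ σ) {a b : α} (haC : a ∈ C) (hbC : b ∈ C) (hab : a ≠ b) :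
    (σ.image (·.erase b)).image (insertIfMem a b) = σ := by
  rw [image_image]
  refine (image_congr fun B hB => ?_).trans image_id
  by_cases haB : a ∈ B
  · obtain rfl := h.eq_of_mem B hB C hC a haB haC
    simp [insertIfMem, haB, hab, hbC]
  · have hbB : b ∉ B := fun hbB => haB (h.eq_of_mem B hB C hC b hbB hbC ▸ haC)
    simp [insertIfMem, haB, hbB]

end Partitions

section Noncrossing

variable {n : ℕ} {σ τ : Finset (Finset (Fin n))}

theorem IsNoncrossing.eq_of_lt (h : IsNoncrossing σ) {U V : Finset (Fin n)} (hU : U ∈ σ)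
    (hV : V ∈ σ) {i j k l : Fin n} (hi : i ∈ U) (hj : j ∈ V) (hk : k ∈ U) (hl : l ∈ V)
    (hij : i < j) (hjk : j < k) (hkl : k < l) : U = V :=
  by_contra fun hne => h ⟨U, hU, V, hV, hne, i, hi, k, hk, j, hj, l, hl, hij, hjk, hkl⟩

theorem isNoncrossing_singleton (B : Finset (Fin n)) : IsNoncrossing {B} :=
  fun ⟨_, hU, _, hV, hne, _⟩ => hne ((mem_singleton.mp hU).trans (mem_singleton.mp hV).symm)

theorem IsNoncrossing.mono (h : IsNoncrossing τ) (hστ : σ ⊆ τ) : IsNoncrossing σ :=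
  fun ⟨U, hU, V, hV, hcross⟩ => h ⟨U, hστ hU, V, hστ hV, hcross⟩

theorem IsNoncrossing.image_of_subset (h : IsNoncrossing σ) {f : Finset (Fin n) → Finset (Fin n)}
    (hf : ∀ B ∈ σ, f B ⊆ B) : IsNoncrossing (σ.image f) := by
  rintro ⟨_, hU, _, hV, hne, i, hi, k, hk, j, hj, l, hl, hij, hjk, hkl⟩
  obtain ⟨B, hB, rfl⟩ := mem_image.mp hU
  obtain ⟨C, hC, rfl⟩ := mem_image.mp hV
  exact hne (congrArg f
    (h.eq_of_lt hB hC (hf B hB hi) (hf C hC hj) (hf B hB hk) (hf C hC hl) hij hjk hkl))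

theorem IsNoncrossing.union_of_lt (hσ : IsNoncrossing σ) (hτ : IsNoncrossing τ)
    (hlt : ∀ B ∈ σ, ∀ C ∈ τ, ∀ x ∈ B, ∀ y ∈ C, x < y) : IsNoncrossing (σ ∪ τ) := by
  rintro ⟨U, hU, V, hV, hne, i, hi, k, hk, j, hj, l, hl, hij, hjk, hkl⟩
  rcases mem_union.mp hU with hU | hU <;> rcases mem_union.mp hV with hV | hV
  · exact hne (hσ.eq_of_lt hU hV hi hj hk hl hij hjk hkl)
  · exact (hlt U hU V hV k hk j hj).not_gt hjk
  · exact (hlt V hV U hU j hj i hi).not_gt hij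
  · exact hne (hτ.eq_of_lt hU hV hi hj hk hl hij hjk hkl)

theorem IsNoncrossing.union_of_subset_blocks {π : Finset (Finset (Fin n))}
    (hσ : IsNoncrossing σ) (hτ : IsNoncrossing τ) (hπ : IsNoncrossing π) {U : Finset (Fin n)}
    (hU : U ∈ π) (hσU : ∀ B ∈ σ, B ⊆ U) (hτπ : ∀ B ∈ τ, ∃ C ∈ π, C ≠ U ∧ B ⊆ C) :
    IsNoncrossing (σ ∪ τ) := by
  rintro ⟨B, hB, B', hB', hne, i, hi, k, hk, j, hj, l, hl, hij, hjk, hkl⟩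
  rcases mem_union.mp hB with hB | hB <;> rcases mem_union.mp hB' with hB' | hB'
  · exact hne (hσ.eq_of_lt hB hB' hi hj hk hl hij hjk hkl)
  · obtain ⟨C, hC, hCU, hB'C⟩ := hτπ B' hB'
    exact hCU (hπ.eq_of_lt hU hC (hσU B hB hi) (hB'C hj) (hσU B hB hk) (hB'C hl) hij hjk hkl).symm
  · obtain ⟨C, hC, hCU, hBC⟩ := hτπ B hB
    exact hCU (hπ.eq_of_lt hC hU (hBC hi) (hσU B' hB' hj) (hBC hk) (hσU B' hB' hl) hij hjk hkl)
  · exact hne (hτ.eq_of_lt hB hB' hi hj hk hl hij hjk hkl)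

/-- A crossing through `b` would already be one through `a`. -/
theorem IsNoncrossing.image_insertIfMem {s : Finset (Fin n)} (hτ : IsPartitionOf s τ)
    (h : IsNoncrossing τ) {a b : Fin n} (ha : ∀ x ∈ s, a ≤ x) (hb : ∀ x ∈ s, x < b) :
    IsNoncrossing (τ.image (insertIfMem a b)) := by
  rintro ⟨_, hU, _, hV, hne, i, hi, k, hk, j, hj, l, hl, hij, hjk, hkl⟩
  obtain ⟨B, hB, rfl⟩ := mem_image.mp hU
  obtain ⟨C, hC, rfl⟩ := mem_image.mp hV
  have hBC : B ≠ C := fun h => hne (h ▸ rfl)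
  have hlb : l ≤ b := (mem_insertIfMem.mp hl).elim (fun hl => (hb l (hτ.subset C hC hl)).le)
    fun h => h.2.le
  have mem_of_lt : ∀ D x, x ∈ insertIfMem a b D → x < l → x ∈ D := fun D x hx hxl =>
    (mem_insertIfMem.mp hx).resolve_right fun h => (hxl.trans_le hlb).ne h.2
  have hiB := mem_of_lt B i hi (hij.trans (hjk.trans hkl))
  have hkB := mem_of_lt B k hk hkl
  have hjC := mem_of_lt C j hj (hjk.trans hkl)
  by_cases hlC : l ∈ C
  · exact hBC (h.eq_of_lt hB hC hiB hjC hkB hlC hij hjk hkl)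
  · have haC : a ∈ C := ((mem_insertIfMem.mp hl).resolve_left hlC).1
    have hai : a < i := (ha i (hτ.subset B hB hiB)).lt_of_ne fun hai =>
      hBC (hτ.eq_of_mem B hB C hC i hiB (hai ▸ haC))
    exact hBC (h.eq_of_lt hC hB haC hiB hjC hkB hai hij hjk).symm

/-- The block of the minimum cuts off an initial segment of the ground set. -/
theorem IsNoncrossing.subset_or_disjoint_filter_le {s : Finset (Fin n)} (hσ : IsPartitionOf s σ)
    (h : IsNoncrossing σ) {W : Finset (Fin n)} (hW : W ∈ σ) {a z : Fin n} (ha : a ∈ W)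
    (hamin : ∀ x ∈ s, a ≤ x) (hz : z ∈ W) (hzmax : ∀ x ∈ W, x ≤ z) :
    ∀ B ∈ σ, B ⊆ s.filter (· ≤ z) ∨ Disjoint B (s.filter (· ≤ z)) := by
  intro B hB
  by_cases hBz : ∀ y ∈ B, y ≤ z
  · exact .inl fun y hy => mem_filter.mpr ⟨hσ.subset B hB hy, hBz y hy⟩
  refine .inr (disjoint_left.mpr fun x hxB hx => ?_)
  obtain ⟨y, hyB, hzy⟩ : ∃ y ∈ B, z < y := by simpa using hBz
  have hBW : B ≠ W := fun hBW => (hzmax y (hBW ▸ hyB)).not_gt hzy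
  have hax : a < x := (hamin x (mem_filter.mp hx).1).lt_of_ne fun hax =>
    hBW (hσ.eq_of_mem B hB W hW x hxB (hax ▸ ha))
  have hxz : x < z := (mem_filter.mp hx).2.lt_of_ne fun hxz =>
    hBW (hσ.eq_of_mem B hB W hW x hxB (hxz ▸ hz))
  exact hBW (h.eq_of_lt hW hB ha hxB hz hyB hax hxz hzy).symm

end Noncrossing

section BlockPartitions

variable {n : ℕ} {s : Finset (Fin n)} {σ τ : Finset (Finset (Fin n))}

def noSingletonPartitions (s : Finset (Fin n)) : Finset (Finset (Finset (Fin n))) :=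
  univ.filter fun σ => IsPartitionOf s σ ∧ IsNoncrossing σ ∧ ∀ B ∈ σ, #B ≠ 1

/-- The partitions that `Ccoef` allows on a closed block `s` of size at least two. -/
def closedBlockPartitions (s : Finset (Fin n)) : Finset (Finset (Finset (Fin n))) :=
  univ.filter fun σ => IsPartitionOf s σ ∧ IsNoncrossing σ ∧ (∀ B ∈ σ, #B ≠ 1)
    ∧ ∃ C ∈ σ, ∃ m ∈ s, ∃ M ∈ s, m ∈ C ∧ M ∈ C ∧ (∀ x ∈ s, m ≤ x) ∧ (∀ x ∈ s, x ≤ M)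

/-- The partitions that `Ccoef` allows on an open block `s`. -/
def openBlockPartitions (s : Finset (Fin n)) : Finset (Finset (Finset (Fin n))) :=
  univ.filter fun σ => IsPartitionOf s σ ∧ IsNoncrossing σ
    ∧ ∀ B ∈ σ, #B = 1 → ∃ x ∈ B, ∀ y ∈ s, x ≤ y

theorem mem_noSingletonPartitions :
    σ ∈ noSingletonPartitions s ↔ IsPartitionOf s σ ∧ IsNoncrossing σ ∧ ∀ B ∈ σ, #B ≠ 1 := by
  simp [noSingletonPartitions]

theorem mem_closedBlockPartitions :
    σ ∈ closedBlockPartitions s ↔ IsPartitionOf s σ ∧ IsNoncrossing σ ∧ (∀ B ∈ σ, #B ≠ 1)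
      ∧ ∃ C ∈ σ, ∃ m ∈ s, ∃ M ∈ s, m ∈ C ∧ M ∈ C ∧ (∀ x ∈ s, m ≤ x) ∧ (∀ x ∈ s, x ≤ M) := by
  simp [closedBlockPartitions]

theorem mem_openBlockPartitions :
    σ ∈ openBlockPartitions s ↔ IsPartitionOf s σ ∧ IsNoncrossing σ
      ∧ ∀ B ∈ σ, #B = 1 → ∃ x ∈ B, ∀ y ∈ s, x ≤ y := by
  simp [openBlockPartitions]

theorem noSingletonPartitions_empty : noSingletonPartitions (∅ : Finset (Fin n)) = {∅} := by
  ext σ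
  simp only [mem_noSingletonPartitions, isPartitionOf_empty_iff, mem_singleton]
  exact ⟨fun h => h.1, fun h => ⟨h, h ▸ fun ⟨_, hU, _⟩ => notMem_empty _ hU, by simp [h]⟩⟩

theorem exists_mem_of_mem_closedBlockPartitions (hσ : σ ∈ closedBlockPartitions s) {a b : Fin n}
    (ha : a ∈ s) (hamin : ∀ x ∈ s, a ≤ x) (hb : b ∈ s) (hbmax : ∀ x ∈ s, x ≤ b) :
    ∃ C ∈ σ, a ∈ C ∧ b ∈ C := by
  obtain ⟨-, -, -, C, hC, m, hm, M, hM, hmC, hMC, hmmin, hMmax⟩ := mem_closedBlockPartitions.mp hσ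
  exact ⟨C, hC, le_antisymm (hmmin a ha) (hamin m hm) ▸ hmC,
    le_antisymm (hbmax M hM) (hMmax b hb) ▸ hMC⟩

section OpenBlock

variable {a : Fin n}

theorem filter_mem_of_mem_openBlockPartitions (ha : a ∈ s) (hamin : ∀ x ∈ s, a ≤ x)
    (hσ : σ ∈ openBlockPartitions s) (haσ : {a} ∈ σ) :
    σ.filter (· ⊆ {a}) = {{a}} ∧ σ.filter (¬ · ⊆ {a}) ∈ noSingletonPartitions (s.erase a) := by
  obtain ⟨hp, hnc, hsing⟩ := mem_openBlockPartitions.mp hσ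
  have hdich : ∀ B ∈ σ, B ⊆ {a} ∨ Disjoint B {a} := fun B hB => by
    by_cases haB : a ∈ B
    · exact .inl (hp.eq_of_mem B hB {a} haσ a haB (mem_singleton_self a)).le
    · exact .inr (disjoint_singleton_right.mpr haB)
  refine ⟨isPartitionOf_singleton_iff.mp (hp.filter_subset (singleton_subset_iff.mpr ha) hdich),
    mem_noSingletonPartitions.mpr ⟨?_, hnc.mono (filter_subset _ _), fun B hB hB1 => ?_⟩⟩
  · simpa [sdiff_singleton_eq_erase] using hp.filter_not_subset hdich
  · obtain ⟨hB, hBa⟩ := mem_filter.mp hB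
    obtain ⟨x, hx, hxmin⟩ := hsing B hB hB1
    have hxa : x = a := le_antisymm (hxmin a ha) (hamin x (hp.subset B hB hx))
    exact hBa (hp.eq_of_mem B hB {a} haσ a (hxa ▸ hx) (mem_singleton_self a)).le

theorem mem_openBlockPartitions_of_filter (ha : a ∈ s) (hamin : ∀ x ∈ s, a ≤ x)
    (h₁ : σ.filter (· ⊆ {a}) = {{a}})
    (h₂ : σ.filter (¬ · ⊆ {a}) ∈ noSingletonPartitions (s.erase a)) :
    σ ∈ openBlockPartitions s := by
  obtain ⟨hp, hnc, hns⟩ := mem_noSingletonPartitions.mp h₂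
  have hσ : σ = {{a}} ∪ σ.filter (¬ · ⊆ {a}) := by rw [← h₁, filter_union_filter_not_eq]
  refine mem_openBlockPartitions.mpr ⟨?_, ?_, fun B hB hB1 => ?_⟩
  · refine .of_filter (singleton_subset_iff.mpr ha) (h₁ ▸ .self (singleton_nonempty a)) ?_
    rwa [sdiff_singleton_eq_erase]
  · rw [hσ]
    refine (isNoncrossing_singleton _).union_of_lt hnc fun B hB C hC x hx y hy => ?_
    obtain rfl := mem_singleton.mp hB
    obtain rfl := mem_singleton.mp hx
    obtain ⟨hya, hys⟩ := mem_erase.mp (hp.subset C hC hy)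
    exact (hamin y hys).lt_of_ne' hya
  · by_cases hBa : B ⊆ {a}
    · obtain rfl : B = {a} := mem_singleton.mp (h₁ ▸ mem_filter.mpr ⟨hB, hBa⟩)
      exact ⟨a, mem_singleton_self a, hamin⟩
    · exact absurd hB1 (hns B (mem_filter.mpr ⟨hB, hBa⟩))

theorem filter_singleton_notMem_openBlockPartitions (ha : a ∈ s) (hamin : ∀ x ∈ s, a ≤ x) :
    (openBlockPartitions s).filter (fun σ => {a} ∉ σ) = noSingletonPartitions s := by
  ext σ
  simp only [mem_filter, mem_openBlockPartitions, mem_noSingletonPartitions]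
  refine ⟨fun ⟨⟨hp, hnc, hsing⟩, haσ⟩ => ⟨hp, hnc, fun B hB hB1 => ?_⟩,
    fun ⟨hp, hnc, hns⟩ => ⟨⟨hp, hnc, fun B hB hB1 => absurd hB1 (hns B hB)⟩,
      fun haσ => hns {a} haσ (card_singleton a)⟩⟩
  obtain ⟨x, hx, hxmin⟩ := hsing B hB hB1
  have hxa : x = a := le_antisymm (hxmin a ha) (hamin x (hp.subset B hB hx))
  obtain ⟨y, rfl⟩ := card_eq_one.mp hB1
  exact haσ (hxa ▸ mem_singleton.mp hx ▸ hB)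

/-- An open block either has its minimum as a singleton, or no singleton at all. -/
theorem sum_openBlockPartitions {M : Type*} [AddCommMonoid M] (ha : a ∈ s)
    (hamin : ∀ x ∈ s, a ≤ x) (f : ℕ → M) :
    ∑ σ ∈ openBlockPartitions s, f #σ
      = ∑ τ ∈ noSingletonPartitions (s.erase a), f (#τ + 1)
        + ∑ σ ∈ noSingletonPartitions s, f #σ := by
  rw [← sum_filter_add_sum_filter_not _ (fun σ => {a} ∈ σ),
    filter_singleton_notMem_openBlockPartitions ha hamin]
  congr 1
  rw [sum_card_eq_sum_sum_of_mem_iff (· ⊆ {a}) (X₁ := {{{a}}})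
    (X₂ := noSingletonPartitions (s.erase a)), sum_singleton, card_singleton]
  · simp only [add_comm 1]
  · simp
  · exact fun τ hτ => (mem_noSingletonPartitions.mp hτ).1.not_subset_of_disjoint
      (disjoint_singleton_right.mpr (notMem_erase a s))
  · intro σ
    rw [mem_filter, mem_singleton]
    refine ⟨fun ⟨hσ, haσ⟩ => filter_mem_of_mem_openBlockPartitions ha hamin hσ haσ,
      fun ⟨h₁, h₂⟩ => ⟨mem_openBlockPartitions_of_filter ha hamin h₁ h₂, ?_⟩⟩
    exact (mem_filter.mp (h₁ ▸ mem_singleton_self {a} : {a} ∈ σ.filter (· ⊆ {a}))).1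

end OpenBlock

end BlockPartitions

section ClosedBlock

variable {n : ℕ} {s : Finset (Fin n)} {σ τ : Finset (Finset (Fin n))} {a b : Fin n}

theorem image_erase_mem_openBlockPartitions (ha : a ∈ s) (hamin : ∀ x ∈ s, a ≤ x) (hb : b ∈ s)
    (hbmax : ∀ x ∈ s, x ≤ b) (hab : a ≠ b) (hσ : σ ∈ closedBlockPartitions s) :
    σ.image (·.erase b) ∈ openBlockPartitions (s.erase b) := by
  obtain ⟨hp, hnc, hns, -⟩ := mem_closedBlockPartitions.mp hσ
  obtain ⟨C, hC, haC, hbC⟩ := exists_mem_of_mem_closedBlockPartitions hσ ha hamin hb hbmax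
  have haC' : a ∈ C.erase b := mem_erase.mpr ⟨hab, haC⟩
  have heqC : ∀ B ∈ σ, b ∈ B → B = C := fun B hB hbB => hp.eq_of_mem B hB C hC b hbB hbC
  refine mem_openBlockPartitions.mpr ⟨hp.image_erase fun B hB => ?_,
    hnc.image_of_subset fun B _ => erase_subset b B, ?_⟩
  · by_cases hbB : b ∈ B
    · exact heqC B hB hbB ▸ ⟨a, haC'⟩
    · rw [erase_eq_of_notMem hbB]
      exact hp.nonempty B hB
  · simp only [mem_image, forall_exists_index, and_imp, forall_apply_eq_imp_iff₂]
    intro B hB hB1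
    by_cases hbB : b ∈ B
    · exact ⟨a, heqC B hB hbB ▸ haC', fun y hy => hamin y (mem_of_mem_erase hy)⟩
    · rw [erase_eq_of_notMem hbB] at hB1
      exact absurd hB1 (hns B hB)

theorem image_insertIfMem_mem_closedBlockPartitions (ha : a ∈ s) (hamin : ∀ x ∈ s, a ≤ x)
    (hb : b ∈ s) (hbmax : ∀ x ∈ s, x ≤ b) (hab : a ≠ b)
    (hτ : τ ∈ openBlockPartitions (s.erase b)) :
    τ.image (insertIfMem a b) ∈ closedBlockPartitions s := by
  obtain ⟨hp, hnc, hsing⟩ := mem_openBlockPartitions.mp hτ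
  have hae : a ∈ s.erase b := mem_erase.mpr ⟨hab, ha⟩
  obtain ⟨W, hW, haW⟩ := hp.exists_mem a hae
  have hp' : IsPartitionOf s (τ.image (insertIfMem a b)) := by
    convert hp.image_insertIfMem hae (notMem_erase b s)
    exact (insert_erase hb).symm
  refine mem_closedBlockPartitions.mpr ⟨hp', hnc.image_insertIfMem hp
    (fun x hx => hamin x (mem_of_mem_erase hx))
    (fun x hx => (hbmax x (mem_of_mem_erase hx)).lt_of_ne (ne_of_mem_erase hx)), ?_,
    _, mem_image_of_mem _ hW, a, ha, b, hb, mem_insertIfMem.mpr (.inl haW),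
    mem_insertIfMem.mpr (.inr ⟨haW, rfl⟩), hamin, hbmax⟩
  simp only [mem_image, forall_exists_index, and_imp, forall_apply_eq_imp_iff₂]
  intro B hB hB1
  obtain ⟨x, hx⟩ := card_eq_one.mp hB1
  by_cases haB : a ∈ B
  · have hxa := hx ▸ mem_insertIfMem.mpr (.inl haB)
    have hxb := hx ▸ mem_insertIfMem.mpr (.inr ⟨haB, rfl⟩)
    exact hab ((mem_singleton.mp hxa).trans (mem_singleton.mp hxb).symm)
  · rw [insertIfMem, if_neg haB] at hx
    obtain ⟨y, hy, hymin⟩ := hsing B hB (hx ▸ card_singleton x)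
    exact haB (le_antisymm (hamin y (mem_of_mem_erase (hp.subset B hB hy))) (hymin a hae) ▸ hy)

/-- Removing the maximum `b` from the block that joins it to the minimum. -/
theorem sum_closedBlockPartitions {M : Type*} [AddCommMonoid M] (hb : b ∈ s)
    (hbmax : ∀ x ∈ s, x ≤ b) (hs : 2 ≤ #s) (f : ℕ → M) :
    ∑ σ ∈ closedBlockPartitions s, f #σ = ∑ τ ∈ openBlockPartitions (s.erase b), f #τ := by
  have hne : s.Nonempty := ⟨b, hb⟩
  set a := s.min' hne
  have ha : a ∈ s := min'_mem s hne
  have hamin : ∀ x ∈ s, a ≤ x := fun x hx => min'_le s x hx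
  have hab : a ≠ b := (min'_lt_max'_of_card s hs).ne.trans_eq
    (le_antisymm (max'_le s hne b hbmax) (le_max' s b hb))
  have hge : ∀ σ ∈ closedBlockPartitions s, (σ.image (·.erase b)).image (insertIfMem a b) = σ :=
    fun σ hσ => by
      obtain ⟨C, hC, haC, hbC⟩ := exists_mem_of_mem_closedBlockPartitions hσ ha hamin hb hbmax
      exact (mem_closedBlockPartitions.mp hσ).1.image_insertIfMem_image_erase hC haC hbC hab
  refine sum_nbij' (·.image (·.erase b)) (·.image (insertIfMem a b))
    (fun σ hσ => image_erase_mem_openBlockPartitions ha hamin hb hbmax hab hσ)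
    (fun τ hτ => image_insertIfMem_mem_closedBlockPartitions ha hamin hb hbmax hab hτ) hge
    (fun τ hτ => image_erase_image_insertIfMem fun B hB hbB =>
      notMem_erase b s ((mem_openBlockPartitions.mp hτ).1.subset B hB hbB)) fun σ hσ => ?_
  refine congrArg f (le_antisymm ?_ card_image_le)
  calc #σ = #((σ.image (·.erase b)).image (insertIfMem a b)) := by rw [hge σ hσ]
    _ ≤ #(σ.image (·.erase b)) := card_image_le

end ClosedBlock

section NoSingleton

variable {n : ℕ} {s : Finset (Fin n)} {σ : Finset (Finset (Fin n))} {a z : Fin n}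

theorem filter_mem_closedBlockPartitions_iff :
    σ ∈ noSingletonPartitions s
        ∧ σ.filter (· ⊆ s.filter (· ≤ z)) ∈ closedBlockPartitions (s.filter (· ≤ z))
      ↔ σ.filter (· ⊆ s.filter (· ≤ z)) ∈ closedBlockPartitions (s.filter (· ≤ z))
        ∧ σ.filter (¬ · ⊆ s.filter (· ≤ z)) ∈ noSingletonPartitions (s.filter (z < ·)) := by
  set L := s.filter (· ≤ z)
  refine ⟨fun ⟨hσ, hL⟩ => ⟨hL, ?_⟩, fun ⟨hL, hU⟩ => ⟨?_, hL⟩⟩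
  · obtain ⟨hp, hnc, hns⟩ := mem_noSingletonPartitions.mp hσ
    have hdich := hp.subset_or_disjoint_of_filter (mem_closedBlockPartitions.mp hL).1
    refine mem_noSingletonPartitions.mpr ⟨?_, hnc.mono (filter_subset _ _),
      fun B hB => hns B (mem_filter.mp hB).1⟩
    simpa [L, sdiff_filter_le] using hp.filter_not_subset hdich
  · obtain ⟨hpL, hncL, hnsL, -⟩ := mem_closedBlockPartitions.mp hL
    obtain ⟨hpU, hncU, hnsU⟩ := mem_noSingletonPartitions.mp hU
    have hσ := filter_union_filter_not_eq (· ⊆ L) σ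
    refine mem_noSingletonPartitions.mpr ⟨?_, ?_, fun B hB => ?_⟩
    · exact .of_filter (filter_subset _ s) hpL (by rwa [sdiff_filter_le])
    · rw [← hσ]
      refine hncL.union_of_lt hncU fun B hB C hC x hx y hy => ?_
      exact (mem_filter.mp (hpL.subset B hB hx)).2.trans_lt (mem_filter.mp (hpU.subset C hC hy)).2
    · rw [← hσ] at hB
      exact (mem_union.mp hB).elim (hnsL B) (hnsU B)

theorem exists_filter_mem_closedBlockPartitions (ha : a ∈ s) (hamin : ∀ x ∈ s, a ≤ x)
    (hσ : σ ∈ noSingletonPartitions s) :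
    ∃ z ∈ s.erase a,
      σ.filter (· ⊆ s.filter (· ≤ z)) ∈ closedBlockPartitions (s.filter (· ≤ z)) := by
  obtain ⟨hp, hnc, hns⟩ := mem_noSingletonPartitions.mp hσ
  obtain ⟨W, hW, haW⟩ := hp.exists_mem a ha
  set z := W.max' ⟨a, haW⟩
  have hz : z ∈ W := max'_mem W _
  have hzmax : ∀ x ∈ W, x ≤ z := fun x hx => le_max' W x hx
  have hza : z ≠ a := fun hza => hns W hW (card_eq_one.mpr ⟨a, eq_singleton_iff_unique_mem.mpr
    ⟨haW, fun x hx => le_antisymm (hza ▸ hzmax x hx) (hamin x (hp.subset W hW hx))⟩⟩)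
  have hzs : z ∈ s := hp.subset W hW hz
  have hWL : W ⊆ s.filter (· ≤ z) := fun x hx => mem_filter.mpr ⟨hp.subset W hW hx, hzmax x hx⟩
  refine ⟨z, mem_erase.mpr ⟨hza, hzs⟩, mem_closedBlockPartitions.mpr ⟨?_,
    hnc.mono (filter_subset _ _), fun B hB => hns B (mem_filter.mp hB).1, W,
    mem_filter.mpr ⟨hW, hWL⟩, a, hWL haW, z, hWL hz, haW, hz,
    fun x hx => hamin x (mem_filter.mp hx).1, fun x hx => (mem_filter.mp hx).2⟩⟩
  exact hp.filter_subset (filter_subset _ s)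
    (hnc.subset_or_disjoint_filter_le hp hW haW hamin hz hzmax)

theorem eq_of_filter_mem_closedBlockPartitions (ha : a ∈ s) (hamin : ∀ x ∈ s, a ≤ x)
    (hσ : σ ∈ noSingletonPartitions s) {z' : Fin n} (hz : z ∈ s) (hz' : z' ∈ s)
    (h : σ.filter (· ⊆ s.filter (· ≤ z)) ∈ closedBlockPartitions (s.filter (· ≤ z)))
    (h' : σ.filter (· ⊆ s.filter (· ≤ z')) ∈ closedBlockPartitions (s.filter (· ≤ z'))) :
    z = z' := by
  have hp := (mem_noSingletonPartitions.mp hσ).1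
  have key : ∀ {z}, z ∈ s →
      σ.filter (· ⊆ s.filter (· ≤ z)) ∈ closedBlockPartitions (s.filter (· ≤ z)) →
      ∃ C ∈ σ, a ∈ C ∧ z ∈ C ∧ ∀ x ∈ C, x ≤ z := by
    intro z hz h
    obtain ⟨C, hC, haC, hzC⟩ := exists_mem_of_mem_closedBlockPartitions h
      (mem_filter.mpr ⟨ha, hamin z hz⟩) (fun x hx => hamin x (mem_filter.mp hx).1)
      (mem_filter.mpr ⟨hz, le_rfl⟩) fun x hx => (mem_filter.mp hx).2
    obtain ⟨hC, hCL⟩ := mem_filter.mp hC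
    exact ⟨C, hC, haC, hzC, fun x hx => (mem_filter.mp (hCL hx)).2⟩
  obtain ⟨C, hC, haC, hzC, hCz⟩ := key hz h
  obtain ⟨C', hC', haC', hzC', hCz'⟩ := key hz' h'
  obtain rfl := hp.eq_of_mem C hC C' hC' a haC haC'
  exact le_antisymm (hCz' z hzC) (hCz z' hzC')

/-- Cut at the end `z` of the block of the minimum `a`. -/
theorem sum_noSingletonPartitions {M : Type*} [AddCommMonoid M] (ha : a ∈ s)
    (hamin : ∀ x ∈ s, a ≤ x) (f : ℕ → M) :
    ∑ σ ∈ noSingletonPartitions s, f #σ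
      = ∑ z ∈ s.erase a, ∑ σ₁ ∈ closedBlockPartitions (s.filter (· ≤ z)),
          ∑ σ₂ ∈ noSingletonPartitions (s.filter (z < ·)), f (#σ₁ + #σ₂) := by
  let X : Fin n → Finset (Finset (Finset (Fin n))) := fun z => (noSingletonPartitions s).filter
    fun σ => σ.filter (· ⊆ s.filter (· ≤ z)) ∈ closedBlockPartitions (s.filter (· ≤ z))
  have hcover : noSingletonPartitions s = (s.erase a).biUnion X := by
    ext σ
    simp only [mem_biUnion, X, mem_filter]
    refine ⟨fun hσ => ?_, fun ⟨_, _, hσ, _⟩ => hσ⟩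
    obtain ⟨z, hz, h⟩ := exists_filter_mem_closedBlockPartitions ha hamin hσ
    exact ⟨z, hz, hσ, h⟩
  have hdisj : (s.erase a : Set (Fin n)).PairwiseDisjoint X := by
    intro z hz z' hz' hne
    refine disjoint_left.mpr fun σ hσ hσ' => hne ?_
    exact eq_of_filter_mem_closedBlockPartitions ha hamin (mem_filter.mp hσ).1
      (mem_of_mem_erase hz) (mem_of_mem_erase hz') (mem_filter.mp hσ).2 (mem_filter.mp hσ').2
  rw [hcover, sum_biUnion hdisj]
  refine sum_congr rfl fun z _ => sum_card_eq_sum_sum_of_mem_iff _ ?_ ?_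
    (fun σ => mem_filter.trans filter_mem_closedBlockPartitions_iff) f
  · exact fun τ hτ => (mem_closedBlockPartitions.mp hτ).1.subset
  · refine fun τ hτ => (mem_noSingletonPartitions.mp hτ).1.not_subset_of_disjoint ?_
    exact disjoint_filter.mpr fun x _ hzx hxz => (lt_of_lt_of_le hzx hxz).false

end NoSingleton

section Evaluation

variable {n : ℕ} (β γ : ℂ)

def noSingletonSum (s : Finset (Fin n)) : ℂ :=
  ∑ σ ∈ noSingletonPartitions s, β ^ (#s - 2 * #σ) * γ ^ #σ

def closedBlockSum (s : Finset (Fin n)) : ℂ :=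
  ∑ σ ∈ closedBlockPartitions s, β ^ (#s - 2 * #σ) * γ ^ (#σ - 1)

def openBlockSum (s : Finset (Fin n)) : ℂ :=
  ∑ σ ∈ openBlockPartitions s, β ^ (#s + 1 - 2 * #σ) * γ ^ (#σ - 1)

variable {s : Finset (Fin n)} {a b : Fin n}

theorem closedBlockSum_eq_openBlockSum_erase (hb : b ∈ s) (hbmax : ∀ x ∈ s, x ≤ b)
    (hs : 2 ≤ #s) : closedBlockSum β γ s = openBlockSum β γ (s.erase b) := by
  rw [closedBlockSum, sum_closedBlockPartitions hb hbmax hs fun k => β ^ (#s - 2 * k) * γ ^ (k - 1),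
    openBlockSum, card_erase_of_mem hb, Nat.sub_add_cancel (by omega)]

/-- With `c = 0` these are the weights of `noSingletonSum s`, with `c = 1` those of
`openBlockSum s`. -/
theorem sum_sum_closedBlockPartitions_noSingletonPartitions {c : ℕ} (hc : c ≤ 1) (z : Fin n) :
    ∑ σ₁ ∈ closedBlockPartitions (s.filter (· ≤ z)),
      ∑ σ₂ ∈ noSingletonPartitions (s.filter (z < ·)),
        β ^ (#s + c - 2 * (#σ₁ + #σ₂)) * γ ^ (#σ₁ + #σ₂ - c)
      = β ^ c * γ ^ (1 - c)
        * (closedBlockSum β γ (s.filter (· ≤ z)) * noSingletonSum β γ (s.filter (z < ·))) := by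
  have hcard : #(s.filter (z < ·)) + #(s.filter (· ≤ z)) = #s := by
    rw [← sdiff_filter_le, card_sdiff_add_card_eq_card (filter_subset _ s)]
  rw [closedBlockSum, noSingletonSum, sum_mul_sum, mul_sum]
  refine sum_congr rfl fun σ₁ hσ₁ => ?_
  rw [mul_sum]
  refine sum_congr rfl fun σ₂ hσ₂ => ?_
  obtain ⟨hp₁, -, hns₁, C, hC, -⟩ := mem_closedBlockPartitions.mp hσ₁
  obtain ⟨hp₂, -, hns₂⟩ := mem_noSingletonPartitions.mp hσ₂
  have h₁ := hp₁.two_mul_card_le_of_forall_card_ne_one hns₁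
  have h₂ := hp₂.two_mul_card_le_of_forall_card_ne_one hns₂
  have hpos : 1 ≤ #σ₁ := card_pos.mpr ⟨C, hC⟩
  rw [show #s + c - 2 * (#σ₁ + #σ₂)
      = c + ((#(s.filter (· ≤ z)) - 2 * #σ₁) + (#(s.filter (z < ·)) - 2 * #σ₂)) by omega,
    show #σ₁ + #σ₂ - c = (1 - c) + ((#σ₁ - 1) + #σ₂) by omega]
  simp only [pow_add]
  ring

theorem noSingletonSum_eq (ha : a ∈ s) (hamin : ∀ x ∈ s, a ≤ x) :
    noSingletonSum β γ s = γ * ∑ z ∈ s.erase a,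
      closedBlockSum β γ (s.filter (· ≤ z)) * noSingletonSum β γ (s.filter (z < ·)) := by
  refine (sum_noSingletonPartitions ha hamin fun k => β ^ (#s + 0 - 2 * k) * γ ^ (k - 0)).trans ?_
  rw [mul_sum]
  refine sum_congr rfl fun z _ => ?_
  exact (sum_sum_closedBlockPartitions_noSingletonPartitions β γ zero_le_one z).trans (by simp)

theorem openBlockSum_eq (ha : a ∈ s) (hamin : ∀ x ∈ s, a ≤ x) :
    openBlockSum β γ s = noSingletonSum β γ (s.erase a) + β * ∑ z ∈ s.erase a,
      closedBlockSum β γ (s.filter (· ≤ z)) * noSingletonSum β γ (s.filter (z < ·)) := by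
  rw [openBlockSum, sum_openBlockPartitions ha hamin fun k => β ^ (#s + 1 - 2 * k) * γ ^ (k - 1)]
  congr 1
  · rw [noSingletonSum, card_erase_of_mem ha]
    refine sum_congr rfl fun τ _ => ?_
    rw [Nat.add_sub_cancel, show #s + 1 - 2 * (#τ + 1) = #s - 1 - 2 * #τ by omega]
  · refine (sum_noSingletonPartitions ha hamin fun k => β ^ (#s + 1 - 2 * k) * γ ^ (k - 1)).trans ?_
    rw [mul_sum]
    refine sum_congr rfl fun z _ => ?_
    exact (sum_sum_closedBlockPartitions_noSingletonPartitions β γ le_rfl z).trans (by simp)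

theorem sum_closedBlockSum_mul_noSingletonSum (ha : a ∈ s) (hamin : ∀ x ∈ s, a ≤ x)
    (ih : ∀ t ⊂ s, noSingletonSum β γ t = riordan β γ #t
      ∧ (t.Nonempty → openBlockSum β γ t = motzkin β γ (#t - 1))) :
    ∑ z ∈ s.erase a, closedBlockSum β γ (s.filter (· ≤ z)) * noSingletonSum β γ (s.filter (z < ·))
      = ∑ k ∈ range (#s - 1), motzkin β γ k * riordan β γ (#s - 1 - 1 - k) := by
  have hφ := sum_erase_card_filter_le ha hamin fun j => motzkin β γ (j - 2) * riordan β γ (#s - j)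
  simp only [Nat.add_sub_cancel, show ∀ k, #s - (k + 2) = #s - 1 - 1 - k by omega] at hφ
  rw [← hφ]
  refine sum_congr rfl fun z hz => ?_
  obtain ⟨hza, hzs⟩ := mem_erase.mp hz
  set L := s.filter (· ≤ z)
  have hzL : z ∈ L := mem_filter.mpr ⟨hzs, le_rfl⟩
  have haL : a ∈ L.erase z := mem_erase.mpr ⟨hza.symm, mem_filter.mpr ⟨ha, hamin z hzs⟩⟩
  have hL : 2 ≤ #L := by
    rw [← card_erase_add_one hzL]
    exact Nat.succ_le_succ (card_pos.mpr ⟨a, haL⟩)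
  have hcard : #(s.filter (z < ·)) = #s - #L := by
    rw [← sdiff_filter_le, card_sdiff_of_subset (filter_subset _ s)]
  rw [closedBlockSum_eq_openBlockSum_erase β γ hzL (fun x hx => (mem_filter.mp hx).2) hL,
    (ih _ ((erase_ssubset hzL).trans_subset (filter_subset _ s))).2 ⟨a, haL⟩,
    (ih _ (filter_ssubset.mpr ⟨a, ha, (hamin z hzs).not_gt⟩)).1, hcard, card_erase_of_mem hzL,
    Nat.sub_sub]

theorem noSingletonSum_eq_riordan_and_openBlockSum_eq_motzkin (s : Finset (Fin n)) :
    noSingletonSum β γ s = riordan β γ #s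
      ∧ (s.Nonempty → openBlockSum β γ s = motzkin β γ (#s - 1)) := by
  induction s using Finset.strongInduction with
  | H s ih =>
  rcases s.eq_empty_or_nonempty with rfl | hs
  · simp [noSingletonSum, noSingletonPartitions_empty, riordan]
  set a := s.min' hs
  have ha : a ∈ s := min'_mem s hs
  have hamin : ∀ x ∈ s, a ≤ x := fun x hx => min'_le s x hx
  have hconv := sum_closedBlockSum_mul_noSingletonSum β γ ha hamin ih
  have hE : noSingletonSum β γ s = riordan β γ #s := by
    rw [noSingletonSum_eq β γ ha hamin, hconv, ← riordan_succ, Nat.sub_add_cancel hs.card_pos]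
  refine ⟨hE, fun _ => ?_⟩
  rw [openBlockSum_eq β γ ha hamin, hconv, (ih _ (erase_ssubset ha)).1, card_erase_of_mem ha,
    motzkin_eq_riordan_add]

end Evaluation

section Coefficient

variable {n : ℕ} (α β t γ : ℂ) {s U : Finset (Fin n)} {π S σ : Finset (Finset (Fin n))}

def admissibleRefinements (s : Finset (Fin n)) (π S : Finset (Finset (Fin n))) :
    Finset (Finset (Finset (Fin n))) :=
  univ.filter fun σ => IsPartitionOf s σ ∧ IsNoncrossing σ ∧ Refines σ π
    ∧ (∀ U ∈ π, U ∉ S → ∃ C ∈ σ, ∃ m ∈ U, ∃ M ∈ U, m ∈ C ∧ M ∈ C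
          ∧ (∀ x ∈ U, m ≤ x) ∧ (∀ x ∈ U, x ≤ M))
    ∧ (∀ B ∈ σ, #B = 1 → (B ∈ π ∨ ∃ V ∈ S, ∃ x ∈ B, x ∈ V ∧ ∀ y ∈ V, x ≤ y))

def coefWeight (s : Finset (Fin n)) (π S : Finset (Finset (Fin n))) (k : ℕ) : ℂ :=
  α ^ #((π \ S).filter (#· = 1)) * β ^ (#s + #S + #((π \ S).filter (#· = 1)) - 2 * k)
    * t ^ #((π \ S).filter (2 ≤ #·)) * γ ^ (k - #π)

/-- `Ccoef` with the ground set `univ` replaced by `s`. -/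
def coefOn (s : Finset (Fin n)) (π S : Finset (Finset (Fin n))) : ℂ :=
  ∑ σ ∈ admissibleRefinements s π S, coefWeight α β t γ s π S #σ

theorem mem_admissibleRefinements :
    σ ∈ admissibleRefinements s π S ↔ IsPartitionOf s σ ∧ IsNoncrossing σ ∧ Refines σ π
      ∧ (∀ U ∈ π, U ∉ S → ∃ C ∈ σ, ∃ m ∈ U, ∃ M ∈ U, m ∈ C ∧ M ∈ C
          ∧ (∀ x ∈ U, m ≤ x) ∧ (∀ x ∈ U, x ≤ M))
      ∧ (∀ B ∈ σ, #B = 1 → (B ∈ π ∨ ∃ V ∈ S, ∃ x ∈ B, x ∈ V ∧ ∀ y ∈ V, x ≤ y)) := by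
  simp [admissibleRefinements]

/-- Each singleton of `σ` is the set of minima of a closed singleton block or of an open block. -/
theorem two_mul_card_le_of_mem_admissibleRefinements (hσ : σ ∈ admissibleRefinements s π S) :
    2 * #σ ≤ #s + #S + #((π \ S).filter (#· = 1)) := by
  obtain ⟨hp, -, -, -, hsing⟩ := mem_admissibleRefinements.mp hσ
  let minima : Finset (Fin n) → Finset (Fin n) := fun V => V.filter fun x => ∀ y ∈ V, x ≤ y
  have hminima : ∀ V x, x ∈ V → (∀ y ∈ V, x ≤ y) → minima V = {x} := fun V x hx hxmin =>
    eq_singleton_iff_unique_mem.mpr ⟨mem_filter.mpr ⟨hx, hxmin⟩,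
      fun y hy => le_antisymm ((mem_filter.mp hy).2 x hx) (hxmin y (mem_filter.mp hy).1)⟩
  have hsub : σ.filter (#· = 1) ⊆ ((π \ S).filter (#· = 1) ∪ S).image minima := by
    intro B hB
    obtain ⟨hB, hB1⟩ := mem_filter.mp hB
    obtain ⟨x, rfl⟩ := card_eq_one.mp hB1
    rcases hsing {x} hB hB1 with hπ | ⟨V, hV, y, hy, hyV, hymin⟩
    · refine mem_image.mpr ⟨{x}, ?_, hminima {x} x (mem_singleton_self x) (by simp)⟩
      by_cases hxS : {x} ∈ S
      · exact mem_union_right _ hxS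
      · exact mem_union_left _ (mem_filter.mpr ⟨mem_sdiff.mpr ⟨hπ, hxS⟩, hB1⟩)
    · obtain rfl := mem_singleton.mp hy
      exact mem_image.mpr ⟨V, mem_union_right _ hV, hminima V y hyV hymin⟩
  calc 2 * #σ ≤ #s + #(σ.filter (#· = 1)) := hp.two_mul_card_le
    _ ≤ #s + #(((π \ S).filter (#· = 1) ∪ S).image minima) := by gcongr
    _ ≤ #s + (#((π \ S).filter (#· = 1)) + #S) := by
      gcongr
      exact card_image_le.trans (card_union_le _ _)
    _ = #s + #S + #((π \ S).filter (#· = 1)) := by ring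

theorem card_le_card_of_mem_admissibleRefinements (hπ : IsPartitionOf s π)
    (hσ : σ ∈ admissibleRefinements s π S) : #π ≤ #σ := by
  obtain ⟨hp, -, href, -⟩ := mem_admissibleRefinements.mp hσ
  exact hp.card_le_of_forall_subset hπ href

theorem subset_or_disjoint_of_mem_admissibleRefinements (hπ : IsPartitionOf s (insert U π))
    (hU : U ∉ π) (hσ : σ ∈ admissibleRefinements s (insert U π) S) :
    ∀ B ∈ σ, B ⊆ U ∨ Disjoint B U := by
  intro B hB
  obtain ⟨C, hC, hBC⟩ := (mem_admissibleRefinements.mp hσ).2.2.1 B hB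
  rcases mem_insert.mp hC with rfl | hCπ
  · exact .inl hBC
  · exact .inr ((hπ.disjoint_of_ne hC (mem_insert_self U π)
      (ne_of_mem_of_not_mem hCπ hU)).mono_left hBC)

theorem filter_subset_mem_admissibleRefinements (hπ : IsPartitionOf s (insert U π)) (hU : U ∉ π)
    (hS : S ⊆ insert U π) (hσ : σ ∈ admissibleRefinements s (insert U π) S) :
    σ.filter (· ⊆ U) ∈ admissibleRefinements U {U} (S ∩ {U}) := by
  obtain ⟨hp, hnc, -, hjoin, hsing⟩ := mem_admissibleRefinements.mp hσ
  have hUπ : U ∈ insert U π := mem_insert_self U π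
  have hdich := subset_or_disjoint_of_mem_admissibleRefinements hπ hU hσ
  refine mem_admissibleRefinements.mpr ⟨hp.filter_subset (hπ.subset U hUπ) hdich,
    hnc.mono (filter_subset _ _), fun B hB => ⟨U, mem_singleton_self U, (mem_filter.mp hB).2⟩,
    fun U' hU' hU'S => ?_, fun B hB hB1 => ?_⟩
  · rw [mem_singleton] at hU'
    subst hU'
    obtain ⟨C, hC, m, hm, M, hM, hmC, hMC, hmin, hmax⟩ :=
      hjoin U' hUπ fun h => hU'S (mem_inter.mpr ⟨h, mem_singleton_self U'⟩)
    have hCU := (hdich C hC).resolve_right (not_disjoint_iff.mpr ⟨m, hmC, hm⟩)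
    exact ⟨C, mem_filter.mpr ⟨hC, hCU⟩, m, hm, M, hM, hmC, hMC, hmin, hmax⟩
  · obtain ⟨hB, hBU⟩ := mem_filter.mp hB
    obtain ⟨x, hx⟩ := hp.nonempty B hB
    rcases hsing B hB hB1 with hBπ | ⟨V, hV, y, hyB, hyV, hymin⟩
    · exact .inl (mem_singleton.mpr (hπ.eq_of_mem B hBπ U hUπ x hx (hBU hx)))
    · refine .inr ⟨V, mem_inter.mpr ⟨hV, mem_singleton.mpr ?_⟩, y, hyB, hyV, hymin⟩
      exact hπ.eq_of_mem V (hS hV) U hUπ y hyV (hBU hyB)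

theorem filter_not_subset_mem_admissibleRefinements (hπ : IsPartitionOf s (insert U π))
    (hU : U ∉ π) (hσ : σ ∈ admissibleRefinements s (insert U π) S) :
    σ.filter (¬ · ⊆ U) ∈ admissibleRefinements (s \ U) π (S.erase U) := by
  obtain ⟨hp, hnc, href, hjoin, hsing⟩ := mem_admissibleRefinements.mp hσ
  have hdich := subset_or_disjoint_of_mem_admissibleRefinements hπ hU hσ
  refine mem_admissibleRefinements.mpr ⟨hp.filter_not_subset hdich, hnc.mono (filter_subset _ _),
    fun B hB => ?_, fun U' hU' hU'S => ?_, fun B hB hB1 => ?_⟩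
  · obtain ⟨hB, hBU⟩ := mem_filter.mp hB
    obtain ⟨C, hC, hBC⟩ := href B hB
    rcases mem_insert.mp hC with rfl | hC
    · exact absurd hBC hBU
    · exact ⟨C, hC, hBC⟩
  · have hU'U : U' ≠ U := ne_of_mem_of_not_mem hU' hU
    obtain ⟨C, hC, m, hm, M, hM, hmC, hMC, hmin, hmax⟩ :=
      hjoin U' (mem_insert_of_mem hU') fun h => hU'S (mem_erase.mpr ⟨hU'U, h⟩)
    refine ⟨C, mem_filter.mpr ⟨hC, fun hCU => ?_⟩, m, hm, M, hM, hmC, hMC, hmin, hmax⟩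
    exact disjoint_left.mp (hπ.disjoint_of_ne (mem_insert_of_mem hU') (mem_insert_self U π) hU'U)
      hm (hCU hmC)
  · obtain ⟨hB, hBU⟩ := mem_filter.mp hB
    rcases hsing B hB hB1 with hBπ | ⟨V, hV, y, hyB, hyV, hymin⟩
    · exact .inl ((mem_insert.mp hBπ).resolve_left fun h => hBU h.le)
    · refine .inr ⟨V, mem_erase.mpr ⟨fun hVU => ?_, hV⟩, y, hyB, hyV, hymin⟩
      exact disjoint_left.mp ((hdich B hB).resolve_left hBU) hyB (hVU ▸ hyV)

theorem mem_admissibleRefinements_of_filter (hπ : IsPartitionOf s (insert U π)) (hU : U ∉ π)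
    (hnc : IsNoncrossing (insert U π))
    (h₁ : σ.filter (· ⊆ U) ∈ admissibleRefinements U {U} (S ∩ {U}))
    (h₂ : σ.filter (¬ · ⊆ U) ∈ admissibleRefinements (s \ U) π (S.erase U)) :
    σ ∈ admissibleRefinements s (insert U π) S := by
  obtain ⟨hp₁, hnc₁, -, hjoin₁, hsing₁⟩ := mem_admissibleRefinements.mp h₁
  obtain ⟨hp₂, hnc₂, href₂, hjoin₂, hsing₂⟩ := mem_admissibleRefinements.mp h₂
  have hσ := filter_union_filter_not_eq (· ⊆ U) σ
  refine mem_admissibleRefinements.mpr ⟨.of_filter (hπ.subset U (mem_insert_self U π)) hp₁ hp₂,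
    ?_, fun B hB => ?_, fun U' hU' hU'S => ?_, fun B hB hB1 => ?_⟩
  · rw [← hσ]
    refine hnc₁.union_of_subset_blocks hnc₂ hnc (mem_insert_self U π)
      (fun B hB => (mem_filter.mp hB).2) fun B hB => ?_
    obtain ⟨C, hC, hBC⟩ := href₂ B hB
    exact ⟨C, mem_insert_of_mem hC, ne_of_mem_of_not_mem hC hU, hBC⟩
  · by_cases hBU : B ⊆ U
    · exact ⟨U, mem_insert_self U π, hBU⟩
    · obtain ⟨C, hC, hBC⟩ := href₂ B (mem_filter.mpr ⟨hB, hBU⟩)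
      exact ⟨C, mem_insert_of_mem hC, hBC⟩
  · rcases mem_insert.mp hU' with rfl | hU'
    · obtain ⟨C, hC, hends⟩ :=
        hjoin₁ U' (mem_singleton_self U') fun h => hU'S (mem_inter.mp h).1
      exact ⟨C, (mem_filter.mp hC).1, hends⟩
    · obtain ⟨C, hC, hends⟩ := hjoin₂ U' hU' fun h => hU'S (mem_of_mem_erase h)
      exact ⟨C, (mem_filter.mp hC).1, hends⟩
  · by_cases hBU : B ⊆ U
    · rcases hsing₁ B (mem_filter.mpr ⟨hB, hBU⟩) hB1 with hB' | ⟨V, hV, hmin⟩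
      · exact .inl (mem_singleton.mp hB' ▸ mem_insert_self U π)
      · exact .inr ⟨V, (mem_inter.mp hV).1, hmin⟩
    · rcases hsing₂ B (mem_filter.mpr ⟨hB, hBU⟩) hB1 with hB' | ⟨V, hV, hmin⟩
      · exact .inl (mem_insert_of_mem hB')
      · exact .inr ⟨V, mem_of_mem_erase hV, hmin⟩

/-- The bounds on `k₁` and `k₂` keep the truncated subtractions in the exponents additive. -/
theorem coefWeight_insert (hU : U ∉ π) (hUs : U ⊆ s) {k₁ k₂ : ℕ}
    (h₁ : 2 * k₁ ≤ #U + #(S ∩ {U}) + #(({U} \ (S ∩ {U})).filter (#· = 1))) (hk₁ : 1 ≤ k₁)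
    (h₂ : 2 * k₂ ≤ #(s \ U) + #(S.erase U) + #((π \ S.erase U).filter (#· = 1)))
    (hk₂ : #π ≤ k₂) :
    coefWeight α β t γ s (insert U π) S (k₁ + k₂)
      = coefWeight α β t γ U {U} (S ∩ {U}) k₁ * coefWeight α β t γ (s \ U) π (S.erase U) k₂ := by
  have hsplit : insert U π \ S = ({U} \ (S ∩ {U})) ∪ (π \ S.erase U) := by
    ext B
    by_cases hBU : B = U
    · subst hBU
      simp [hU]
    · simp [hBU]
  have hdisj : Disjoint ({U} \ (S ∩ {U})) (π \ S.erase U) := disjoint_left.mpr fun B hB hB' =>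
    hU (mem_singleton.mp (mem_sdiff.mp hB).1 ▸ (mem_sdiff.mp hB').1)
  have hcount : ∀ (p : Finset (Fin n) → Prop) [DecidablePred p], #((insert U π \ S).filter p)
      = #(({U} \ (S ∩ {U})).filter p) + #((π \ S.erase U).filter p) := fun p _ => by
    rw [hsplit, filter_union, card_union_of_disjoint (disjoint_filter_filter hdisj)]
  have hS : #(S.erase U) + #(S ∩ {U}) = #S := by
    rw [← sdiff_singleton_eq_erase, card_sdiff_add_card_inter]
  have hs : #(s \ U) + #U = #s := card_sdiff_add_card_eq_card hUs
  have hβ : #s + #S + #((insert U π \ S).filter (#· = 1)) - 2 * (k₁ + k₂)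
      = (#U + #(S ∩ {U}) + #(({U} \ (S ∩ {U})).filter (#· = 1)) - 2 * k₁)
        + (#(s \ U) + #(S.erase U) + #((π \ S.erase U).filter (#· = 1)) - 2 * k₂) := by
    rw [hcount]
    omega
  have hγ : k₁ + k₂ - #(insert U π) = (k₁ - #({U} : Finset (Finset (Fin n)))) + (k₂ - #π) := by
    rw [card_insert_of_notMem hU, card_singleton]
    omega
  simp only [coefWeight]
  rw [hβ, hγ]
  simp only [hcount, pow_add]
  ring

theorem coefOn_insert (hπ : IsPartitionOf s (insert U π)) (hU : U ∉ π)
    (hnc : IsNoncrossing (insert U π)) (hS : S ⊆ insert U π) :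
    coefOn α β t γ s (insert U π) S
      = coefOn α β t γ U {U} (S ∩ {U}) * coefOn α β t γ (s \ U) π (S.erase U) := by
  have hUs : U ⊆ s := hπ.subset U (mem_insert_self U π)
  have hπ' : IsPartitionOf (s \ U) π := by
    simpa [erase_insert hU] using hπ.erase (mem_insert_self U π)
  rw [coefOn, sum_card_eq_sum_sum_of_mem_iff (· ⊆ U) ?_ ?_
    (fun σ => ⟨fun hσ => ⟨filter_subset_mem_admissibleRefinements hπ hU hS hσ,
      filter_not_subset_mem_admissibleRefinements hπ hU hσ⟩,
      fun h => mem_admissibleRefinements_of_filter hπ hU hnc h.1 h.2⟩),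
    coefOn, coefOn, sum_mul_sum]
  · refine sum_congr rfl fun σ₁ hσ₁ => sum_congr rfl fun σ₂ hσ₂ =>
      coefWeight_insert α β t γ hU hUs (two_mul_card_le_of_mem_admissibleRefinements hσ₁) ?_
      (two_mul_card_le_of_mem_admissibleRefinements hσ₂)
      (card_le_card_of_mem_admissibleRefinements hπ' hσ₂)
    simpa using card_le_card_of_mem_admissibleRefinements
      (.self (hπ.nonempty U (mem_insert_self U π))) hσ₁
  · exact fun τ hτ => (mem_admissibleRefinements.mp hτ).1.subset
  · exact fun τ hτ => (mem_admissibleRefinements.mp hτ).1.not_subset_of_disjoint sdiff_disjoint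

theorem admissibleRefinements_self_of_mem :
    admissibleRefinements U {U} {U} = openBlockPartitions U := by
  ext σ
  simp only [mem_admissibleRefinements, mem_openBlockPartitions, mem_singleton]
  refine ⟨fun ⟨hp, hnc, _, _, hsing⟩ => ⟨hp, hnc, fun B hB hB1 => ?_⟩,
    fun ⟨hp, hnc, hsing⟩ => ⟨hp, hnc, fun B hB => ⟨U, mem_singleton_self U, hp.subset B hB⟩,
      fun U' hU' hU'S => absurd hU' hU'S, fun B hB hB1 => ?_⟩⟩
  · rcases hsing B hB hB1 with rfl | ⟨V, rfl, x, hxB, -, hxmin⟩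
    · obtain ⟨x, rfl⟩ := card_eq_one.mp hB1
      exact ⟨x, mem_singleton_self x, fun y hy => (mem_singleton.mp hy).ge⟩
    · exact ⟨x, hxB, hxmin⟩
  · obtain ⟨x, hxB, hxmin⟩ := hsing B hB hB1
    exact .inr ⟨U, rfl, x, hxB, hp.subset B hB hxB, hxmin⟩

theorem admissibleRefinements_self_of_card_ne_one (hU : #U ≠ 1) :
    admissibleRefinements U {U} ∅ = closedBlockPartitions U := by
  ext σ
  simp only [mem_admissibleRefinements, mem_closedBlockPartitions, mem_singleton, notMem_empty]
  refine ⟨fun ⟨hp, hnc, _, hjoin, hsing⟩ => ⟨hp, hnc, fun B hB hB1 => ?_, hjoin U rfl not_false⟩,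
    fun ⟨hp, hnc, hns, hends⟩ => ⟨hp, hnc, fun B hB => ⟨U, mem_singleton_self U, hp.subset B hB⟩,
      fun U' hU' _ => hU' ▸ hends, fun B hB hB1 => absurd hB1 (hns B hB)⟩⟩
  rcases hsing B hB hB1 with rfl | ⟨V, hV, -⟩
  · exact hU hB1
  · exact hV

theorem admissibleRefinements_singleton_self (x : Fin n) :
    admissibleRefinements {x} {{x}} ∅ = {{{x}}} := by
  ext σ
  rw [mem_admissibleRefinements, mem_singleton]
  refine ⟨fun h => isPartitionOf_singleton_iff.mp h.1, ?_⟩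
  rintro rfl
  refine ⟨.self (singleton_nonempty x), isNoncrossing_singleton _,
    fun B hB => ⟨B, hB, subset_rfl⟩, fun U hU _ => ?_, fun B hB _ => .inl hB⟩
  rw [mem_singleton] at hU
  subst hU
  exact ⟨{x}, mem_singleton_self _, x, mem_singleton_self x, x, mem_singleton_self x,
    mem_singleton_self x, mem_singleton_self x, by simp, by simp⟩

theorem coefOn_self_of_mem (hU : U.Nonempty) :
    coefOn α β t γ U {U} {U} = motzkin β γ (#U - 1) := by
  rw [← (noSingletonSum_eq_riordan_and_openBlockSum_eq_motzkin β γ U).2 hU, coefOn,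
    admissibleRefinements_self_of_mem, openBlockSum]
  simp [coefWeight]

theorem coefOn_self_of_notMem (hU : U.Nonempty) : coefOn α β t γ U {U} ∅ = kappa α β t γ #U := by
  by_cases hU1 : #U = 1
  · obtain ⟨x, rfl⟩ := card_eq_one.mp hU1
    simp [coefOn, admissibleRefinements_singleton_self, coefWeight, kappa, filter_singleton]
  have hU2 : 2 ≤ #U := by
    have := hU.card_pos
    omega
  have hM : motzkin β γ (#U - 2) = closedBlockSum β γ U := by
    rw [closedBlockSum_eq_openBlockSum_erase β γ (max'_mem U hU) (fun x hx => le_max' U x hx) hU2,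
      (noSingletonSum_eq_riordan_and_openBlockSum_eq_motzkin β γ _).2
        ⟨U.min' hU, mem_erase.mpr ⟨(min'_lt_max'_of_card U hU2).ne, min'_mem U hU⟩⟩,
      card_erase_of_mem (max'_mem U hU), Nat.sub_sub]
  rw [coefOn, admissibleRefinements_self_of_card_ne_one hU1, kappa, if_neg hU1, hM, closedBlockSum,
    mul_sum]
  refine sum_congr rfl fun σ _ => ?_
  simp [coefWeight, filter_singleton, hU1, hU2]
  ring

theorem coefOn_empty : coefOn α β t γ (∅ : Finset (Fin n)) ∅ ∅ = 1 := by
  have h : admissibleRefinements (∅ : Finset (Fin n)) ∅ ∅ = {∅} := by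
    ext σ
    simp only [mem_admissibleRefinements, isPartitionOf_empty_iff, mem_singleton]
    refine ⟨fun h => h.1, ?_⟩
    rintro rfl
    exact ⟨rfl, fun ⟨_, hU, _⟩ => notMem_empty _ hU, by simp [Refines], by simp, by simp⟩
  simp [coefOn, h, coefWeight]

theorem coefOn_eq_prod (hπ : IsPartitionOf s π) (hnc : IsNoncrossing π) (hS : S ⊆ π) :
    coefOn α β t γ s π S
      = ∏ U ∈ π, if U ∈ S then motzkin β γ (#U - 1) else kappa α β t γ #U := by
  induction π using Finset.induction_on generalizing s S with
  | empty =>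
    obtain rfl := subset_empty.mp hS
    obtain rfl := hπ.eq_empty
    rw [coefOn_empty, prod_empty]
  | insert U π hU ih =>
    have hUne : U.Nonempty := hπ.nonempty U (mem_insert_self U π)
    have hSU : S.erase U ⊆ π := fun V hV =>
      (mem_insert.mp (hS (mem_of_mem_erase hV))).resolve_left (ne_of_mem_erase hV)
    rw [coefOn_insert α β t γ hπ hU hnc hS, prod_insert hU,
      ih (by simpa [erase_insert hU] using hπ.erase (mem_insert_self U π))
        (hnc.mono (subset_insert U π)) hSU]
    congr 1
    · by_cases hUS : U ∈ S
      · rw [inter_singleton_of_mem hUS, coefOn_self_of_mem α β t γ hUne, if_pos hUS]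
      · rw [inter_singleton_of_notMem hUS, coefOn_self_of_notMem α β t γ hUne, if_neg hUS]
    · refine prod_congr rfl fun V hV => ?_
      simp [ne_of_mem_of_not_mem hV hU]

end Coefficient

theorem isPartitionOf_univ_iff {n : ℕ} {σ : Finset (Finset (Fin n))} :
    IsPartitionOf univ σ ↔ IsPartition σ := by
  refine ⟨fun h => ⟨h.nonempty, fun x => ?_⟩, fun h => ⟨h.1, fun B _ => subset_univ B,
    fun x _ => (h.2 x).exists, fun B hB C hC x hxB hxC => (h.2 x).unique ⟨hB, hxB⟩ ⟨hC, hxC⟩⟩⟩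
  obtain ⟨B, hB, hxB⟩ := h.exists_mem x (mem_univ x)
  exact ⟨B, ⟨hB, hxB⟩, fun C ⟨hC, hxC⟩ => h.eq_of_mem C hC B hB x hxC hxB⟩

theorem Ccoef_eq_coefOn {n : ℕ} (α β t γ : ℂ) (π S : Finset (Finset (Fin n))) :
    Ccoef α β t γ π S = coefOn α β t γ univ π S := by
  simp only [Ccoef, coefOn, admissibleRefinements, coefWeight, isPartitionOf_univ_iff, card_univ,
    Fintype.card_fin]

theorem stmt15_general (n : ℕ) (π S : Finset (Finset (Fin n)))
    (hpart : IsPartition π) (hnc : IsNoncrossing π) (hS : S ⊆ π) (α β t γ : ℂ) :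
    Ccoef α β t γ π S
      = (∏ U ∈ π \ S, kappa α β t γ U.card) * ∏ V ∈ S, motzkin β γ (V.card - 1) := by
  rw [Ccoef_eq_coefOn, coefOn_eq_prod α β t γ (isPartitionOf_univ_iff.mpr hpart) hnc hS, prod_ite,
    filter_mem_eq_inter, inter_eq_right.mpr hS, filter_notMem_eq_sdiff, mul_comm]

theorem stmt15 (n : ℕ) (hn : 1 ≤ n) (π S : Finset (Finset (Fin n)))
    (hpart : IsPartition π) (hnc : IsNoncrossing π) (hS : S ⊆ π)
    (houter : ∀ B ∈ S, IsOuter π B) (α β t γ : ℂ) :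
    Ccoef α β t γ π S
      = (∏ U ∈ π \ S, kappa α β t γ U.card) * ∏ V ∈ S, motzkin β γ (V.card - 1) :=
  stmt15_general n π S hpart hnc hS α β t γ
end
end

section
/- For every n ≥ 1, the number of pairs (π,S), where π is a non-crossing partition of {1,…,n} and S is a set of outer blocks of π, equals the central binomial coefficient C(2n,n). -/
/-!
Write `a` for the least element of the ground set and `M` for the largest element of the block
of `a`. By non-crossingness every block lies either within `[a, M]` or entirely after `M`.
Deleting `a` from the blocks of the first kind leaves a non-crossing partition of `(a, M]`,
and the blocks of the second kind form one of the elements after `M`; adding `a` to the block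
of `M` glues the two back together, so for each `M` this is a bijection. The outer blocks are
the block of `a` together with the outer blocks of the part after `M`. A pair `(π, S)` is a
choice of `π` and of a subset of its outer blocks, so the number `W n` of pairs satisfies
`W (n + 1) = ∑_{i + j = n} catalan i * 2 * W j`, and with weight `1` in place of `2` the same
recursion gives the Catalan numbers. The central binomial coefficients satisfy this recursion
too: from `centralBinom j = (j + 1) * catalan j` and the symmetry `i ↔ j`,
`∑_{i + j = n} 2 * catalan i * centralBinom j = (n + 2) * catalan (n + 1)`, which is
`centralBinom (n + 1)`.
-/

open Finset
open scoped Classical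

namespace NoncrossingPartition

variable {α : Type*}

structure IsPartitionOf (s : Finset α) (P : Finset (Finset α)) : Prop where
  nonempty : ∀ B ∈ P, B.Nonempty
  subset : ∀ B ∈ P, B ⊆ s
  exists_mem : ∀ x ∈ s, ∃ B ∈ P, x ∈ B
  eq_of_mem : ∀ {B C x}, B ∈ P → C ∈ P → x ∈ B → x ∈ C → B = C

section Partition

variable {s t : Finset α} {P Q : Finset (Finset α)} {a x : α} {B C : Finset α}

theorem IsPartitionOf.filter (hP : IsPartitionOf s P) (q : α → Prop) [DecidablePred q]
    (hq : ∀ B ∈ P, (∀ x ∈ B, q x) ∨ ∀ x ∈ B, ¬ q x) :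
    IsPartitionOf (s.filter q) (P.filter fun B => ∀ x ∈ B, q x) where
  nonempty B hB := hP.nonempty B (mem_filter.1 hB).1
  subset B hB x hx := mem_filter.2 ⟨hP.subset B (mem_filter.1 hB).1 hx, (mem_filter.1 hB).2 x hx⟩
  exists_mem x hx := by
    obtain ⟨hxs, hqx⟩ := mem_filter.1 hx
    obtain ⟨B, hB, hxB⟩ := hP.exists_mem x hxs
    refine ⟨B, mem_filter.2 ⟨hB, ?_⟩, hxB⟩
    exact (hq B hB).resolve_right fun h => h x hxB hqx
  eq_of_mem hB hC := hP.eq_of_mem (mem_filter.1 hB).1 (mem_filter.1 hC).1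

variable [DecidableEq α]

def blockOf (P : Finset (Finset α)) (x : α) : Finset α := (P.filter (x ∈ ·)).sup id

theorem IsPartitionOf.blockOf_eq (hP : IsPartitionOf s P) (hB : B ∈ P) (hx : x ∈ B) :
    blockOf P x = B := by
  have : P.filter (x ∈ ·) = {B} := by
    ext C
    simp only [mem_filter, mem_singleton]
    exact ⟨fun ⟨hC, hxC⟩ => hP.eq_of_mem hC hB hxC hx, fun h => h ▸ ⟨hB, hx⟩⟩
  simp [blockOf, this]

theorem blockOf_eq_empty (h : ∀ B ∈ P, x ∉ B) : blockOf P x = ∅ := by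
  simp [blockOf, filter_false_of_mem h]

theorem IsPartitionOf.blockOf_mem (hP : IsPartitionOf s P) (hx : x ∈ s) : blockOf P x ∈ P := by
  obtain ⟨B, hB, hxB⟩ := hP.exists_mem x hx
  rwa [hP.blockOf_eq hB hxB]

theorem IsPartitionOf.mem_blockOf (hP : IsPartitionOf s P) (hx : x ∈ s) : x ∈ blockOf P x := by
  obtain ⟨B, hB, hxB⟩ := hP.exists_mem x hx
  rwa [hP.blockOf_eq hB hxB]

theorem IsPartitionOf.blockOf_eq_empty_or_mem (hP : IsPartitionOf s P) (x : α) :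
    blockOf P x = ∅ ∨ blockOf P x ∈ P := by
  by_cases h : ∃ B ∈ P, x ∈ B
  · obtain ⟨B, hB, hxB⟩ := h
    exact .inr (hP.blockOf_eq hB hxB ▸ hB)
  · push Not at h
    exact .inl (blockOf_eq_empty h)

theorem IsPartitionOf.union (hP : IsPartitionOf s P) (hQ : IsPartitionOf t Q)
    (hst : Disjoint s t) : IsPartitionOf (s ∪ t) (P ∪ Q) where
  nonempty B hB := (mem_union.1 hB).elim (hP.nonempty B) (hQ.nonempty B)
  subset B hB := (mem_union.1 hB).elim (fun h => (hP.subset B h).trans subset_union_left)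
    (fun h => (hQ.subset B h).trans subset_union_right)
  exists_mem x hx := (mem_union.1 hx).elim
    (fun h => (hP.exists_mem x h).imp fun B ⟨hB, hxB⟩ => ⟨mem_union_left _ hB, hxB⟩)
    (fun h => (hQ.exists_mem x h).imp fun B ⟨hB, hxB⟩ => ⟨mem_union_right _ hB, hxB⟩)
  eq_of_mem {B C x} hB hC hxB hxC := by
    have hdisj : ∀ {B C}, B ∈ P → C ∈ Q → x ∈ B → x ∉ C := fun hB hC hxB hxC =>
      disjoint_left.1 hst (hP.subset _ hB hxB) (hQ.subset _ hC hxC)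
    rcases mem_union.1 hB with hB | hB <;> rcases mem_union.1 hC with hC | hC
    · exact hP.eq_of_mem hB hC hxB hxC
    · exact (hdisj hB hC hxB hxC).elim
    · exact (hdisj hC hB hxC hxB).elim
    · exact hQ.eq_of_mem hB hC hxB hxC

def eraseFromBlocks (a : α) (P : Finset (Finset α)) : Finset (Finset α) :=
  (P.image (·.erase a)).erase ∅

-- With `C = ∅` this adds the singleton block `{a}`.
def insertIntoBlock (a : α) (C : Finset α) (Q : Finset (Finset α)) : Finset (Finset α) :=
  insert (insert a C) (Q.erase C)

theorem mem_eraseFromBlocks :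
    B ∈ eraseFromBlocks a P ↔ B.Nonempty ∧ ∃ C ∈ P, C.erase a = B := by
  simp [eraseFromBlocks, nonempty_iff_ne_empty]

theorem mem_insertIntoBlock :
    B ∈ insertIntoBlock a C Q ↔ B = insert a C ∨ B ≠ C ∧ B ∈ Q := by
  simp [insertIntoBlock]

theorem IsPartitionOf.eraseFromBlocks (hP : IsPartitionOf s P) (a : α) :
    IsPartitionOf (s.erase a) (eraseFromBlocks a P) where
  nonempty B hB := (mem_eraseFromBlocks.1 hB).1
  subset B hB := by
    obtain ⟨-, C, hC, rfl⟩ := mem_eraseFromBlocks.1 hB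
    exact erase_subset_erase a (hP.subset C hC)
  exists_mem x hx := by
    obtain ⟨hxa, hxs⟩ := mem_erase.1 hx
    obtain ⟨B, hB, hxB⟩ := hP.exists_mem x hxs
    have hxB' : x ∈ B.erase a := mem_erase.2 ⟨hxa, hxB⟩
    exact ⟨B.erase a, mem_eraseFromBlocks.2 ⟨⟨x, hxB'⟩, B, hB, rfl⟩, hxB'⟩
  eq_of_mem hB hC hxB hxC := by
    obtain ⟨-, B', hB', rfl⟩ := mem_eraseFromBlocks.1 hB
    obtain ⟨-, C', hC', rfl⟩ := mem_eraseFromBlocks.1 hC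
    rw [hP.eq_of_mem hB' hC' (mem_of_mem_erase hxB) (mem_of_mem_erase hxC)]

theorem IsPartitionOf.insertIntoBlock (hQ : IsPartitionOf s Q) (ha : a ∉ s)
    (hC : C = ∅ ∨ C ∈ Q) : IsPartitionOf (insert a s) (insertIntoBlock a C Q) where
  nonempty B hB := by
    rcases mem_insertIntoBlock.1 hB with rfl | ⟨-, hB⟩
    exacts [insert_nonempty a C, hQ.nonempty B hB]
  subset B hB := by
    rcases mem_insertIntoBlock.1 hB with rfl | ⟨-, hB⟩
    · rcases hC with rfl | hC
      · simp
      · exact insert_subset_insert a (hQ.subset C hC)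
    · exact (hQ.subset B hB).trans (subset_insert a s)
  exists_mem x hx := by
    rcases mem_insert.1 hx with rfl | hx
    · exact ⟨_, mem_insert_self _ _, mem_insert_self x C⟩
    obtain ⟨B, hB, hxB⟩ := hQ.exists_mem x hx
    by_cases hBC : B = C
    · exact ⟨_, mem_insert_self _ _, mem_insert_of_mem (hBC ▸ hxB)⟩
    · exact ⟨B, mem_insertIntoBlock.2 (.inr ⟨hBC, hB⟩), hxB⟩
  eq_of_mem {B D x} hB hD hxB hxD := by
    have key : ∀ {B}, B ∈ Q → B ≠ C → x ∈ B → x ∉ insert a C := fun hB hBC hxB hx => by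
      rcases mem_insert.1 hx with hxa | hxC
      · exact ha (hxa ▸ hQ.subset _ hB hxB)
      · rcases hC with rfl | hC
        · simp at hxC
        · exact hBC (hQ.eq_of_mem hB hC hxB hxC)
    rcases mem_insertIntoBlock.1 hB with rfl | ⟨hBC, hB⟩ <;>
      rcases mem_insertIntoBlock.1 hD with rfl | ⟨hDC, hD⟩
    · rfl
    · exact (key hD hDC hxD hxB).elim
    · exact (key hB hBC hxB hxD).elim
    · exact hQ.eq_of_mem hB hD hxB hxD

theorem eraseFromBlocks_insertIntoBlock (hQ : IsPartitionOf s Q) (ha : a ∉ s)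
    (hC : C = ∅ ∨ C ∈ Q) : eraseFromBlocks a (insertIntoBlock a C Q) = Q := by
  have haC : a ∉ C := by
    rcases hC with rfl | hC
    exacts [notMem_empty a, fun h => ha (hQ.subset C hC h)]
  have herase : ∀ B ∈ Q, B.erase a = B := fun B hB =>
    erase_eq_of_notMem fun h => ha (hQ.subset B hB h)
  ext B
  rw [mem_eraseFromBlocks]
  constructor
  · rintro ⟨hne, D, hD, rfl⟩
    rcases mem_insertIntoBlock.1 hD with hDC | ⟨-, hD⟩
    · rw [hDC, erase_insert haC] at hne ⊢
      exact hC.resolve_left hne.ne_empty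
    · rwa [herase D hD]
  · intro hB
    refine ⟨hQ.nonempty B hB, ?_⟩
    by_cases hBC : B = C
    · exact ⟨insert a C, mem_insertIntoBlock.2 (.inl rfl), by rw [erase_insert haC, hBC]⟩
    · exact ⟨B, mem_insertIntoBlock.2 (.inr ⟨hBC, hB⟩), herase B hB⟩

theorem insertIntoBlock_eraseFromBlocks (hP : IsPartitionOf s P) (ha : a ∈ s) :
    insertIntoBlock a ((blockOf P a).erase a) (eraseFromBlocks a P) = P := by
  have hB₀ := hP.blockOf_mem ha
  have haB₀ := hP.mem_blockOf ha
  have herase : ∀ B ∈ P, B ≠ blockOf P a → B.erase a = B := fun B hB hne =>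
    erase_eq_of_notMem fun h => hne (hP.eq_of_mem hB hB₀ h haB₀)
  ext B
  rw [mem_insertIntoBlock, insert_erase haB₀, mem_eraseFromBlocks]
  constructor
  · rintro (rfl | ⟨hne, -, D, hD, rfl⟩)
    · exact hB₀
    · by_cases hDB₀ : D = blockOf P a
      · exact absurd (hDB₀ ▸ rfl) hne
      · rwa [herase D hD hDB₀]
  · intro hB
    by_cases hBB₀ : B = blockOf P a
    · exact .inl hBB₀
    refine .inr ⟨fun h => hBB₀ ?_, hP.nonempty B hB, B, hB, herase B hB hBB₀⟩
    obtain ⟨y, hy⟩ := hP.nonempty B hB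
    exact hP.eq_of_mem hB hB₀ hy (mem_of_mem_erase (h ▸ hy))

end Partition

section Order

variable [LinearOrder α] {s : Finset α} {P Q R : Finset (Finset α)} {a : α} {C U V : Finset α}

-- `IsNoncrossing` and `IsOuter` over an arbitrary linear order; on `Fin n` they agree by `rfl`.
def Noncrossing (P : Finset (Finset α)) : Prop :=
  ¬ ∃ U ∈ P, ∃ V ∈ P, U ≠ V ∧ ∃ i ∈ U, ∃ k ∈ U, ∃ j ∈ V, ∃ l ∈ V, i < j ∧ j < k ∧ k < l

def IsOuterBlock (P : Finset (Finset α)) (V : Finset α) : Prop :=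
  ¬ ∃ U ∈ P, U ≠ V ∧ ∃ i ∈ U, ∃ j ∈ U, ∀ x ∈ V, i < x ∧ x < j

noncomputable def outerBlocks (P : Finset (Finset α)) : Finset (Finset α) :=
  P.filter (IsOuterBlock P)

noncomputable def ncPartitions (s : Finset α) : Finset (Finset (Finset α)) :=
  s.powerset.powerset.filter fun P => IsPartitionOf s P ∧ Noncrossing P

theorem mem_ncPartitions : P ∈ ncPartitions s ↔ IsPartitionOf s P ∧ Noncrossing P := by
  simp only [ncPartitions, mem_filter, mem_powerset, and_iff_right_iff_imp]
  exact fun ⟨hP, _⟩ B hB => mem_powerset.2 (hP.subset B hB)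

theorem Noncrossing.mono (hP : Noncrossing P) (hQP : Q ⊆ P) : Noncrossing Q :=
  fun ⟨U, hU, V, hV, h⟩ => hP ⟨U, hQP hU, V, hQP hV, h⟩

theorem Noncrossing.eraseFromBlocks (hP : Noncrossing P) (a : α) :
    Noncrossing (eraseFromBlocks a P) := by
  rintro ⟨U, hU, V, hV, hUV, i, hi, k, hk, j, hj, l, hl, hijkl⟩
  obtain ⟨-, U', hU', rfl⟩ := mem_eraseFromBlocks.1 hU
  obtain ⟨-, V', hV', rfl⟩ := mem_eraseFromBlocks.1 hV
  exact hP ⟨U', hU', V', hV', fun h => hUV (h ▸ rfl), i, mem_of_mem_erase hi,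
    k, mem_of_mem_erase hk, j, mem_of_mem_erase hj, l, mem_of_mem_erase hl, hijkl⟩

theorem Noncrossing.union_of_lt (hQ : Noncrossing Q) (hR : Noncrossing R)
    (hQR : ∀ U ∈ Q, ∀ V ∈ R, ∀ x ∈ U, ∀ y ∈ V, x < y) : Noncrossing (Q ∪ R) := by
  rintro ⟨U, hU, V, hV, hUV, i, hi, k, hk, j, hj, l, hl, hij, hjk, hkl⟩
  rcases mem_union.1 hU with hU | hU <;> rcases mem_union.1 hV with hV | hV
  · exact hQ ⟨U, hU, V, hV, hUV, i, hi, k, hk, j, hj, l, hl, hij, hjk, hkl⟩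
  · exact (hQR U hU V hV k hk j hj).not_gt hjk
  · exact (hQR V hV U hU j hj i hi).not_gt hij
  · exact hR ⟨U, hU, V, hV, hUV, i, hi, k, hk, j, hj, l, hl, hij, hjk, hkl⟩

theorem Noncrossing.insertIntoBlock (hQ : Noncrossing Q) (hC : C = ∅ ∨ C ∈ Q)
    (ha : ∀ B ∈ Q, ∀ x ∈ B, a < x) (hmax : ∀ B ∈ Q, B ≠ C → ∃ m ∈ C, ∀ x ∈ B, x < m) :
    Noncrossing (insertIntoBlock a C Q) := by
  have above : ∀ {B x y}, B ∈ Q → x ∈ B → x < y → y ∈ insert a C → y ∈ C ∧ C ∈ Q := by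
    intro B x y hB hx hxy hy
    have hyC : y ∈ C := (mem_insert.1 hy).resolve_left ((ha B hB x hx).trans hxy).ne'
    exact ⟨hyC, hC.resolve_left (ne_empty_of_mem hyC)⟩
  rintro ⟨U, hU, V, hV, hUV, i, hi, k, hk, j, hj, l, hl, hij, hjk, hkl⟩
  rcases mem_insertIntoBlock.1 hU with rfl | ⟨hUC, hU⟩ <;>
    rcases mem_insertIntoBlock.1 hV with rfl | ⟨hVC, hV⟩
  · exact hUV rfl
  · obtain ⟨hkC, hCQ⟩ := above hV hj hjk hk
    obtain ⟨m, hm, hlm⟩ := hmax V hV hVC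
    exact hQ ⟨V, hV, C, hCQ, hVC, j, hj, l, hl, k, hkC, m, hm, hjk, hkl, hlm l hl⟩
  · obtain ⟨hjC, hCQ⟩ := above hU hi hij hj
    have hlC := (above hU hi (hij.trans (hjk.trans hkl)) hl).1
    exact hQ ⟨U, hU, C, hCQ, hUC, i, hi, k, hk, j, hjC, l, hlC, hij, hjk, hkl⟩
  · exact hQ ⟨U, hU, V, hV, hUV, i, hi, k, hk, j, hj, l, hl, hij, hjk, hkl⟩

theorem Noncrossing.forall_lt_or_forall_gt (hP : Noncrossing P) (hU : U ∈ P) (hV : V ∈ P)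
    (hUV : U ≠ V) {i k : α} (hi : i ∈ U) (hk : k ∈ U) (hVik : ∀ x ∈ V, i < x ∧ x ≠ k) :
    (∀ x ∈ V, x < k) ∨ ∀ x ∈ V, k < x := by
  by_contra! h
  obtain ⟨⟨x, hx, hkx⟩, ⟨y, hy, hyk⟩⟩ := h
  exact hP ⟨U, hU, V, hV, hUV, i, hi, k, hk, y, hy, x, hx, (hVik y hy).1,
    lt_of_le_of_ne hyk (hVik y hy).2, lt_of_le_of_ne hkx (hVik x hx).2.symm⟩

theorem isOuterBlock_of_forall_le (haV : a ∈ V) (ha : ∀ U ∈ P, ∀ x ∈ U, a ≤ x) :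
    IsOuterBlock P V :=
  fun ⟨U, hU, _, i, hi, _, _, h⟩ => (h a haV).1.not_ge (ha U hU i hi)

theorem isOuterBlock_union_iff (hV : V.Nonempty) (hQV : ∀ U ∈ Q, ∀ x ∈ U, ∀ y ∈ V, x < y) :
    IsOuterBlock (Q ∪ R) V ↔ IsOuterBlock R V := by
  refine ⟨fun h ⟨U, hU, hUV⟩ => h ⟨U, mem_union_right _ hU, hUV⟩, ?_⟩
  rintro h ⟨U, hU, hUV, i, hi, j, hj, hij⟩
  rcases mem_union.1 hU with hU | hU
  · obtain ⟨y, hy⟩ := hV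
    exact (hQV U hU j hj y hy).not_gt (hij y hy).2
  · exact h ⟨U, hU, hUV, i, hi, j, hj, hij⟩

theorem subset_outerBlocks_iff {S : Finset (Finset α)} :
    S ⊆ outerBlocks P ↔ S ⊆ P ∧ ∀ B ∈ S, IsOuterBlock P B :=
  ⟨fun h => ⟨h.trans (filter_subset _ _), fun _ hB => (mem_filter.1 (h hB)).2⟩,
    fun ⟨hSP, hS⟩ _ hB => mem_filter.2 ⟨hSP hB, hS _ hB⟩⟩

end Order

section Decomposition

variable [LinearOrder α] {s : Finset α} {P Q R : Finset (Finset α)} {B : Finset α} {a M : α}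

-- Inserting `a` only makes `max'` total: in a partition `a` already lies in its block.
def blockMax (P : Finset (Finset α)) (a : α) : α :=
  (insert a (blockOf P a)).max' (insert_nonempty a _)

def nestedPart (a M : α) (P : Finset (Finset α)) : Finset (Finset α) :=
  eraseFromBlocks a (P.filter fun B => ∀ x ∈ B, x ≤ M)

def rightPart (M : α) (P : Finset (Finset α)) : Finset (Finset α) :=
  P.filter fun B => ∀ x ∈ B, M < x

def join (a M : α) (Q R : Finset (Finset α)) : Finset (Finset α) :=
  insertIntoBlock a (blockOf Q M) Q ∪ R

theorem le_of_mem_insert_of_forall_lt {x : α} (ha : ∀ x ∈ s, a < x) (hx : x ∈ insert a s) :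
    a ≤ x :=
  (mem_insert.1 hx).elim (fun h => h.ge) fun h => (ha x h).le

theorem IsPartitionOf.blockMax_mem (hP : IsPartitionOf s P) (ha : a ∈ s) :
    blockMax P a ∈ blockOf P a := by
  refine (mem_insert.1 (max'_mem _ _)).elim (fun h => ?_) id
  rw [blockMax, h]
  exact hP.mem_blockOf ha

theorem le_blockMax {x : α} (hx : x ∈ blockOf P a) : x ≤ blockMax P a :=
  le_max' _ x (mem_insert_of_mem hx)

theorem Noncrossing.forall_le_or_forall_gt_blockMax (hP : IsPartitionOf (insert a s) P)
    (hNC : Noncrossing P) (ha : ∀ x ∈ s, a < x) (hB : B ∈ P) :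
    (∀ x ∈ B, x ≤ blockMax P a) ∨ ∀ x ∈ B, blockMax P a < x := by
  have haB₀ := hP.mem_blockOf (mem_insert_self a s)
  by_cases hBB₀ : blockOf P a = B
  · exact .inl fun x hx => le_blockMax (hBB₀ ▸ hx)
  have hnot : ∀ {y x}, y ∈ blockOf P a → x ∈ B → x ≠ y := fun hy hx h =>
    hBB₀ (hP.eq_of_mem (hP.blockOf_mem (mem_insert_self a s)) hB hy (h ▸ hx))
  refine (hNC.forall_lt_or_forall_gt (hP.blockOf_mem (mem_insert_self a s)) hB hBB₀ haB₀
    (hP.blockMax_mem (mem_insert_self a s)) fun x hx => ⟨?_, hnot (hP.blockMax_mem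
    (mem_insert_self a s)) hx⟩).imp_left fun h x hx => (h x hx).le
  exact lt_of_le_of_ne (le_of_mem_insert_of_forall_lt ha (hP.subset B hB hx)) (hnot haB₀ hx).symm

theorem IsPartitionOf.filter_le_blockMax (hP : IsPartitionOf (insert a s) P)
    (hNC : Noncrossing P) (ha : ∀ x ∈ s, a < x) :
    IsPartitionOf (insert a (s.filter (· ≤ blockMax P a)))
      (P.filter fun B => ∀ x ∈ B, x ≤ blockMax P a) := by
  have := hP.filter (· ≤ blockMax P a) fun B hB =>
    (hNC.forall_le_or_forall_gt_blockMax hP ha hB).imp_right fun h x hx => (h x hx).not_ge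
  rwa [filter_insert, if_pos (le_blockMax (hP.mem_blockOf (mem_insert_self a s)))] at this

theorem IsPartitionOf.nestedPart (hP : IsPartitionOf (insert a s) P) (hNC : Noncrossing P)
    (ha : ∀ x ∈ s, a < x) :
    IsPartitionOf (s.filter (· ≤ blockMax P a)) (nestedPart a (blockMax P a) P) := by
  have := (hP.filter_le_blockMax hNC ha).eraseFromBlocks a
  rwa [erase_insert fun h => (ha a (mem_filter.1 h).1).false] at this

theorem IsPartitionOf.rightPart (hP : IsPartitionOf (insert a s) P) (hNC : Noncrossing P)
    (ha : ∀ x ∈ s, a < x) :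
    IsPartitionOf (s.filter (blockMax P a < ·)) (rightPart (blockMax P a) P) := by
  have := hP.filter (blockMax P a < ·) fun B hB =>
    (hNC.forall_le_or_forall_gt_blockMax hP ha hB).symm.imp_right fun h x hx => (h x hx).not_gt
  rwa [filter_insert, if_neg (le_blockMax (hP.mem_blockOf (mem_insert_self a s))).not_gt] at this

theorem blockOf_nestedPart (hP : IsPartitionOf (insert a s) P) (hNC : Noncrossing P)
    (ha : ∀ x ∈ s, a < x) :
    blockOf (nestedPart a (blockMax P a) P) (blockMax P a) = (blockOf P a).erase a := by
  have hMB₀ := hP.blockMax_mem (mem_insert_self a s)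
  by_cases hMa : blockMax P a = a
  · have hB₀ : (blockOf P a).erase a = ∅ := by
      refine eq_empty_of_forall_notMem fun x hx => (mem_erase.1 hx).1 (le_antisymm ?_ ?_)
      · exact hMa ▸ le_blockMax (mem_of_mem_erase hx)
      · exact le_of_mem_insert_of_forall_lt ha (hP.subset _
          (hP.blockOf_mem (mem_insert_self a s)) (mem_of_mem_erase hx))
    rw [hB₀, hMa]
    refine blockOf_eq_empty fun B hB haB => ?_
    obtain ⟨-, C, -, rfl⟩ := mem_eraseFromBlocks.1 hB
    exact notMem_erase a C haB
  · have hM : blockMax P a ∈ (blockOf P a).erase a := mem_erase.2 ⟨hMa, hMB₀⟩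
    refine (hP.nestedPart hNC ha).blockOf_eq (mem_eraseFromBlocks.2 ⟨⟨_, hM⟩, _, ?_, rfl⟩) hM
    exact mem_filter.2 ⟨hP.blockOf_mem (mem_insert_self a s), fun x hx => le_blockMax hx⟩

theorem join_nestedPart_rightPart (hP : IsPartitionOf (insert a s) P) (hNC : Noncrossing P)
    (ha : ∀ x ∈ s, a < x) :
    join a (blockMax P a) (nestedPart a (blockMax P a) P) (rightPart (blockMax P a) P) = P := by
  have hL := hP.filter_le_blockMax hNC ha
  have haL := hL.blockOf_eq (mem_filter.2 ⟨hP.blockOf_mem (mem_insert_self a s),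
    fun x hx => le_blockMax hx⟩) (hP.mem_blockOf (mem_insert_self a s))
  rw [join, blockOf_nestedPart hP hNC ha, nestedPart, ← haL,
    insertIntoBlock_eraseFromBlocks hL (mem_insert_self _ _), rightPart, filter_union_right]
  refine filter_true_of_mem fun B hB => ?_
  exact hNC.forall_le_or_forall_gt_blockMax hP ha hB

theorem IsPartitionOf.mem_blockOf_of_mem (ha : ∀ x ∈ s, a < x) (hM : M ∈ insert a s)
    (hQ : IsPartitionOf (s.filter (· ≤ M)) Q) (hB : B ∈ Q) : M ∈ blockOf Q M := by
  obtain ⟨y, hy⟩ := hQ.nonempty B hB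
  obtain ⟨hys, hyM⟩ := mem_filter.1 (hQ.subset B hB hy)
  have hMs : M ∈ s := (mem_insert.1 hM).resolve_left fun h => (h ▸ ha y hys).not_ge hyM
  exact hQ.mem_blockOf (mem_filter.2 ⟨hMs, le_rfl⟩)

theorem IsPartitionOf.exists_gt_of_ne_blockOf (ha : ∀ x ∈ s, a < x) (hM : M ∈ insert a s)
    (hQ : IsPartitionOf (s.filter (· ≤ M)) Q) (hB : B ∈ Q) (hBC : B ≠ blockOf Q M) :
    ∃ m ∈ blockOf Q M, ∀ x ∈ B, x < m := by
  have hMC := hQ.mem_blockOf_of_mem ha hM hB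
  refine ⟨M, hMC, fun x hx => lt_of_le_of_ne (mem_filter.1 (hQ.subset B hB hx)).2 ?_⟩
  rintro rfl
  exact hBC (hQ.eq_of_mem hB (hQ.blockOf_mem (hQ.subset B hB hx)) hx hMC)

theorem isPartitionOf_insertIntoBlock_blockOf (ha : ∀ x ∈ s, a < x)
    (hQ : IsPartitionOf (s.filter (· ≤ M)) Q) :
    IsPartitionOf (insert a (s.filter (· ≤ M))) (insertIntoBlock a (blockOf Q M) Q) :=
  hQ.insertIntoBlock (fun h => (ha a (mem_filter.1 h).1).false) (hQ.blockOf_eq_empty_or_mem M)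

theorem le_of_mem_insertIntoBlock_blockOf (ha : ∀ x ∈ s, a < x) (hM : M ∈ insert a s)
    (hQ : IsPartitionOf (s.filter (· ≤ M)) Q) (hB : B ∈ insertIntoBlock a (blockOf Q M) Q)
    {x : α} (hx : x ∈ B) : x ≤ M := by
  rcases mem_insert.1 ((isPartitionOf_insertIntoBlock_blockOf ha hQ).subset B hB hx) with rfl | hx
  exacts [le_of_mem_insert_of_forall_lt ha hM, (mem_filter.1 hx).2]

theorem IsPartitionOf.join (ha : ∀ x ∈ s, a < x) (hQ : IsPartitionOf (s.filter (· ≤ M)) Q)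
    (hR : IsPartitionOf (s.filter (M < ·)) R) : IsPartitionOf (insert a s) (join a M Q R) := by
  have := (isPartitionOf_insertIntoBlock_blockOf ha hQ).union hR <| disjoint_left.2
    fun x hxL hxR => by
      rcases mem_insert.1 hxL with rfl | hxL
      exacts [(ha x (mem_filter.1 hxR).1).false, (mem_filter.1 hxL).2.not_gt (mem_filter.1 hxR).2]
  have hs : s.filter (· ≤ M) ∪ s.filter (M < ·) = s := by
    ext x
    simp only [mem_union, mem_filter, ← and_or_left, and_iff_left_iff_imp]
    exact fun _ => le_or_gt x M
  rwa [insert_union, hs] at this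

theorem Noncrossing.join (ha : ∀ x ∈ s, a < x) (hM : M ∈ insert a s)
    (hQ : IsPartitionOf (s.filter (· ≤ M)) Q) (hQNC : Noncrossing Q)
    (hR : IsPartitionOf (s.filter (M < ·)) R) (hRNC : Noncrossing R) :
    Noncrossing (join a M Q R) := by
  refine (hQNC.insertIntoBlock (hQ.blockOf_eq_empty_or_mem M) ?_ ?_).union_of_lt hRNC ?_
  · exact fun B hB x hx => ha x (mem_filter.1 (hQ.subset B hB hx)).1
  · exact fun B hB hBC => hQ.exists_gt_of_ne_blockOf ha hM hB hBC
  · exact fun U hU V hV x hx y hy => (le_of_mem_insertIntoBlock_blockOf ha hM hQ hU hx).trans_lt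
      (mem_filter.1 (hR.subset V hV hy)).2

theorem blockOf_join (ha : ∀ x ∈ s, a < x) (hQ : IsPartitionOf (s.filter (· ≤ M)) Q)
    (hR : IsPartitionOf (s.filter (M < ·)) R) :
    blockOf (join a M Q R) a = insert a (blockOf Q M) :=
  (hQ.join ha hR).blockOf_eq (mem_union_left _ (mem_insert_self _ _)) (mem_insert_self _ _)

theorem blockMax_join (ha : ∀ x ∈ s, a < x) (hM : M ∈ insert a s)
    (hQ : IsPartitionOf (s.filter (· ≤ M)) Q) (hR : IsPartitionOf (s.filter (M < ·)) R) :
    blockMax (join a M Q R) a = M := by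
  have hB₀ := blockOf_join ha hQ hR
  refine le_antisymm (max'_le _ _ _ fun x hx => ?_) (le_max' _ _ ?_)
  · rw [hB₀, insert_idem] at hx
    exact le_of_mem_insertIntoBlock_blockOf ha hM hQ (mem_insert_self _ _) hx
  · rw [hB₀, insert_idem]
    rcases mem_insert.1 hM with rfl | hMs
    exacts [mem_insert_self _ _, mem_insert_of_mem (hQ.mem_blockOf (mem_filter.2 ⟨hMs, le_rfl⟩))]

theorem nestedPart_join (ha : ∀ x ∈ s, a < x) (hM : M ∈ insert a s)
    (hQ : IsPartitionOf (s.filter (· ≤ M)) Q) (hR : IsPartitionOf (s.filter (M < ·)) R) :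
    nestedPart a M (join a M Q R) = Q := by
  rw [nestedPart, join, filter_union,
    filter_true_of_mem fun B hB x hx => le_of_mem_insertIntoBlock_blockOf ha hM hQ hB hx,
    filter_false_of_mem fun B hB h => ?_, union_empty]
  · exact eraseFromBlocks_insertIntoBlock hQ (fun h => (ha a (mem_filter.1 h).1).false)
      (hQ.blockOf_eq_empty_or_mem M)
  · obtain ⟨y, hy⟩ := hR.nonempty B hB
    exact (h y hy).not_gt (mem_filter.1 (hR.subset B hB hy)).2

theorem rightPart_join (ha : ∀ x ∈ s, a < x) (hM : M ∈ insert a s)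
    (hQ : IsPartitionOf (s.filter (· ≤ M)) Q) (hR : IsPartitionOf (s.filter (M < ·)) R) :
    rightPart M (join a M Q R) = R := by
  rw [rightPart, join, filter_union, filter_false_of_mem fun B hB h => ?_,
    filter_true_of_mem fun B hB x hx => (mem_filter.1 (hR.subset B hB hx)).2, empty_union]
  obtain ⟨y, hy⟩ := (isPartitionOf_insertIntoBlock_blockOf ha hQ).nonempty B hB
  exact (h y hy).not_ge (le_of_mem_insertIntoBlock_blockOf ha hM hQ hB hy)

theorem outerBlocks_join (ha : ∀ x ∈ s, a < x) (hM : M ∈ insert a s)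
    (hQ : IsPartitionOf (s.filter (· ≤ M)) Q) (hR : IsPartitionOf (s.filter (M < ·)) R) :
    outerBlocks (join a M Q R) = insert (insert a (blockOf Q M)) (outerBlocks R) := by
  have hRV : ∀ {V}, V ∈ R → (IsOuterBlock (join a M Q R) V ↔ IsOuterBlock R V) := fun hV =>
    isOuterBlock_union_iff (hR.nonempty _ hV) fun U hU x hx y hy =>
      (le_of_mem_insertIntoBlock_blockOf ha hM hQ hU hx).trans_lt
        (mem_filter.1 (hR.subset _ hV hy)).2
  ext V
  simp only [outerBlocks, mem_filter, mem_insert]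
  constructor
  · rintro ⟨hV, hout⟩
    rcases mem_union.1 hV with hV | hV
    · rcases mem_insertIntoBlock.1 hV with rfl | ⟨hVC, hVQ⟩
      · exact .inl rfl
      obtain ⟨m, hm, hVm⟩ := hQ.exists_gt_of_ne_blockOf ha hM hVQ hVC
      have hVs : ∀ x ∈ V, x ∈ s := fun x hx => (mem_filter.1 (hQ.subset V hVQ hx)).1
      refine (hout ⟨_, mem_union_left _ (mem_insert_self _ _), fun h => ?_, a, mem_insert_self _ _,
        m, mem_insert_of_mem hm, fun x hx => ⟨ha x (hVs x hx), hVm x hx⟩⟩).elim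
      exact (ha a (hVs a (h ▸ mem_insert_self _ _))).false
    · exact .inr ⟨hV, (hRV hV).1 hout⟩
  · rintro (rfl | ⟨hV, hout⟩)
    · refine ⟨mem_union_left _ (mem_insert_self _ _), isOuterBlock_of_forall_le
        (mem_insert_self a _) fun U hU x hx => ?_⟩
      exact le_of_mem_insert_of_forall_lt ha ((hQ.join ha hR).subset U hU hx)
    · exact ⟨mem_union_right _ hV, (hRV hV).2 hout⟩

theorem card_outerBlocks_join (ha : ∀ x ∈ s, a < x) (hM : M ∈ insert a s)
    (hQ : IsPartitionOf (s.filter (· ≤ M)) Q) (hR : IsPartitionOf (s.filter (M < ·)) R) :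
    #(outerBlocks (join a M Q R)) = #(outerBlocks R) + 1 := by
  rw [outerBlocks_join ha hM hQ hR, card_insert_of_notMem fun h => ?_]
  have := hR.subset _ (mem_filter.1 h).1 (mem_insert_self a _)
  exact (ha a (mem_filter.1 this).1).false

end Decomposition

section Counting

variable [LinearOrder α] {s : Finset α} {a : α}

theorem sum_ncPartitions_filter_blockMax (ha : ∀ x ∈ s, a < x) {M : α} (hM : M ∈ insert a s)
    (t : ℕ) :
    ∑ P ∈ (ncPartitions (insert a s)).filter (blockMax · a = M), t ^ #(outerBlocks P) =
      #(ncPartitions (s.filter (· ≤ M))) *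
        (t * ∑ R ∈ ncPartitions (s.filter (M < ·)), t ^ #(outerBlocks R)) := by
  have hprod : #(ncPartitions (s.filter (· ≤ M))) *
      (t * ∑ R ∈ ncPartitions (s.filter (M < ·)), t ^ #(outerBlocks R)) =
      ∑ q ∈ ncPartitions (s.filter (· ≤ M)) ×ˢ ncPartitions (s.filter (M < ·)),
        t ^ (#(outerBlocks q.2) + 1) := by
    simp only [sum_product, sum_const, smul_eq_mul, mul_sum, pow_succ']
  rw [hprod]
  symm
  refine sum_nbij' (fun q => join a M q.1 q.2) (fun P => (nestedPart a M P, rightPart M P))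
    ?_ ?_ ?_ ?_ ?_
  · rintro ⟨Q, R⟩ hq
    obtain ⟨⟨hQ, hQNC⟩, ⟨hR, hRNC⟩⟩ := by simpa only [mem_product, mem_ncPartitions] using hq
    exact mem_filter.2 ⟨mem_ncPartitions.2 ⟨hQ.join ha hR, hQNC.join ha hM hQ hR hRNC⟩,
      blockMax_join ha hM hQ hR⟩
  · intro P hPM
    obtain ⟨⟨hP, hNC⟩, rfl⟩ := by simpa only [mem_filter, mem_ncPartitions] using hPM
    simp only [mem_product, mem_ncPartitions]
    exact ⟨⟨hP.nestedPart hNC ha, (hNC.mono (filter_subset _ _)).eraseFromBlocks a⟩,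
      ⟨hP.rightPart hNC ha, hNC.mono (filter_subset _ _)⟩⟩
  · rintro ⟨Q, R⟩ hq
    obtain ⟨⟨hQ, -⟩, ⟨hR, -⟩⟩ := by simpa only [mem_product, mem_ncPartitions] using hq
    exact Prod.ext (nestedPart_join ha hM hQ hR) (rightPart_join ha hM hQ hR)
  · intro P hPM
    obtain ⟨⟨hP, hNC⟩, rfl⟩ := by simpa only [mem_filter, mem_ncPartitions] using hPM
    exact join_nestedPart_rightPart hP hNC ha
  · rintro ⟨Q, R⟩ hq
    obtain ⟨⟨hQ, -⟩, ⟨hR, -⟩⟩ := by simpa only [mem_product, mem_ncPartitions] using hq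
    rw [card_outerBlocks_join ha hM hQ hR]

theorem sum_ncPartitions_insert (ha : ∀ x ∈ s, a < x) (t : ℕ) :
    ∑ P ∈ ncPartitions (insert a s), t ^ #(outerBlocks P) =
      ∑ M ∈ insert a s, #(ncPartitions (s.filter (· ≤ M))) *
        (t * ∑ R ∈ ncPartitions (s.filter (M < ·)), t ^ #(outerBlocks R)) := by
  rw [← sum_fiberwise_of_maps_to (g := (blockMax · a)) fun P hP => ?_]
  · exact sum_congr rfl fun M hM => sum_ncPartitions_filter_blockMax ha hM t
  obtain ⟨hP, -⟩ := mem_ncPartitions.1 hP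
  exact hP.subset _ (hP.blockOf_mem (mem_insert_self a s)) (hP.blockMax_mem (mem_insert_self a s))

theorem sum_insert_eq_sum_antidiagonal {β : Type*} [AddCommMonoid β] (ha : ∀ x ∈ s, a < x)
    (f : ℕ → ℕ → β) :
    ∑ M ∈ insert a s, f #(s.filter (· ≤ M)) #(s.filter (M < ·)) =
      ∑ ij ∈ antidiagonal #s, f ij.1 ij.2 := by
  set g : α → ℕ × ℕ := fun M => (#(s.filter (· ≤ M)), #(s.filter (M < ·)))
  have hmono : StrictMonoOn (fun M => #(s.filter (· ≤ M))) (insert a s : Finset α) := by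
    intro M hM M' hM' hMM'
    have hM's : M' ∈ s := (mem_insert.1 (mem_coe.1 hM')).resolve_left fun h =>
      (h ▸ hMM').not_ge (le_of_mem_insert_of_forall_lt ha (mem_coe.1 hM))
    refine card_lt_card ((ssubset_iff_of_subset fun x hx => ?_).2 ?_)
    · exact mem_filter.2 ⟨(mem_filter.1 hx).1, (mem_filter.1 hx).2.trans hMM'.le⟩
    · exact ⟨M', mem_filter.2 ⟨hM's, le_rfl⟩, fun h => (mem_filter.1 h).2.not_gt hMM'⟩
  have hinj : Set.InjOn g (insert a s : Finset α) := fun M hM M' hM' h =>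
    hmono.injOn hM hM' (congrArg Prod.fst h)
  have himage : (insert a s).image g = antidiagonal #s := by
    refine eq_of_subset_of_card_le (fun ij hij => ?_) ?_
    · obtain ⟨M, -, rfl⟩ := mem_image.1 hij
      rw [HasAntidiagonal.mem_antidiagonal]
      simpa only [not_le] using card_filter_add_card_filter_not (s := s) (· ≤ M)
    · rw [card_image_of_injOn hinj, Nat.card_antidiagonal,
        card_insert_of_notMem fun h => (ha a h).false]
  rw [← himage, sum_image hinj]

theorem sum_ncPartitions_insert_eq_sum_antidiagonal (ha : ∀ x ∈ s, a < x) (t : ℕ)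
    {c w : ℕ → ℕ} (hc : ∀ u ⊂ insert a s, #(ncPartitions u) = c #u)
    (hw : ∀ u ⊂ insert a s, ∑ P ∈ ncPartitions u, t ^ #(outerBlocks P) = w #u) :
    ∑ P ∈ ncPartitions (insert a s), t ^ #(outerBlocks P) =
      ∑ ij ∈ antidiagonal #s, c ij.1 * (t * w ij.2) := by
  have hsub : ∀ {p : α → Prop} [DecidablePred p], s.filter p ⊂ insert a s := fun {_ _} =>
    (filter_subset _ s).trans_ssubset (ssubset_insert fun h => (ha a h).false)
  rw [sum_ncPartitions_insert ha, ← sum_insert_eq_sum_antidiagonal ha fun i j => c i * (t * w j)]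
  exact sum_congr rfl fun M _ => by rw [hc _ hsub, hw _ hsub]

theorem ncPartitions_empty : ncPartitions (∅ : Finset α) = {∅} := by
  ext P
  rw [mem_ncPartitions, mem_singleton]
  constructor
  · rintro ⟨hP, -⟩
    refine eq_empty_of_forall_notMem fun B hB => ?_
    obtain ⟨x, hx⟩ := hP.nonempty B hB
    exact notMem_empty x (hP.subset B hB hx)
  · rintro rfl
    exact ⟨⟨by simp, by simp, by simp, by simp⟩, by simp [Noncrossing]⟩

theorem induction_on_insert_min {p : Finset α → Prop} (s : Finset α) (empty : p ∅)
    (insert : ∀ a s, (∀ x ∈ s, a < x) → (∀ u ⊂ insert a s, p u) → p (insert a s)) : p s := by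
  induction s using Finset.strongInduction with
  | H s ih =>
    rcases s.eq_empty_or_nonempty with rfl | hs
    · exact empty
    rw [← insert_erase (min'_mem s hs)] at ih ⊢
    exact insert _ _ (fun x hx => min'_lt_of_mem_erase_min' s hs hx) ih

theorem card_ncPartitions (s : Finset α) : #(ncPartitions s) = catalan #s := by
  induction s using induction_on_insert_min with
  | empty => simp [ncPartitions_empty]
  | insert a s ha ih =>
    have key := sum_ncPartitions_insert_eq_sum_antidiagonal ha 1 ih
      fun u hu => by simpa using ih u hu
    simp only [one_pow, sum_const, smul_eq_mul, mul_one, one_mul] at key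
    rw [key, card_insert_of_notMem fun h => (ha a h).false, catalan_succ']

theorem sum_antidiagonal_catalan_mul_centralBinom (n : ℕ) :
    ∑ ij ∈ antidiagonal n, catalan ij.1 * (2 * Nat.centralBinom ij.2) =
      Nat.centralBinom (n + 1) := by
  have hswap : ∑ ij ∈ antidiagonal n, (ij.2 + 1) * (catalan ij.1 * catalan ij.2) =
      ∑ ij ∈ antidiagonal n, (ij.1 + 1) * (catalan ij.1 * catalan ij.2) := by
    rw [← Nat.sum_antidiagonal_swap]
    exact sum_congr rfl fun ij _ => by simp only [Prod.fst_swap, Prod.snd_swap]; ring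
  calc ∑ ij ∈ antidiagonal n, catalan ij.1 * (2 * Nat.centralBinom ij.2)
      = ∑ ij ∈ antidiagonal n, (ij.2 + 1) * (catalan ij.1 * catalan ij.2) +
          ∑ ij ∈ antidiagonal n, (ij.2 + 1) * (catalan ij.1 * catalan ij.2) := by
        rw [← sum_add_distrib]
        exact sum_congr rfl fun ij _ => by rw [← succ_mul_catalan_eq_centralBinom]; ring
    _ = ∑ ij ∈ antidiagonal n, ((ij.1 + 1) + (ij.2 + 1)) * (catalan ij.1 * catalan ij.2) := by
        nth_rewrite 1 [hswap]
        rw [← sum_add_distrib]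
        exact sum_congr rfl fun ij _ => by ring
    _ = (n + 2) * catalan (n + 1) := by
        rw [catalan_succ', mul_sum]
        refine sum_congr rfl fun ij hij => ?_
        rw [← HasAntidiagonal.mem_antidiagonal.1 hij]
        ring
    _ = Nat.centralBinom (n + 1) := succ_mul_catalan_eq_centralBinom _

theorem sum_two_pow_card_outerBlocks (s : Finset α) :
    ∑ P ∈ ncPartitions s, 2 ^ #(outerBlocks P) = Nat.centralBinom #s := by
  induction s using induction_on_insert_min with
  | empty => simp [ncPartitions_empty, outerBlocks]
  | insert a s ha ih =>
    rw [sum_ncPartitions_insert_eq_sum_antidiagonal ha 2 (fun u _ => card_ncPartitions u) ih,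
      card_insert_of_notMem fun h => (ha a h).false, sum_antidiagonal_catalan_mul_centralBinom]

end Counting

theorem card_filter_mem_and_subset {X Y : Type*} [Fintype X] [DecidableEq X] [Fintype Y]
    [DecidableEq Y] (T : Finset X) (f : X → Finset Y) :
    #((univ : Finset (X × Finset Y)).filter fun p => p.1 ∈ T ∧ p.2 ⊆ f p.1) =
      ∑ x ∈ T, 2 ^ #(f x) := by
  simp_rw [← card_powerset, ← card_sigma]
  refine card_nbij' (fun p => ⟨p.1, p.2⟩) (fun q => (q.1, q.2)) ?_ ?_ ?_ ?_ <;>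
    intro p hp <;> simp_all

theorem isPartition_iff_isPartitionOf_univ {n : ℕ} {P : Finset (Finset (Fin n))} :
    IsPartition P ↔ IsPartitionOf univ P := by
  refine ⟨fun ⟨hne, huniq⟩ => ⟨hne, fun B _ => subset_univ B, fun x _ => ?_, ?_⟩, fun hP => ?_⟩
  · obtain ⟨B, hB, -⟩ := huniq x
    exact ⟨B, hB⟩
  · exact fun {B C x} hB hC hxB hxC => (huniq x).unique ⟨hB, hxB⟩ ⟨hC, hxC⟩
  · refine ⟨hP.nonempty, fun x => ?_⟩
    obtain ⟨B, hB, hxB⟩ := hP.exists_mem x (mem_univ x)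
    exact ⟨B, ⟨hB, hxB⟩, fun C ⟨hC, hxC⟩ => hP.eq_of_mem hC hB hxC hxB⟩

end NoncrossingPartition

open NoncrossingPartition in
theorem stmt19_general (n : ℕ) :
    ((Finset.univ :
        Finset (Finset (Finset (Fin n)) × Finset (Finset (Fin n)))).filter
      (fun p => IsPartition p.1 ∧ IsNoncrossing p.1 ∧ p.2 ⊆ p.1 ∧
        ∀ B ∈ p.2, IsOuter p.1 B)).card
      = Nat.choose (2 * n) n := by
  have hpairs : (univ.filter fun p : Finset (Finset (Fin n)) × Finset (Finset (Fin n)) =>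
      IsPartition p.1 ∧ IsNoncrossing p.1 ∧ p.2 ⊆ p.1 ∧ ∀ B ∈ p.2, IsOuter p.1 B) =
      univ.filter fun p => p.1 ∈ ncPartitions univ ∧ p.2 ⊆ outerBlocks p.1 := by
    refine filter_congr fun p _ => ?_
    rw [mem_ncPartitions, ← isPartition_iff_isPartitionOf_univ, subset_outerBlocks_iff, and_assoc]
    rfl
  rw [hpairs, card_filter_mem_and_subset, sum_two_pow_card_outerBlocks, card_univ,
    Fintype.card_fin, Nat.centralBinom_eq_two_mul_choose]

/-- The number of incomplete non-crossing partitions of `{1,…,n}` — pairs `(π, S)`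
with `π` a non-crossing partition and `S` a set of outer blocks of `π` — equals the
central binomial coefficient `C(2n, n)`. -/
theorem stmt19 (n : ℕ) (hn : 1 ≤ n) :
    ((Finset.univ :
        Finset (Finset (Finset (Fin n)) × Finset (Finset (Fin n)))).filter
      (fun p => IsPartition p.1 ∧ IsNoncrossing p.1 ∧ p.2 ⊆ p.1 ∧
        ∀ B ∈ p.2, IsOuter p.1 B)).card
      = Nat.choose (2 * n) n :=
  stmt19_general n
end
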